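/- arXiv:1908.02862 — 9 statements merged into one kernel-verified Lean document; each statement's English description precedes it below -/
import Mathlib

section
/- Let g : ℝ → ℝ be integrable with g(t) = 0 for t < 0, g(t) ≥ 0 for t ≥ 0, and ∫₀^∞ g(t) dt = k with 0 < k < 1. Then the series h = Σ_{n=1}^∞ g^{⊗n} (where g^{⊗n} denotes the n-fold convolution of g with itself, g^{⊗1} = g) converges in L¹(ℝ), the limit h vanishes on (−∞,0), satisfies ‖h‖₁ ≤ k/(1−k), and is a solution of the Volterra equation h(t) = g(t) + ∫₀ᵗ h(τ) g(t−τ) dτ for almost every t ≥ 0. -/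
open MeasureTheory

/-- Causal convolution: `(u * v)(t) = ∫₀ᵗ u(τ) v(t-τ) dτ` for `t ≥ 0`, `0` for `t < 0`. -/
noncomputable def cconv (u v : ℝ → ℝ) : ℝ → ℝ :=
  fun t => if t < 0 then 0 else ∫ τ in (0:ℝ)..t, u τ * v (t - τ)

/-- `convIter u n = u^{⊗(n+1)}`, the `(n+1)`-fold causal convolution of `u` with itself. -/
noncomputable def convIter (u : ℝ → ℝ) : ℕ → ℝ → ℝ
  | 0 => u
  | n + 1 => cconv (convIter u n) u

open Convolution Filter ENNReal in
private lemma cconv_eq_convolution (u g : ℝ → ℝ)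
    (hu_neg : ∀ t < (0:ℝ), u t = 0) (hg_neg : ∀ t < (0:ℝ), g t = 0) :
    ∀ t, cconv u g t = (u ⋆[ContinuousLinearMap.lsmul ℝ ℝ] g) t := by
  intro t
  have hzero : ∀ τ, τ < 0 ∨ t < τ → u τ * g (t - τ) = 0 := by
    intro τ hτ
    rcases hτ with hτ | hτ
    · rw [hu_neg τ hτ, zero_mul]
    · rw [hg_neg (t - τ) (by linarith), mul_zero]
  simp only [convolution, ContinuousLinearMap.lsmul_apply, smul_eq_mul]
  by_cases ht : t < 0
  · simp only [cconv, if_pos ht]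
    symm
    refine integral_eq_zero_of_ae (Filter.Eventually.of_forall fun τ => ?_)
    rcases lt_or_ge τ 0 with h | h
    · exact hzero τ (Or.inl h)
    · exact hzero τ (Or.inr (by linarith))
  · push_neg at ht
    simp only [cconv, if_neg (not_lt.mpr ht)]
    rw [intervalIntegral.integral_of_le ht, ← integral_Icc_eq_integral_Ioc]
    rw [setIntegral_eq_integral_of_forall_compl_eq_zero]
    intro τ hτ
    simp only [Set.mem_Icc, not_and_or, not_le] at hτ
    exact hzero τ hτ

open Convolution Filter ENNReal in
private lemma convIter_props (g : ℝ → ℝ) (k : ℝ) (hg_int : Integrable g)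
    (hg_neg : ∀ t < (0:ℝ), g t = 0) (hg0 : ∀ t, 0 ≤ g t)
    (hgk : (∫ t : ℝ, g t) = k) :
    ∀ n, Integrable (convIter g n) ∧ (∀ t < (0:ℝ), convIter g n t = 0) ∧
      (∀ t, 0 ≤ convIter g n t) ∧ (∫ t : ℝ, convIter g n t) = k ^ (n + 1) := by
  intro n
  induction n with
  | zero => exact ⟨hg_int, hg_neg, hg0, by simpa [convIter] using hgk⟩
  | succ n ih =>
    obtain ⟨hi, hn, hpos, hI⟩ := ih
    have E := cconv_eq_convolution (convIter g n) g hn hg_neg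
    have hiconv : Integrable ((convIter g n) ⋆[ContinuousLinearMap.lsmul ℝ ℝ] g) :=
      hi.integrable_convolution _ hg_int
    have hceq : convIter g (n + 1) = cconv (convIter g n) g := rfl
    have hint : Integrable (convIter g (n + 1)) := by
      rw [hceq]
      exact hiconv.congr (Filter.Eventually.of_forall fun t => (E t).symm)
    refine ⟨hint, ?_, ?_, ?_⟩
    · intro t ht
      rw [hceq]
      simp [cconv, if_pos ht]
    · intro t
      rw [hceq]
      by_cases ht : t < 0
      · simp [cconv, if_pos ht]
      · push_neg at ht
        simp only [cconv, if_neg (not_lt.mpr ht)]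
        exact intervalIntegral.integral_nonneg ht fun τ _ =>
          mul_nonneg (hpos τ) (hg0 _)
    · have : (∫ t : ℝ, convIter g (n + 1) t) =
          ∫ t : ℝ, ((convIter g n) ⋆[ContinuousLinearMap.lsmul ℝ ℝ] g) t := by
        rw [hceq]
        exact integral_congr_ae (Filter.Eventually.of_forall fun t => E t)
      rw [this, integral_convolution (L := ContinuousLinearMap.lsmul ℝ ℝ) hi hg_int,
        ContinuousLinearMap.lsmul_apply,
        smul_eq_mul, hI, hgk]
      ring

set_option maxHeartbeats 1000000 in
/-- for integrable `g ≥ 0` supported on `[0,∞)` with `∫₀^∞ g = k ∈ (0,1)`,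
the series `h = Σ_{n≥1} g^{⊗n}` converges in `L¹`, the limit vanishes on `(-∞,0)`,
has `‖h‖₁ ≤ k/(1-k)` and solves the Volterra equation `h = g + h * g` a.e. on `[0,∞)`. -/
theorem fundamental_solution_exists (g : ℝ → ℝ) (k : ℝ)
    (hg_int : Integrable g)
    (hg_neg : ∀ t < (0:ℝ), g t = 0)
    (hg_nonneg : ∀ t ≥ (0:ℝ), 0 ≤ g t)
    (hk : (∫ t in Set.Ioi (0:ℝ), g t) = k)
    (hk0 : 0 < k) (hk1 : k < 1) :
    ∃ h : ℝ → ℝ,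
      Integrable h ∧
      (∀ t < (0:ℝ), h t = 0) ∧
      Filter.Tendsto
        (fun N => ∫ t : ℝ, |(∑ n ∈ Finset.range N, convIter g n t) - h t|)
        Filter.atTop (nhds 0) ∧
      (∫ t in Set.Ioi (0:ℝ), |h t|) ≤ k / (1 - k) ∧
      (∀ᵐ t : ℝ, 0 ≤ t → h t = g t + ∫ τ in (0:ℝ)..t, h τ * g (t - τ)) := by
  have hg0 : ∀ t, 0 ≤ g t := fun t => by
    rcases lt_or_ge t 0 with h | h
    · rw [hg_neg t h]
    · exact hg_nonneg t h
  -- the full integral of g is k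
  have hgk : (∫ t : ℝ, g t) = k := by
    have hsplit := integral_add_compl (measurableSet_Ioi (a := (0:ℝ))) hg_int
    have hcompl : (∫ t in (Set.Ioi (0:ℝ))ᶜ, g t) = 0 := by
      refine integral_eq_zero_of_ae ?_
      have h1 : ∀ᵐ t : ℝ, t ≠ 0 := by
        rw [ae_iff]
        have : {t : ℝ | ¬ t ≠ 0} = {0} := by ext t; simp
        rw [this]
        exact Real.volume_singleton
      filter_upwards [ae_restrict_of_ae h1,
        ae_restrict_mem (measurableSet_Ioi (a := (0:ℝ))).compl] with t ht1 ht2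
      simp only [Set.compl_setOf, Set.mem_setOf_eq, Set.mem_compl_iff, Set.mem_Ioi,
        not_lt] at ht2
      exact hg_neg t (lt_of_le_of_ne ht2 ht1)
    rw [← hsplit, hcompl, add_zero, hk]
  have props := convIter_props g k hg_int hg_neg hg0 hgk
  have hInt : ∀ n, Integrable (convIter g n) := fun n => (props n).1
  have hNeg : ∀ n, ∀ t < (0:ℝ), convIter g n t = 0 := fun n => (props n).2.1
  have hPos : ∀ n t, 0 ≤ convIter g n t := fun n => (props n).2.2.1
  have hI : ∀ n, (∫ t : ℝ, convIter g n t) = k ^ (n + 1) := fun n => (props n).2.2.2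
  set H : ℝ → ENNReal := fun t => ∑' n, ENNReal.ofReal (convIter g n t) with hHdef
  have hAEm : ∀ n, AEMeasurable (fun t => ENNReal.ofReal (convIter g n t)) :=
    fun n => (hInt n).aemeasurable.ennreal_ofReal
  have hHm : AEMeasurable H := AEMeasurable.ennreal_tsum hAEm
  have hk1' : (0:ℝ) < 1 - k := by linarith
  have hsum : Summable (fun n : ℕ => k ^ (n + 1)) := by
    have := (summable_geometric_of_lt_one hk0.le hk1).mul_left k
    simpa [pow_succ, mul_comm] using this
  have hC : HasSum (fun n : ℕ => k ^ (n + 1)) (k / (1 - k)) := by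
    have := (hasSum_geometric_of_lt_one hk0.le hk1).mul_left k
    have h2 : k * (1 - k)⁻¹ = k / (1 - k) := (div_eq_mul_inv k (1 - k)).symm
    rw [h2] at this
    refine this.congr_fun fun n => by rw [pow_succ, mul_comm]
  have hCpos : (0:ℝ) ≤ k / (1 - k) := div_nonneg hk0.le hk1'.le
  have hHint : (∫⁻ t, H t) = ENNReal.ofReal (k / (1 - k)) := by
    rw [hHdef]
    rw [lintegral_tsum hAEm]
    have heach : ∀ n, (∫⁻ t, ENNReal.ofReal (convIter g n t)) = ENNReal.ofReal (k ^ (n + 1)) :=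
      fun n => by
        rw [← ofReal_integral_eq_lintegral_ofReal (hInt n)
          (Filter.Eventually.of_forall (hPos n)), hI n]
    rw [tsum_congr heach, ← ENNReal.ofReal_tsum_of_nonneg
      (fun n => pow_nonneg hk0.le _) hsum, hC.tsum_eq]
  have hHfin : (∫⁻ t, H t) ≠ ⊤ := by rw [hHint]; exact ENNReal.ofReal_ne_top
  have hfin : ∀ᵐ t : ℝ, H t < ⊤ := ae_lt_top' hHm hHfin
  have hhint : Integrable (fun t => (H t).toReal) :=
    integrable_toReal_of_lintegral_ne_top hHm hHfin
  have hih : (∫ t : ℝ, (H t).toReal) = k / (1 - k) := by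
    rw [integral_toReal hHm hfin, hHint, ENNReal.toReal_ofReal hCpos]
  refine ⟨fun t => (H t).toReal, hhint, ?_, ?_, ?_, ?_⟩
  · -- vanishing on negatives
    intro t ht
    have : H t = 0 := ENNReal.tsum_eq_zero.mpr fun n => by
      rw [hNeg n t ht, ENNReal.ofReal_zero]
    simp [this]
  · -- L¹ convergence of partial sums
    have hSle : ∀ᵐ t : ℝ, ∀ N, (∑ n ∈ Finset.range N, convIter g n t) ≤ (H t).toReal := by
      filter_upwards [hfin] with t ht N
      have h1 : ENNReal.ofReal (∑ n ∈ Finset.range N, convIter g n t) ≤ H t := by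
        rw [ENNReal.ofReal_sum_of_nonneg (fun n _ => hPos n t)]
        exact Summable.sum_le_tsum _ (fun n _ => zero_le) ENNReal.summable
      calc (∑ n ∈ Finset.range N, convIter g n t)
          = (ENNReal.ofReal (∑ n ∈ Finset.range N, convIter g n t)).toReal :=
            (ENNReal.toReal_ofReal (Finset.sum_nonneg fun n _ => hPos n t)).symm
        _ ≤ (H t).toReal := ENNReal.toReal_mono ht.ne h1
    have key : ∀ N, (∫ t : ℝ, |(∑ n ∈ Finset.range N, convIter g n t) - (H t).toReal|)
        = k / (1 - k) - ∑ n ∈ Finset.range N, k ^ (n + 1) := by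
      intro N
      have hS : Integrable (fun t => ∑ n ∈ Finset.range N, convIter g n t) :=
        integrable_finset_sum _ fun n _ => hInt n
      have hcongr : (∫ t : ℝ, |(∑ n ∈ Finset.range N, convIter g n t) - (H t).toReal|)
          = ∫ t : ℝ, ((H t).toReal - ∑ n ∈ Finset.range N, convIter g n t) := by
        refine integral_congr_ae ?_
        filter_upwards [hSle] with t ht
        rw [abs_sub_comm, abs_of_nonneg (sub_nonneg.mpr (ht N))]
      rw [hcongr, integral_sub hhint hS, hih, integral_finset_sum _ fun n _ => hInt n]
      congr 1
      exact Finset.sum_congr rfl fun n _ => hI n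
    have ht0 : Filter.Tendsto (fun N => k / (1 - k) - ∑ n ∈ Finset.range N, k ^ (n + 1))
        Filter.atTop (nhds 0) := by
      have h2 := hC.tendsto_sum_nat.const_sub (k / (1 - k))
      simpa using h2
    exact ht0.congr fun N => (key N).symm
  · -- norm bound
    have h1 : (∫ t in Set.Ioi (0:ℝ), |(H t).toReal|) = ∫ t in Set.Ioi (0:ℝ), (H t).toReal := by
      refine integral_congr_ae (Filter.Eventually.of_forall fun t => ?_)
      exact abs_of_nonneg ENNReal.toReal_nonneg
    rw [h1, ← hih]
    exact setIntegral_le_integral hhint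
      (Filter.Eventually.of_forall fun t => ENNReal.toReal_nonneg)
  · -- Volterra equation
    have hconv : ∀ n, ∀ᵐ t : ℝ,
        IntegrableOn (fun τ => convIter g n τ * g (t - τ)) (Set.Ioc 0 t) := by
      intro n
      have hae := (hInt n).ae_convolution_exists (L := ContinuousLinearMap.lsmul ℝ ℝ) hg_int
      filter_upwards [hae] with t ht
      have h2 : Integrable (fun τ => convIter g n τ * g (t - τ)) := by
        simpa [ConvolutionExistsAt, ContinuousLinearMap.lsmul_apply, smul_eq_mul] using ht
      exact h2.integrableOn
    have hgshift : ∀ t : ℝ, AEMeasurable (fun τ => g (t - τ)) := fun t =>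
      hg_int.aemeasurable.comp_quasiMeasurePreserving
        (quasiMeasurePreserving_sub_left_of_right_invariant volume t)
    filter_upwards [ae_all_iff.mpr hconv, hfin] with t hconvt hfint ht
    have hHt : H t = ENNReal.ofReal (g t)
        + ∫⁻ τ in Set.Ioc 0 t, H τ * ENNReal.ofReal (g (t - τ)) := by
      have step1 : ∀ n, ENNReal.ofReal (convIter g (n + 1) t)
          = ∫⁻ τ in Set.Ioc 0 t,
              ENNReal.ofReal (convIter g n τ) * ENNReal.ofReal (g (t - τ)) := by
        intro n
        have h1 : convIter g (n + 1) t = ∫ τ in Set.Ioc 0 t, convIter g n τ * g (t - τ) := by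
          have hrfl : convIter g (n + 1) t = cconv (convIter g n) g t := rfl
          rw [hrfl, cconv, if_neg (not_lt.mpr ht), intervalIntegral.integral_of_le ht]
        rw [h1, ofReal_integral_eq_lintegral_ofReal (hconvt n)
          (Filter.Eventually.of_forall fun τ => mul_nonneg (hPos n τ) (hg0 _))]
        exact lintegral_congr fun τ => ENNReal.ofReal_mul (hPos n τ)
      calc H t = ∑' n, ENNReal.ofReal (convIter g n t) := by rw [hHdef]
        _ = ENNReal.ofReal (convIter g 0 t)
            + ∑' n, ENNReal.ofReal (convIter g (n + 1) t) :=
            by exact tsum_eq_zero_add' (f := fun m => ENNReal.ofReal (convIter g m t)) ENNReal.summable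
        _ = ENNReal.ofReal (g t)
            + ∫⁻ τ in Set.Ioc 0 t, H τ * ENNReal.ofReal (g (t - τ)) := by
            congr 1
            rw [tsum_congr step1, ← lintegral_tsum
              (f := fun n τ => ENNReal.ofReal (convIter g n τ) * ENNReal.ofReal (g (t - τ)))
              (fun n => ((hAEm n).restrict.mul (hgshift t).ennreal_ofReal.restrict))]
            exact lintegral_congr fun τ => ENNReal.tsum_mul_right
    set I := ∫⁻ τ in Set.Ioc 0 t, H τ * ENNReal.ofReal (g (t - τ)) with hIdef
    have hIfin : I ≠ ⊤ := by
      have hle : I ≤ H t := by rw [hHt]; exact le_add_self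
      exact (hle.trans_lt hfint).ne
    have hIeq : I = ∫⁻ τ in Set.Ioc 0 t, ENNReal.ofReal ((H τ).toReal * g (t - τ)) := by
      refine lintegral_congr_ae ?_
      filter_upwards [ae_restrict_of_ae hfin] with τ hτ
      rw [ENNReal.ofReal_mul ENNReal.toReal_nonneg, ENNReal.ofReal_toReal hτ.ne]
    have hint2 : IntegrableOn (fun τ => (H τ).toReal * g (t - τ)) (Set.Ioc 0 t) := by
      constructor
      · exact ((hHm.ennreal_toReal.restrict).mul (hgshift t).restrict).aestronglyMeasurable
      · rw [hasFiniteIntegral_iff_ofReal (Filter.Eventually.of_forall fun τ =>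
          mul_nonneg ENNReal.toReal_nonneg (hg0 _))]
        rw [← hIeq]
        exact hIfin.lt_top
    have hIval : ENNReal.ofReal (∫ τ in Set.Ioc 0 t, (H τ).toReal * g (t - τ)) = I := by
      rw [ofReal_integral_eq_lintegral_ofReal hint2 (Filter.Eventually.of_forall fun τ =>
        mul_nonneg ENNReal.toReal_nonneg (hg0 _)), hIeq]
    rw [intervalIntegral.integral_of_le ht]
    have hfinal : (H t).toReal = g t + I.toReal := by
      rw [hHt, ENNReal.toReal_add ENNReal.ofReal_ne_top hIfin, ENNReal.toReal_ofReal (hg0 t)]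
    rw [hfinal, ← hIval, ENNReal.toReal_ofReal (setIntegral_nonneg measurableSet_Ioc
      fun τ _ => mul_nonneg ENNReal.toReal_nonneg (hg0 _))]
end

section
/- Let g : ℝ → ℝ be integrable with g(t) = 0 for t < 0 and ‖g‖₁ < 1. If h₁ and h₂ are integrable functions vanishing on (−∞,0) that both satisfy h(t) = g(t) + ∫₀ᵗ h(τ) g(t−τ) dτ for almost every t ≥ 0, then h₁ = h₂ almost everywhere. -/
open MeasureTheory
open scoped ENNReal NNReal

/-- uniqueness of the integrable solution, vanishing on `(-∞,0)`, of the
Volterra equation `h = g + h * g` when `‖g‖₁ < 1`. -/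
theorem volterra_solution_unique (g h₁ h₂ : ℝ → ℝ)
    (hg_int : Integrable g)
    (hg_neg : ∀ t < (0:ℝ), g t = 0)
    (hg_norm : (∫ t in Set.Ioi (0:ℝ), |g t|) < 1)
    (h₁_int : Integrable h₁) (h₁_neg : ∀ t < (0:ℝ), h₁ t = 0)
    (h₂_int : Integrable h₂) (h₂_neg : ∀ t < (0:ℝ), h₂ t = 0)
    (h₁_eq : ∀ᵐ t : ℝ, 0 ≤ t → h₁ t = g t + ∫ τ in (0:ℝ)..t, h₁ τ * g (t - τ))
    (h₂_eq : ∀ᵐ t : ℝ, 0 ≤ t → h₂ t = g t + ∫ τ in (0:ℝ)..t, h₂ τ * g (t - τ)) :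
    h₁ =ᵐ[volume] h₂ := by
  set d : ℝ → ℝ := fun t => h₁ t - h₂ t with hd_def
  have hd_int : Integrable d := h₁_int.sub h₂_int
  have hd_neg : ∀ t < (0:ℝ), d t = 0 := fun t ht => by
    simp [hd_def, h₁_neg t ht, h₂_neg t ht]
  have hne0 : ∀ᵐ τ : ℝ, τ ≠ (0:ℝ) := by
    rw [MeasureTheory.ae_iff]
    have : {τ : ℝ | ¬ τ ≠ 0} = {0} := by ext x; simp
    rw [this]
    simp
  -- integrability of the convolution integrand on the product space
  have prod_int : ∀ u : ℝ → ℝ, Integrable u (volume) →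
      Integrable (fun p : ℝ × ℝ => u p.2 * g (p.1 - p.2)) (volume.prod volume) := by
    intro u hu
    have h1 : Integrable (fun q : ℝ × ℝ => u q.1 * g q.2) (volume.prod volume) :=
      hu.mul_prod hg_int
    have hmp : MeasurePreserving (fun p : ℝ × ℝ => (p.2, p.1 - p.2))
        (volume.prod volume) (volume.prod volume) :=
      measurePreserving_prod_sub_swap volume volume
    exact (hmp.integrable_comp h1.aestronglyMeasurable).mpr h1
  -- extending the interval integral to the whole line
  have key : ∀ᵐ t : ℝ, (‖d t‖₊ : ℝ≥0∞) ≤ ∫⁻ τ, (‖d τ‖₊ : ℝ≥0∞) * ‖g (t - τ)‖₊ := by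
    filter_upwards [h₁_eq, h₂_eq, (prod_int h₁ h₁_int).prod_right_ae,
      (prod_int h₂ h₂_int).prod_right_ae] with t e1 e2 i1 i2
    rcases lt_or_ge t 0 with ht | ht
    · simp [hd_neg t ht]
    · have full : ∀ u : ℝ → ℝ, (∀ s < (0:ℝ), u s = 0) →
          (∫ τ in (0:ℝ)..t, u τ * g (t - τ)) = ∫ τ, u τ * g (t - τ) := by
        intro u hu
        rw [intervalIntegral.integral_of_le ht]
        refine setIntegral_eq_integral_of_ae_compl_eq_zero ?_
        filter_upwards [hne0] with τ hτ hτn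
        rcases lt_or_ge τ 0 with h | h
        · simp [hu τ h]
        · have : t < τ := by
            rcases lt_or_eq_of_le h with h' | h'
            · by_contra hc
              exact hτn ⟨h', not_lt.mp hc⟩
            · exact absurd h'.symm hτ
          simp [hg_neg (t - τ) (by linarith)]
      have hdt : d t = ∫ τ, d τ * g (t - τ) := by
        have : d t = (∫ τ, h₁ τ * g (t - τ)) - ∫ τ, h₂ τ * g (t - τ) := by
          simp only [hd_def]
          rw [e1 ht, e2 ht, full h₁ h₁_neg, full h₂ h₂_neg]
          ring
        rw [this, ← integral_sub i1 i2]
        congr 1 with τ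
        simp [hd_def]; ring
      calc (‖d t‖₊ : ℝ≥0∞) = ‖∫ τ, d τ * g (t - τ)‖₊ := by rw [hdt]
        _ ≤ ∫⁻ τ, ‖d τ * g (t - τ)‖₊ := enorm_integral_le_lintegral_enorm _
        _ = ∫⁻ τ, (‖d τ‖₊ : ℝ≥0∞) * ‖g (t - τ)‖₊ := by
            simp_rw [nnnorm_mul, ENNReal.coe_mul]
  set A := ∫⁻ t, (‖d t‖₊ : ℝ≥0∞) with hA
  set B := ∫⁻ t, (‖g t‖₊ : ℝ≥0∞) with hB
  have hmeas_d : AEMeasurable (fun τ => (‖d τ‖₊ : ℝ≥0∞)) volume :=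
    hd_int.aestronglyMeasurable.enorm
  have hmeas_g : AEMeasurable (fun τ => (‖g τ‖₊ : ℝ≥0∞)) volume :=
    hg_int.aestronglyMeasurable.enorm
  have hBfin : B ≠ ⊤ := hg_int.2.ne
  have hAfin : A ≠ ⊤ := hd_int.2.ne
  have hB1 : B < 1 := by
    have hsplit : (∫⁻ t in Set.Ioi (0:ℝ), (‖g t‖₊ : ℝ≥0∞)) +
        ∫⁻ t in (Set.Ioi (0:ℝ))ᶜ, (‖g t‖₊ : ℝ≥0∞) = B :=
      lintegral_add_compl _ measurableSet_Ioi
    have hzero : (∫⁻ t in (Set.Ioi (0:ℝ))ᶜ, (‖g t‖₊ : ℝ≥0∞)) = 0 := by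
      rw [← lintegral_zero (μ := volume.restrict (Set.Ioi (0:ℝ))ᶜ)]
      refine setLIntegral_congr_fun_ae measurableSet_Ioi.compl ?_
      filter_upwards [hne0] with τ hτ hmem
      have : τ < 0 := lt_of_le_of_ne (by simpa using hmem) hτ
      simp [hg_neg τ this]
    have hpos : (∫⁻ t in Set.Ioi (0:ℝ), (‖g t‖₊ : ℝ≥0∞)) =
        ENNReal.ofReal (∫ t in Set.Ioi (0:ℝ), |g t|) := by
      rw [ofReal_integral_eq_lintegral_ofReal (hg_int.abs.restrict)
        (Filter.Eventually.of_forall fun τ => abs_nonneg _)]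
      simp_rw [← enorm_eq_nnnorm, Real.enorm_eq_ofReal_abs]
    have : B = ENNReal.ofReal (∫ t in Set.Ioi (0:ℝ), |g t|) := by
      rw [← hsplit, hzero, add_zero, hpos]
    rw [this]
    exact ENNReal.ofReal_lt_one.mpr hg_norm
  have hFmeas : AEMeasurable
      (Function.uncurry fun t τ => (‖d τ‖₊ : ℝ≥0∞) * ‖g (t - τ)‖₊)
      (volume.prod volume) := by
    have m1 : AEMeasurable (fun p : ℝ × ℝ => (‖d p.2‖₊ : ℝ≥0∞)) (volume.prod volume) :=
      hmeas_d.comp_quasiMeasurePreserving Measure.quasiMeasurePreserving_snd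
    have m2 : AEMeasurable (fun p : ℝ × ℝ => (‖g (p.1 - p.2)‖₊ : ℝ≥0∞))
        (volume.prod volume) := by
      have h2 : AEMeasurable (fun p : ℝ × ℝ => (‖g p.1‖₊ : ℝ≥0∞)) (volume.prod volume) :=
        hmeas_g.comp_quasiMeasurePreserving Measure.quasiMeasurePreserving_fst
      exact h2.comp_quasiMeasurePreserving
        (measurePreserving_sub_prod volume volume).quasiMeasurePreserving
    exact m1.mul m2
  have hAB : A ≤ A * B := by
    calc A ≤ ∫⁻ t, ∫⁻ τ, (‖d τ‖₊ : ℝ≥0∞) * ‖g (t - τ)‖₊ := lintegral_mono_ae key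
      _ = ∫⁻ τ, ∫⁻ t, (‖d τ‖₊ : ℝ≥0∞) * ‖g (t - τ)‖₊ := lintegral_lintegral_swap hFmeas
      _ = ∫⁻ τ, (‖d τ‖₊ : ℝ≥0∞) * B := by
          refine lintegral_congr fun τ => ?_
          rw [lintegral_const_mul' _ _ ENNReal.coe_ne_top,
            lintegral_sub_right_eq_self (fun t => (‖g t‖₊ : ℝ≥0∞)) τ]
      _ = A * B := lintegral_mul_const' _ _ hBfin
  have hA0 : A = 0 := by
    by_contra hne
    have : A * B < A * 1 := (ENNReal.mul_lt_mul_iff_right hne hAfin).mpr hB1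
    rw [mul_one] at this
    exact absurd (lt_of_le_of_lt hAB this) (lt_irrefl A)
  have := (lintegral_eq_zero_iff' hmeas_d).mp hA0
  filter_upwards [this] with t ht
  have : d t = 0 := by
    have := ht
    simp only [Pi.zero_apply, ENNReal.coe_eq_zero, nnnorm_eq_zero] at this
    exact this
  exact sub_eq_zero.mp this
end

section
/- Let g₁, g₂ : ℝ → ℝ be integrable, vanishing on (−∞,0), with ‖g₁‖₁ < 1 and ‖g₂‖₁ < 1, and let h₁, h₂ be integrable functions vanishing on (−∞,0) satisfying hᵢ(t) = gᵢ(t) + ∫₀ᵗ hᵢ(τ) gᵢ(t−τ) dτ for almost every t ≥ 0 (i = 1,2). Then ‖h₁ − h₂‖₁ ≤ ‖g₁ − g₂‖₁ / ((1 − ‖g₁‖₁)(1 − ‖g₂‖₁)). In particular, if ‖g₁‖₁ ≤ k and ‖g₂‖₁ ≤ k for some k < 1, then ‖h₁ − h₂‖₁ ≤ ‖g₁ − g₂‖₁ / (1−k)². -/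
open MeasureTheory Set
open scoped Convolution

lemma cconv_eq_convolution_s3 (u v : ℝ → ℝ) (hu0 : ∀ t < (0:ℝ), u t = 0)
    (hv0 : ∀ t < (0:ℝ), v t = 0) :
    cconv u v = u ⋆[ContinuousLinearMap.mul ℝ ℝ] v := by
  funext t
  rw [convolution_def]
  simp only [ContinuousLinearMap.mul_apply']
  by_cases ht : t < 0
  · simp only [cconv, if_pos ht]
    have hz : ∀ τ, u τ * v (t - τ) = 0 := fun τ => by
      rcases lt_or_ge τ 0 with h | h
      · rw [hu0 τ h, zero_mul]
      · rw [hv0 (t - τ) (by linarith), mul_zero]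
    simp [hz]
  · push_neg at ht
    simp only [cconv, if_neg (not_lt.2 ht)]
    rw [intervalIntegral.integral_of_le ht, ← integral_Icc_eq_integral_Ioc]
    exact setIntegral_eq_integral_of_forall_compl_eq_zero (fun τ hτ => by
      simp only [mem_Icc, not_and_or, not_le] at hτ
      rcases hτ with h | h
      · rw [hu0 τ h, zero_mul]
      · rw [hv0 (t - τ) (by linarith), mul_zero])

lemma integral_abs_Ioi (u : ℝ → ℝ) (hu0 : ∀ t < (0:ℝ), u t = 0) :
    (∫ t in Set.Ioi (0:ℝ), |u t|) = ∫ t, |u t| := by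
  refine setIntegral_eq_integral_of_ae_compl_eq_zero ?_
  filter_upwards [compl_mem_ae_iff.2 (measure_singleton (0:ℝ))] with t ht hmem
  simp only [mem_compl_iff, mem_singleton_iff] at ht
  simp only [mem_Ioi, not_lt] at hmem
  rw [hu0 t (lt_of_le_of_ne hmem ht), abs_zero]

/-- Young's inequality for the causal convolution, plus integrability. -/
lemma cconv_young (u v : ℝ → ℝ) (hu : Integrable u) (hu0 : ∀ t < (0:ℝ), u t = 0)
    (hv : Integrable v) (hv0 : ∀ t < (0:ℝ), v t = 0) :
    Integrable (cconv u v) ∧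
      (∫ t in Set.Ioi (0:ℝ), |cconv u v t|) ≤
        (∫ t in Set.Ioi (0:ℝ), |u t|) * (∫ t in Set.Ioi (0:ℝ), |v t|) := by
  have hce := cconv_eq_convolution_s3 u v hu0 hv0
  have hint : Integrable (cconv u v) := by
    rw [hce]; exact hu.integrable_convolution (ContinuousLinearMap.mul ℝ ℝ) hv
  refine ⟨hint, ?_⟩
  have habs : Integrable ((fun t => |u t|) ⋆[ContinuousLinearMap.mul ℝ ℝ]
      (fun t => |v t|)) := hu.abs.integrable_convolution _ hv.abs
  have hle1 : (∫ t in Set.Ioi (0:ℝ), |cconv u v t|) ≤ ∫ t, |cconv u v t| := by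
    refine setIntegral_le_integral hint.abs (Filter.Eventually.of_forall fun t => abs_nonneg _)
  have hle2 : (∫ t, |cconv u v t|) ≤
      ∫ t, ((fun t => |u t|) ⋆[ContinuousLinearMap.mul ℝ ℝ] (fun t => |v t|)) t := by
    refine integral_mono hint.abs habs fun t => ?_
    rw [hce]
    calc |(u ⋆[ContinuousLinearMap.mul ℝ ℝ] v) t|
        ≤ ∫ τ, |u τ| * |v (t - τ)| := by
          rw [convolution_def]
          simpa [abs_mul] using
            norm_integral_le_integral_norm (μ := volume) (fun τ => u τ * v (t - τ))
      _ = _ := by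
          rw [convolution_def]
          simp
  have heq : (∫ t, ((fun t => |u t|) ⋆[ContinuousLinearMap.mul ℝ ℝ] (fun t => |v t|)) t)
      = (∫ t, |u t|) * (∫ t, |v t|) := by
    rw [integral_convolution _ hu.abs hv.abs]; simp
  rw [integral_abs_Ioi u hu0, integral_abs_Ioi v hv0]
  calc (∫ t in Set.Ioi (0:ℝ), |cconv u v t|) ≤ _ := hle1
    _ ≤ _ := hle2
    _ = _ := heq

lemma ae_conv_integrable (u v : ℝ → ℝ) (hu : Integrable u) (hv : Integrable v) :
    ∀ᵐ t : ℝ, IntervalIntegrable (fun τ => u τ * v (t - τ)) volume 0 t := by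
  filter_upwards [hu.ae_convolution_exists (ContinuousLinearMap.mul ℝ ℝ) hv] with t ht
  have : Integrable (fun τ => u τ * v (t - τ)) := by
    simpa [ConvolutionExistsAt] using ht
  exact this.intervalIntegrable

/-- `L¹` stability of the Volterra solution with respect to the kernel:
`‖h₁ - h₂‖₁ ≤ ‖g₁ - g₂‖₁ / ((1 - ‖g₁‖₁)(1 - ‖g₂‖₁))`, and if both kernel norms are
`≤ k < 1` then `‖h₁ - h₂‖₁ ≤ ‖g₁ - g₂‖₁ / (1-k)²`. -/
theorem volterra_L1_stability (g₁ g₂ h₁ h₂ : ℝ → ℝ)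
    (hg₁_int : Integrable g₁) (hg₁_neg : ∀ t < (0:ℝ), g₁ t = 0)
    (hg₂_int : Integrable g₂) (hg₂_neg : ∀ t < (0:ℝ), g₂ t = 0)
    (hg₁_norm : (∫ t in Set.Ioi (0:ℝ), |g₁ t|) < 1)
    (hg₂_norm : (∫ t in Set.Ioi (0:ℝ), |g₂ t|) < 1)
    (h₁_int : Integrable h₁) (h₁_neg : ∀ t < (0:ℝ), h₁ t = 0)
    (h₂_int : Integrable h₂) (h₂_neg : ∀ t < (0:ℝ), h₂ t = 0)
    (h₁_eq : ∀ᵐ t : ℝ, 0 ≤ t → h₁ t = g₁ t + ∫ τ in (0:ℝ)..t, h₁ τ * g₁ (t - τ))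
    (h₂_eq : ∀ᵐ t : ℝ, 0 ≤ t → h₂ t = g₂ t + ∫ τ in (0:ℝ)..t, h₂ τ * g₂ (t - τ)) :
    (∫ t in Set.Ioi (0:ℝ), |h₁ t - h₂ t|) ≤
      (∫ t in Set.Ioi (0:ℝ), |g₁ t - g₂ t|) /
        ((1 - ∫ t in Set.Ioi (0:ℝ), |g₁ t|) * (1 - ∫ t in Set.Ioi (0:ℝ), |g₂ t|)) ∧
    ∀ k : ℝ, k < 1 →
      (∫ t in Set.Ioi (0:ℝ), |g₁ t|) ≤ k →
      (∫ t in Set.Ioi (0:ℝ), |g₂ t|) ≤ k →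
      (∫ t in Set.Ioi (0:ℝ), |h₁ t - h₂ t|) ≤
        (∫ t in Set.Ioi (0:ℝ), |g₁ t - g₂ t|) / (1 - k) ^ 2 := by
  set a := ∫ t in Set.Ioi (0:ℝ), |g₁ t| with ha_def
  set b := ∫ t in Set.Ioi (0:ℝ), |g₂ t| with hb_def
  set H := ∫ t in Set.Ioi (0:ℝ), |h₁ t| with hH_def
  set A := ∫ t in Set.Ioi (0:ℝ), |h₁ t - h₂ t| with hA_def
  set B := ∫ t in Set.Ioi (0:ℝ), |g₁ t - g₂ t| with hB_def
  have hB0 : 0 ≤ B := setIntegral_nonneg measurableSet_Ioi fun t _ => abs_nonneg _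
  have hA0 : 0 ≤ A := setIntegral_nonneg measurableSet_Ioi fun t _ => abs_nonneg _
  have hH0 : 0 ≤ H := setIntegral_nonneg measurableSet_Ioi fun t _ => abs_nonneg _
  have h1a : (0:ℝ) < 1 - a := by linarith
  have h1b : (0:ℝ) < 1 - b := by linarith
  have he_int : Integrable (fun t => g₁ t - g₂ t) := hg₁_int.sub hg₂_int
  have he_neg : ∀ t < (0:ℝ), g₁ t - g₂ t = 0 := fun t ht => by
    rw [hg₁_neg t ht, hg₂_neg t ht, sub_zero]
  have hd_int : Integrable (fun t => h₁ t - h₂ t) := h₁_int.sub h₂_int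
  have hd_neg : ∀ t < (0:ℝ), h₁ t - h₂ t = 0 := fun t ht => by
    rw [h₁_neg t ht, h₂_neg t ht, sub_zero]
  obtain ⟨hc1_int, hc1_le⟩ := cconv_young h₁ g₁ h₁_int h₁_neg hg₁_int hg₁_neg
  obtain ⟨hc2_int, hc2_le⟩ :=
    cconv_young h₁ (fun t => g₁ t - g₂ t) h₁_int h₁_neg he_int he_neg
  obtain ⟨hc3_int, hc3_le⟩ :=
    cconv_young (fun t => h₁ t - h₂ t) g₂ hd_int hd_neg hg₂_int hg₂_neg
  rw [← hH_def, ← ha_def] at hc1_le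
  rw [← hH_def, ← hB_def] at hc2_le
  rw [← hA_def, ← hb_def] at hc3_le
  -- Step A: H ≤ a + H * a
  have stepA : H ≤ a + H * a := by
    have hmono : ∀ᵐ t ∂(volume.restrict (Set.Ioi (0:ℝ))),
        |h₁ t| ≤ |g₁ t| + |cconv h₁ g₁ t| := by
      filter_upwards [ae_restrict_of_ae h₁_eq, ae_restrict_mem measurableSet_Ioi]
        with t ht hmem
      have ht0 : (0:ℝ) ≤ t := le_of_lt hmem
      have hcc : cconv h₁ g₁ t = ∫ τ in (0:ℝ)..t, h₁ τ * g₁ (t - τ) := by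
        simp [cconv, not_lt.2 ht0]
      rw [ht ht0, hcc]
      exact abs_add_le _ _
    calc H ≤ ∫ t in Set.Ioi (0:ℝ), (|g₁ t| + |cconv h₁ g₁ t|) :=
          setIntegral_mono_ae_restrict h₁_int.abs.integrableOn
            (hg₁_int.abs.integrableOn.add hc1_int.abs.integrableOn) hmono
      _ = a + ∫ t in Set.Ioi (0:ℝ), |cconv h₁ g₁ t| :=
          integral_add hg₁_int.abs.integrableOn hc1_int.abs.integrableOn
      _ ≤ a + H * a := by linarith
  -- Step B: A ≤ B + H * B + A * b
  have stepB : A ≤ B + H * B + A * b := by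
    have hmono : ∀ᵐ t ∂(volume.restrict (Set.Ioi (0:ℝ))),
        |h₁ t - h₂ t| ≤ |g₁ t - g₂ t|
          + |cconv h₁ (fun s => g₁ s - g₂ s) t|
          + |cconv (fun s => h₁ s - h₂ s) g₂ t| := by
      filter_upwards [ae_restrict_of_ae h₁_eq, ae_restrict_of_ae h₂_eq,
        ae_restrict_of_ae (ae_conv_integrable h₁ (fun s => g₁ s - g₂ s) h₁_int he_int),
        ae_restrict_of_ae (ae_conv_integrable (fun s => h₁ s - h₂ s) g₂ hd_int hg₂_int),
        ae_restrict_of_ae (ae_conv_integrable h₂ g₂ h₂_int hg₂_int),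
        ae_restrict_mem measurableSet_Ioi] with t h1 h2 i1 i2 i3 hmem
      have ht0 : (0:ℝ) ≤ t := le_of_lt hmem
      have key : (∫ τ in (0:ℝ)..t, h₁ τ * g₁ (t - τ)) =
          (∫ τ in (0:ℝ)..t, h₁ τ * (g₁ (t - τ) - g₂ (t - τ)))
          + (∫ τ in (0:ℝ)..t, (h₁ τ - h₂ τ) * g₂ (t - τ))
          + (∫ τ in (0:ℝ)..t, h₂ τ * g₂ (t - τ)) := by
        rw [← intervalIntegral.integral_add i1 i2,
          ← intervalIntegral.integral_add (i1.add i2) i3]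
        apply intervalIntegral.integral_congr
        intro τ _
        ring
      have hcc2 : cconv h₁ (fun s => g₁ s - g₂ s) t =
          ∫ τ in (0:ℝ)..t, h₁ τ * (g₁ (t - τ) - g₂ (t - τ)) := by
        simp [cconv, not_lt.2 ht0]
      have hcc3 : cconv (fun s => h₁ s - h₂ s) g₂ t =
          ∫ τ in (0:ℝ)..t, (h₁ τ - h₂ τ) * g₂ (t - τ) := by
        simp [cconv, not_lt.2 ht0]
      have hdiff : h₁ t - h₂ t = (g₁ t - g₂ t)
          + cconv h₁ (fun s => g₁ s - g₂ s) t
          + cconv (fun s => h₁ s - h₂ s) g₂ t := by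
        rw [h1 ht0, h2 ht0, key, hcc2, hcc3]; ring
      rw [hdiff]
      have habs1 := abs_add_le (g₁ t - g₂ t + cconv h₁ (fun s => g₁ s - g₂ s) t)
        (cconv (fun s => h₁ s - h₂ s) g₂ t)
      have habs2 := abs_add_le (g₁ t - g₂ t) (cconv h₁ (fun s => g₁ s - g₂ s) t)
      linarith
    calc A ≤ ∫ t in Set.Ioi (0:ℝ), (|g₁ t - g₂ t|
          + |cconv h₁ (fun s => g₁ s - g₂ s) t|
          + |cconv (fun s => h₁ s - h₂ s) g₂ t|) :=
          setIntegral_mono_ae_restrict hd_int.abs.integrableOn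
            ((he_int.abs.integrableOn.add hc2_int.abs.integrableOn).add
              hc3_int.abs.integrableOn) hmono
      _ = (∫ t in Set.Ioi (0:ℝ), (|g₁ t - g₂ t| + |cconv h₁ (fun s => g₁ s - g₂ s) t|))
            + (∫ t in Set.Ioi (0:ℝ), |cconv (fun s => h₁ s - h₂ s) g₂ t|) :=
          integral_add (he_int.abs.integrableOn.add hc2_int.abs.integrableOn)
            hc3_int.abs.integrableOn
      _ = B + (∫ t in Set.Ioi (0:ℝ), |cconv h₁ (fun s => g₁ s - g₂ s) t|)
            + (∫ t in Set.Ioi (0:ℝ), |cconv (fun s => h₁ s - h₂ s) g₂ t|) := by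
          rw [integral_add he_int.abs.integrableOn hc2_int.abs.integrableOn]
      _ ≤ B + H * B + A * b := by
          linarith [hc2_le, hc3_le]
  -- arithmetic
  have stepA' : H - H * a ≤ a := by linarith
  have stepB' : A - A * b ≤ B + H * B := by linarith
  have hpos : (0:ℝ) < (1 - a) * (1 - b) := mul_pos h1a h1b
  have part1 : A ≤ B / ((1 - a) * (1 - b)) := by
    rw [le_div_iff₀ hpos]
    have p1 : B * (H - H * a) ≤ B * a := mul_le_mul_of_nonneg_left stepA' hB0
    have p2 : (A - A * b) * (1 - a) ≤ (B + H * B) * (1 - a) :=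
      mul_le_mul_of_nonneg_right stepB' h1a.le
    nlinarith [p1, p2]
  refine ⟨part1, fun k hk hak hbk => ?_⟩
  have hk2 : (0:ℝ) < (1 - k) ^ 2 := pow_pos (by linarith) 2
  have hle : (1 - k) ^ 2 ≤ (1 - a) * (1 - b) := by
    rw [sq]
    exact mul_le_mul (by linarith) (by linarith) (by linarith) (by linarith)
  exact part1.trans (div_le_div_of_nonneg_left hB0 hk2 hle)
end

section
/- Let g : ℝ → ℝ be integrable and bounded, with g(t) = 0 for t < 0, g(t) ≥ 0 for t ≥ 0, and ∫₀^∞ g(t) dt = k with 0 < k < 1. Let h be a nonnegative integrable function vanishing on (−∞,0) satisfying h(t) = g(t) + ∫₀ᵗ h(τ) g(t−τ) dτ for almost every t ≥ 0. Then h is essentially bounded and ess sup_{t≥0} h(t) ≤ (1/(1−k)) · sup_{t≥0} g(t). -/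
/-!
Let `B` be the essential supremum of `h` on `[0, ∞)`. It is finite, since the convolution term
is at most `(sup |g|) * ‖h‖₁`. Bounding `h` by `B` inside the convolution and using
`∫₀ᵗ g(t - τ) dτ ≤ k` gives `h ≤ sup g + k * B` a.e., hence `B ≤ sup g + k * B`, which is the
claim because `k < 1`.
-/

open MeasureTheory

open Filter Set

theorem intervalIntegral_mul_le_const_mul_integral {μ : Measure ℝ} {f w : ℝ → ℝ} {a b C : ℝ}
    (hab : a ≤ b) (hfw : IntervalIntegrable (fun x => f x * w x) μ a b)
    (hw : IntervalIntegrable w μ a b) (hf : ∀ᵐ x ∂μ.restrict (Icc a b), f x ≤ C)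
    (hw0 : ∀ᵐ x ∂μ.restrict (Icc a b), 0 ≤ w x) :
    ∫ x in a..b, f x * w x ∂μ ≤ C * ∫ x in a..b, w x ∂μ := by
  rw [← intervalIntegral.integral_const_mul]
  refine intervalIntegral.integral_mono_ae_restrict hab hfw (hw.const_mul C) ?_
  filter_upwards [hf, hw0] with x hfx hwx
  exact mul_le_mul_of_nonneg_right hfx hwx

theorem intervalIntegral_comp_sub_left_le_integral_Ioi {g : ℝ → ℝ} (hg : Integrable g)
    (hg0 : ∀ s > 0, 0 ≤ g s) {t : ℝ} (ht : 0 ≤ t) :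
    ∫ τ in (0:ℝ)..t, g (t - τ) ≤ ∫ s in Ioi (0:ℝ), g s := by
  rw [intervalIntegral.integral_comp_sub_left g t, sub_self, sub_zero,
    intervalIntegral.integral_of_le ht]
  refine setIntegral_mono_set hg.integrableOn ?_ Ioc_subset_Ioi_self.eventuallyLE
  filter_upwards [ae_restrict_mem measurableSet_Ioi] with s hs using hg0 s hs

theorem ae_le_one_div_one_sub_mul_of_ae_le_imp {α : Type*} [MeasurableSpace α] {μ : Measure α}
    {f : α → ℝ} {G k : ℝ} (hk : k < 1) (hf0 : 0 ≤ᵐ[μ] f)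
    (hfb : IsBoundedUnder (· ≤ ·) (ae μ) f)
    (hstep : ∀ C, 0 ≤ C → (∀ᵐ x ∂μ, f x ≤ C) → ∀ᵐ x ∂μ, f x ≤ G + k * C) :
    ∀ᵐ x ∂μ, f x ≤ 1 / (1 - k) * G := by
  rcases eq_zero_or_neZero μ with rfl | hμ
  · simp
  set B := essSup f μ
  have hfB : ∀ᵐ x ∂μ, f x ≤ B := ae_le_essSup hfb
  have hB0 : 0 ≤ B := le_limsup_of_frequently_le hf0.frequently hfb
  have hBle : B ≤ G + k * B :=
    essSup_le_of_ae_le _ (hstep B hB0 hfB) (isCoboundedUnder_le_of_eventually_le _ hf0)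
  have hBG : B ≤ 1 / (1 - k) * G := by
    rw [div_mul_eq_mul_div, le_div_iff₀ (sub_pos.2 hk)]
    linarith
  filter_upwards [hfB] with x hx using hx.trans hBG

section Volterra

variable {g h : ℝ → ℝ} {M : ℝ}

theorem MeasureTheory.Integrable.mul_comp_sub_left_of_bounded (hh : Integrable h)
    (hg : AEStronglyMeasurable g) (hM : ∀ s, |g s| ≤ M) (t : ℝ) :
    Integrable fun τ => h τ * g (t - τ) :=
  hh.mul_bdd (hg.comp_quasiMeasurePreserving (quasiMeasurePreserving_sub_left volume t))
    (ae_of_all _ fun τ => hM (t - τ))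

theorem intervalIntegral_mul_comp_sub_le_mul_integral (hh : Integrable h) (hh0 : ∀ s, 0 ≤ h s)
    (hg : AEStronglyMeasurable g) (hM : ∀ s, |g s| ≤ M) {t : ℝ} (ht : 0 ≤ t) :
    ∫ τ in (0:ℝ)..t, h τ * g (t - τ) ≤ M * ∫ s, h s := by
  have hM0 : 0 ≤ M := (abs_nonneg _).trans (hM 0)
  simp_rw [mul_comm (h _)]
  calc ∫ τ in (0:ℝ)..t, g (t - τ) * h τ
      ≤ M * ∫ τ in (0:ℝ)..t, h τ := by
        refine intervalIntegral_mul_le_const_mul_integral ht ?_ hh.intervalIntegrable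
          (ae_of_all _ fun τ => (le_abs_self _).trans (hM _)) (ae_of_all _ fun τ => hh0 τ)
        simpa only [mul_comm] using (hh.mul_comp_sub_left_of_bounded hg hM t).intervalIntegrable
    _ ≤ M * ∫ s, h s := by
        rw [intervalIntegral.integral_of_le ht]
        exact mul_le_mul_of_nonneg_left (setIntegral_le_integral hh (ae_of_all _ hh0)) hM0

theorem intervalIntegral_mul_comp_sub_le_mul_integral_Ioi (hh : Integrable h) (hg : Integrable g)
    (hg0 : ∀ s ≥ 0, 0 ≤ g s) (hM : ∀ s, |g s| ≤ M) {B : ℝ} (hB : 0 ≤ B)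
    (hhB : ∀ᵐ s ∂volume.restrict (Ici 0), h s ≤ B) {t : ℝ} (ht : 0 ≤ t) :
    ∫ τ in (0:ℝ)..t, h τ * g (t - τ) ≤ B * ∫ s in Ioi (0:ℝ), g s :=
  calc ∫ τ in (0:ℝ)..t, h τ * g (t - τ)
      ≤ B * ∫ τ in (0:ℝ)..t, g (t - τ) := by
        refine intervalIntegral_mul_le_const_mul_integral ht
          (hh.mul_comp_sub_left_of_bounded hg.aestronglyMeasurable hM t).intervalIntegrable
          ((hg.comp_sub_left t).intervalIntegrable)
          (ae_restrict_of_ae_restrict_of_subset Icc_subset_Ici_self hhB) ?_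
        filter_upwards [ae_restrict_mem measurableSet_Icc] with τ hτ
          using hg0 _ (sub_nonneg.2 hτ.2)
    _ ≤ B * ∫ s in Ioi (0:ℝ), g s := by
        gcongr
        exact intervalIntegral_comp_sub_left_le_integral_Ioi hg (fun s hs => hg0 s hs.le) ht

end Volterra

theorem volterra_solution_sup_bound_general (g h : ℝ → ℝ) (k : ℝ)
    (hg_int : Integrable g)
    (hg_bdd : ∃ M : ℝ, ∀ t : ℝ, |g t| ≤ M)
    (hg_nonneg : ∀ t ≥ (0:ℝ), 0 ≤ g t)
    (hk : (∫ t in Set.Ioi (0:ℝ), g t) = k)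
    (hk1 : k < 1)
    (hh_int : Integrable h)
    (hh_nonneg : ∀ t : ℝ, 0 ≤ h t)
    (hh_eq : ∀ᵐ t : ℝ, 0 ≤ t → h t = g t + ∫ τ in (0:ℝ)..t, h τ * g (t - τ)) :
    ∀ᵐ t : ℝ, 0 ≤ t → h t ≤ (1 / (1 - k)) * ⨆ s : Set.Ici (0:ℝ), g ↑s := by
  obtain ⟨M, hM⟩ := hg_bdd
  set G := ⨆ s : Set.Ici (0:ℝ), g ↑s
  have hgG : ∀ t ≥ 0, g t ≤ G := fun t ht =>
    le_ciSup ⟨M, by rintro _ ⟨s, rfl⟩; exact (le_abs_self _).trans (hM s)⟩ (⟨t, ht⟩ : Ici (0:ℝ))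
  have hh_eq' := (ae_restrict_iff' (μ := volume) measurableSet_Ici).2 hh_eq
  refine (ae_restrict_iff' measurableSet_Ici).1
    (ae_le_one_div_one_sub_mul_of_ae_le_imp hk1 (ae_of_all _ hh_nonneg) ?_ ?_)
  · refine isBoundedUnder_of_eventually_le (a := G + M * ∫ s, h s) ?_
    filter_upwards [hh_eq', ae_restrict_mem measurableSet_Ici] with t heq ht
    rw [heq]
    exact add_le_add (hgG t ht)
      (intervalIntegral_mul_comp_sub_le_mul_integral hh_int hh_nonneg
        hg_int.aestronglyMeasurable hM ht)
  · intro C hC hhC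
    filter_upwards [hh_eq', ae_restrict_mem measurableSet_Ici] with t heq ht
    rw [heq, ← hk]
    exact add_le_add (hgG t ht)
      ((intervalIntegral_mul_comp_sub_le_mul_integral_Ioi hh_int hg_int hg_nonneg hM hC hhC
        ht).trans_eq (mul_comm _ _))

/-- sup-norm bound for the Volterra solution:
`ess sup_{t ≥ 0} h(t) ≤ (1/(1-k)) ⬝ sup_{t ≥ 0} g(t)`, stated as an a.e. pointwise bound
(which expresses both the essential boundedness of `h` and the bound itself). -/
theorem volterra_solution_sup_bound (g h : ℝ → ℝ) (k : ℝ)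
    (hg_int : Integrable g)
    (hg_bdd : ∃ M : ℝ, ∀ t : ℝ, |g t| ≤ M)
    (hg_neg : ∀ t < (0:ℝ), g t = 0)
    (hg_nonneg : ∀ t ≥ (0:ℝ), 0 ≤ g t)
    (hk : (∫ t in Set.Ioi (0:ℝ), g t) = k)
    (hk0 : 0 < k) (hk1 : k < 1)
    (hh_int : Integrable h)
    (hh_nonneg : ∀ t : ℝ, 0 ≤ h t)
    (hh_neg : ∀ t < (0:ℝ), h t = 0)
    (hh_eq : ∀ᵐ t : ℝ, 0 ≤ t → h t = g t + ∫ τ in (0:ℝ)..t, h τ * g (t - τ)) :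
    ∀ᵐ t : ℝ, 0 ≤ t → h t ≤ (1 / (1 - k)) * ⨆ s : Set.Ici (0:ℝ), g ↑s :=
  volterra_solution_sup_bound_general g h k hg_int hg_bdd hg_nonneg hk hk1 hh_int hh_nonneg hh_eq
end

section
/- Let g₁, g₂ : ℝ → ℝ be integrable and bounded, vanishing on (−∞,0), nonnegative on [0,∞), with ‖g₁‖₁ ≤ k and ‖g₂‖₁ ≤ k for some k < 1. Let h₁, h₂ be integrable functions vanishing on (−∞,0) satisfying hᵢ(t) = gᵢ(t) + ∫₀ᵗ hᵢ(τ) gᵢ(t−τ) dτ for almost every t ≥ 0 (i = 1,2). Then ess sup_{t≥0} |h₁(t) − h₂(t)| ≤ (1/(1−k)²) · sup_{t≥0} |g₁(t) − g₂(t)|. -/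
open MeasureTheory ENNReal

lemma conv_abs_bound (a b : ℝ → ℝ) (t Cb : ℝ) (ht : 0 ≤ t) (hCb : 0 ≤ Cb)
    (ha : Integrable a) (hb : ∀ᵐ s : ℝ, |b s| ≤ Cb) :
    |∫ τ in (0:ℝ)..t, a τ * b (t - τ)| ≤ Cb * ∫ s in Set.Ioi (0:ℝ), |a s| := by
  have hbt : ∀ᵐ τ : ℝ, |b (t - τ)| ≤ Cb :=
    (Measure.measurePreserving_sub_left volume t).quasiMeasurePreserving.ae hb
  rw [intervalIntegral.integral_of_le ht]
  have h1 : |∫ τ in Set.Ioc (0:ℝ) t, a τ * b (t - τ)|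
      ≤ ∫ τ in Set.Ioc (0:ℝ) t, |a τ * b (t - τ)| := by
    simpa only [Real.norm_eq_abs] using
      norm_integral_le_integral_norm (μ := volume.restrict (Set.Ioc 0 t))
        (fun τ => a τ * b (t - τ))
  have h2 : (∫ τ in Set.Ioc (0:ℝ) t, |a τ * b (t - τ)|)
      ≤ ∫ τ in Set.Ioc (0:ℝ) t, |a τ| * Cb := by
    apply integral_mono_of_nonneg (Filter.Eventually.of_forall fun τ => abs_nonneg _)
      ((ha.abs.mul_const Cb).integrableOn)
    filter_upwards [ae_restrict_of_ae hbt] with τ hτ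
    rw [abs_mul]
    exact mul_le_mul_of_nonneg_left hτ (abs_nonneg _)
  have h3 : (∫ τ in Set.Ioc (0:ℝ) t, |a τ| * Cb)
      = (∫ τ in Set.Ioc (0:ℝ) t, |a τ|) * Cb := by
    rw [integral_mul_const]
  have h4 : (∫ τ in Set.Ioc (0:ℝ) t, |a τ|) ≤ ∫ s in Set.Ioi (0:ℝ), |a s| :=
    setIntegral_mono_set ha.abs.integrableOn (ae_of_all _ fun s => abs_nonneg _)
      (HasSubset.Subset.eventuallyLE Set.Ioc_subset_Ioi_self)
  calc |∫ τ in Set.Ioc (0:ℝ) t, a τ * b (t - τ)|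
      ≤ ∫ τ in Set.Ioc (0:ℝ) t, |a τ * b (t - τ)| := h1
    _ ≤ (∫ τ in Set.Ioc (0:ℝ) t, |a τ|) * Cb := h3 ▸ h2
    _ ≤ (∫ s in Set.Ioi (0:ℝ), |a s|) * Cb := mul_le_mul_of_nonneg_right h4 hCb
    _ = Cb * ∫ s in Set.Ioi (0:ℝ), |a s| := mul_comm _ _

lemma conv_intervalIntegrable (a b : ℝ → ℝ) (t Cb : ℝ) (ha : Integrable a)
    (hbm : AEStronglyMeasurable b volume) (hb : ∀ s, |b s| ≤ Cb) :
    IntervalIntegrable (fun τ => a τ * b (t - τ)) volume 0 t := by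
  have hqmp := (Measure.measurePreserving_sub_left volume t).quasiMeasurePreserving
  have hbm' : AEStronglyMeasurable (fun τ => b (t - τ)) volume :=
    hbm.comp_quasiMeasurePreserving hqmp
  have : Integrable (fun τ => b (t - τ) * a τ) volume :=
    ha.bdd_mul hbm' (ae_of_all _ fun x => by simpa [Real.norm_eq_abs] using hb (t - x))
  exact (this.congr (Filter.Eventually.of_forall fun τ => mul_comm _ _)).intervalIntegrable

lemma l1_selfbound (g h : ℝ → ℝ) (k : ℝ)
    (hg_int : Integrable g) (hg_neg : ∀ t < (0:ℝ), g t = 0)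
    (hg_norm : (∫ t in Set.Ioi (0:ℝ), |g t|) ≤ k)
    (h_int : Integrable h)
    (h_eq : ∀ᵐ t : ℝ, 0 ≤ t → h t = g t + ∫ τ in (0:ℝ)..t, h τ * g (t - τ)) :
    (∫ t in Set.Ioi (0:ℝ), |h t|) ≤ k + k * ∫ t in Set.Ioi (0:ℝ), |h t| := by
  have hk0 : 0 ≤ k :=
    le_trans (setIntegral_nonneg measurableSet_Ioi fun t _ => abs_nonneg _) hg_norm
  set K : ℝ≥0∞ := ENNReal.ofReal k with hK
  set H : ℝ := ∫ t in Set.Ioi (0:ℝ), |h t| with hH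
  have hH0 : 0 ≤ H := setIntegral_nonneg measurableSet_Ioi fun t _ => abs_nonneg _
  -- value of the g-lintegral
  have hval : (∫⁻ t in Set.Ioi (0:ℝ), ‖g t‖₊) = ENNReal.ofReal (∫ t in Set.Ioi (0:ℝ), |g t|) := by
    simp_rw [← enorm_eq_nnnorm]
    rw [← ofReal_integral_norm_eq_lintegral_enorm hg_int.integrableOn]
    simp [Real.norm_eq_abs]
  have hIoiK : (∫⁻ t in Set.Ioi (0:ℝ), ‖g t‖₊) ≤ K := by
    rw [hval]; exact ENNReal.ofReal_le_ofReal hg_norm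
  have hg_lint : (∫⁻ t, ‖g t‖₊ ∂volume) ≤ K := by
    have h0 : (∫⁻ t in Set.Iio (0:ℝ), ‖g t‖₊) = 0 := by
      have hz : ∀ᵐ t ∂(volume.restrict (Set.Iio (0:ℝ))), (‖g t‖₊ : ℝ≥0∞) = 0 := by
        filter_upwards [ae_restrict_mem measurableSet_Iio] with t ht
        simp [hg_neg t ht]
      rw [lintegral_congr_ae hz, lintegral_zero]
    have hIci : (∫⁻ t in Set.Ici (0:ℝ), ‖g t‖₊) = ∫⁻ t in Set.Ioi (0:ℝ), ‖g t‖₊ := by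
      rw [Measure.restrict_congr_set (MeasureTheory.Ioi_ae_eq_Ici (a := (0:ℝ)) (μ := volume)).symm]
    have hsplit := lintegral_add_compl (fun t => (‖g t‖₊ : ℝ≥0∞))
      (measurableSet_Iio (a := (0:ℝ))) (μ := volume)
    rw [Set.compl_Iio, h0, zero_add, hIci] at hsplit
    rw [← hsplit]; exact hIoiK
  -- measurable representatives
  have hg_m := hg_int.aestronglyMeasurable
  have hh_m := h_int.aestronglyMeasurable
  set g' : ℝ → ℝ := hg_m.mk g with hg'def
  set h' : ℝ → ℝ := hh_m.mk h with hh'def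
  have hg'_meas : Measurable g' := hg_m.stronglyMeasurable_mk.measurable
  have hh'_meas : Measurable h' := hh_m.stronglyMeasurable_mk.measurable
  have hgg' : g =ᵐ[volume] g' := hg_m.ae_eq_mk
  have hhh' : h =ᵐ[volume] h' := hh_m.ae_eq_mk
  set A : ℝ≥0∞ := ∫⁻ t in Set.Ioi (0:ℝ), ‖h t‖₊ with hA
  have hA_eq : A = ENNReal.ofReal H := by
    rw [hA, hH]
    simp_rw [← enorm_eq_nnnorm]
    rw [← ofReal_integral_norm_eq_lintegral_enorm h_int.integrableOn]
    simp [Real.norm_eq_abs]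
  -- Step 1 : pointwise bound and integrate
  have step1 : A ≤ (∫⁻ t in Set.Ioi (0:ℝ), ‖g t‖₊)
      + ∫⁻ t in Set.Ioi (0:ℝ), (∫⁻ τ in Set.Ioi (0:ℝ), ‖h τ‖₊ * ‖g (t - τ)‖₊) := by
    have hae : ∀ᵐ t ∂(volume.restrict (Set.Ioi (0:ℝ))),
        (‖h t‖₊ : ℝ≥0∞) ≤ ‖g t‖₊ + ∫⁻ τ in Set.Ioi (0:ℝ), ‖h τ‖₊ * ‖g (t - τ)‖₊ := by
      filter_upwards [ae_restrict_of_ae h_eq, ae_restrict_mem measurableSet_Ioi]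
        with t het hmem
      have ht : (0:ℝ) ≤ t := le_of_lt hmem
      rw [het ht]
      calc (‖g t + ∫ τ in (0:ℝ)..t, h τ * g (t - τ)‖₊ : ℝ≥0∞)
          ≤ (‖g t‖₊ : ℝ≥0∞) + ‖∫ τ in (0:ℝ)..t, h τ * g (t - τ)‖₊ := by
            exact_mod_cast nnnorm_add_le _ _
        _ ≤ (‖g t‖₊ : ℝ≥0∞) + ∫⁻ τ in Set.Ioi (0:ℝ), ‖h τ‖₊ * ‖g (t - τ)‖₊ := by
            gcongr
            rw [intervalIntegral.integral_of_le ht]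
            simp_rw [← enorm_eq_nnnorm]
            refine le_trans (enorm_integral_le_lintegral_enorm _) ?_
            refine le_trans (lintegral_mono_set Set.Ioc_subset_Ioi_self) ?_
            refine lintegral_mono fun τ => ?_
            simp [enorm_mul]
    calc A ≤ ∫⁻ t in Set.Ioi (0:ℝ),
          ((‖g t‖₊ : ℝ≥0∞) + ∫⁻ τ in Set.Ioi (0:ℝ), ‖h τ‖₊ * ‖g (t - τ)‖₊) :=
        lintegral_mono_ae hae
      _ = _ := lintegral_add_left' ((AEMeasurable.enorm hg_int.aemeasurable).restrict) _
  -- Step 2 : replace by measurable representatives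
  have step2 : (∫⁻ t in Set.Ioi (0:ℝ), (∫⁻ τ in Set.Ioi (0:ℝ), ‖h τ‖₊ * ‖g (t - τ)‖₊))
      = ∫⁻ t in Set.Ioi (0:ℝ), (∫⁻ τ in Set.Ioi (0:ℝ), ‖h' τ‖₊ * ‖g' (t - τ)‖₊) := by
    refine lintegral_congr fun t => lintegral_congr_ae ?_
    have e2 : ∀ᵐ τ : ℝ ∂volume, g (t - τ) = g' (t - τ) :=
      (Measure.measurePreserving_sub_left volume t).quasiMeasurePreserving.ae_eq hgg'
    filter_upwards [ae_restrict_of_ae hhh', ae_restrict_of_ae e2] with τ u v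
    rw [u, v]
  -- Step 3 : swap
  have hmeas : Measurable (Function.uncurry fun t τ => (‖h' τ‖₊ : ℝ≥0∞) * ‖g' (t - τ)‖₊) := by
    refine Measurable.mul (f := fun p : ℝ × ℝ => (‖h' p.2‖₊ : ℝ≥0∞)) (g := fun p : ℝ × ℝ => (‖g' (p.1 - p.2)‖₊ : ℝ≥0∞)) ?_ ?_
    · exact (hh'_meas.comp measurable_snd).enorm
    · exact (hg'_meas.comp (measurable_fst.sub measurable_snd)).enorm
  have step3 : (∫⁻ t in Set.Ioi (0:ℝ), (∫⁻ τ in Set.Ioi (0:ℝ), ‖h' τ‖₊ * ‖g' (t - τ)‖₊))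
      = ∫⁻ τ in Set.Ioi (0:ℝ), (∫⁻ t in Set.Ioi (0:ℝ), ‖h' τ‖₊ * ‖g' (t - τ)‖₊) :=
    lintegral_lintegral_swap hmeas.aemeasurable
  -- Step 4 : bound the swapped integral
  have inner_bound : ∀ τ : ℝ, (∫⁻ t in Set.Ioi (0:ℝ), ‖g' (t - τ)‖₊) ≤ K := by
    intro τ
    calc (∫⁻ t in Set.Ioi (0:ℝ), ‖g' (t - τ)‖₊) ≤ ∫⁻ t, ‖g' (t - τ)‖₊ :=
        setLIntegral_le_lintegral _ _
      _ = ∫⁻ t, ‖g' t‖₊ := by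
          simp_rw [sub_eq_add_neg]
          exact lintegral_add_right_eq_self (fun t => (‖g' t‖₊ : ℝ≥0∞)) (-τ)
      _ = ∫⁻ t, ‖g t‖₊ := by
          refine lintegral_congr_ae ?_
          filter_upwards [hgg'] with t u; rw [u]
      _ ≤ K := hg_lint
  have step4 : (∫⁻ τ in Set.Ioi (0:ℝ), (∫⁻ t in Set.Ioi (0:ℝ), ‖h' τ‖₊ * ‖g' (t - τ)‖₊))
      ≤ A * K := by
    have hA' : (∫⁻ τ in Set.Ioi (0:ℝ), ‖h' τ‖₊) = A := by
      refine lintegral_congr_ae ?_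
      filter_upwards [ae_restrict_of_ae hhh'] with τ u; rw [u]
    calc (∫⁻ τ in Set.Ioi (0:ℝ), (∫⁻ t in Set.Ioi (0:ℝ), ‖h' τ‖₊ * ‖g' (t - τ)‖₊))
        = ∫⁻ τ in Set.Ioi (0:ℝ), (‖h' τ‖₊ : ℝ≥0∞) * ∫⁻ t in Set.Ioi (0:ℝ), ‖g' (t - τ)‖₊ :=
          lintegral_congr fun τ => lintegral_const_mul' _ _ ENNReal.coe_ne_top
      _ ≤ ∫⁻ τ in Set.Ioi (0:ℝ), (‖h' τ‖₊ : ℝ≥0∞) * K :=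
          lintegral_mono fun τ => mul_le_mul_right (inner_bound τ) _
      _ = (∫⁻ τ in Set.Ioi (0:ℝ), ‖h' τ‖₊) * K :=
          lintegral_mul_const' K _ (by simp [hK])
      _ = A * K := by rw [hA']
  -- combine
  have total : ENNReal.ofReal H ≤ ENNReal.ofReal (k + k * H) := by
    have : A ≤ K + A * K := step1.trans (add_le_add hIoiK ((step2.trans step3) ▸ step4))
    rw [hA_eq] at this
    refine this.trans (le_of_eq ?_)
    rw [ENNReal.ofReal_add hk0 (by positivity), ← ENNReal.ofReal_mul hH0]
    ring_nf
    rw [hK, add_comm]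
  have := (ENNReal.ofReal_le_ofReal_iff (by positivity)).1 total
  linarith


/-- sup-norm stability of the Volterra solution:
`ess sup_{t ≥ 0} |h₁(t) - h₂(t)| ≤ (1/(1-k)²) ⬝ sup_{t ≥ 0} |g₁(t) - g₂(t)|`,
stated as an a.e. pointwise bound on `[0,∞)`. -/
theorem volterra_sup_stability (g₁ g₂ h₁ h₂ : ℝ → ℝ) (k : ℝ) (hk : k < 1)
    (hg₁_int : Integrable g₁) (hg₁_bdd : ∃ M : ℝ, ∀ t : ℝ, |g₁ t| ≤ M)
    (hg₁_neg : ∀ t < (0:ℝ), g₁ t = 0) (hg₁_nonneg : ∀ t ≥ (0:ℝ), 0 ≤ g₁ t)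
    (hg₂_int : Integrable g₂) (hg₂_bdd : ∃ M : ℝ, ∀ t : ℝ, |g₂ t| ≤ M)
    (hg₂_neg : ∀ t < (0:ℝ), g₂ t = 0) (hg₂_nonneg : ∀ t ≥ (0:ℝ), 0 ≤ g₂ t)
    (hg₁_norm : (∫ t in Set.Ioi (0:ℝ), |g₁ t|) ≤ k)
    (hg₂_norm : (∫ t in Set.Ioi (0:ℝ), |g₂ t|) ≤ k)
    (h₁_int : Integrable h₁) (h₁_neg : ∀ t < (0:ℝ), h₁ t = 0)
    (h₂_int : Integrable h₂) (h₂_neg : ∀ t < (0:ℝ), h₂ t = 0)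
    (h₁_eq : ∀ᵐ t : ℝ, 0 ≤ t → h₁ t = g₁ t + ∫ τ in (0:ℝ)..t, h₁ τ * g₁ (t - τ))
    (h₂_eq : ∀ᵐ t : ℝ, 0 ≤ t → h₂ t = g₂ t + ∫ τ in (0:ℝ)..t, h₂ τ * g₂ (t - τ)) :
    ∀ᵐ t : ℝ, 0 ≤ t →
      |h₁ t - h₂ t| ≤ (1 / (1 - k) ^ 2) * ⨆ s : Set.Ici (0:ℝ), |g₁ ↑s - g₂ ↑s| := by
  obtain ⟨M₁, hM₁⟩ := hg₁_bdd
  obtain ⟨M₂, hM₂⟩ := hg₂_bdd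
  have hM₁0 : 0 ≤ M₁ := le_trans (abs_nonneg _) (hM₁ 0)
  have hM₂0 : 0 ≤ M₂ := le_trans (abs_nonneg _) (hM₂ 0)
  have hk0 : 0 ≤ k :=
    le_trans (setIntegral_nonneg measurableSet_Ioi fun t _ => abs_nonneg _) hg₁_norm
  have h1k : (0:ℝ) < 1 - k := by linarith
  set D : ℝ := ⨆ s : Set.Ici (0:ℝ), |g₁ ↑s - g₂ ↑s| with hD
  have hbdd : BddAbove (Set.range fun s : Set.Ici (0:ℝ) => |g₁ ↑s - g₂ ↑s|) := by
    refine ⟨M₁ + M₂, ?_⟩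
    rintro x ⟨s, rfl⟩
    exact (abs_sub _ _).trans (add_le_add (hM₁ _) (hM₂ _))
  have hD_bd : ∀ t : ℝ, 0 ≤ t → |g₁ t - g₂ t| ≤ D := fun t ht =>
    le_ciSup hbdd (⟨t, ht⟩ : Set.Ici (0:ℝ))
  have hD0 : 0 ≤ D := le_trans (abs_nonneg _) (hD_bd 0 le_rfl)
  have hDae : ∀ᵐ s : ℝ, |g₁ s - g₂ s| ≤ D := by
    refine ae_of_all _ fun s => ?_
    rcases le_or_gt 0 s with hs | hs
    · exact hD_bd s hs
    · simp [hg₁_neg s hs, hg₂_neg s hs, hD0]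
  set H₁ : ℝ := ∫ t in Set.Ioi (0:ℝ), |h₁ t| with hH₁
  set H₂ : ℝ := ∫ t in Set.Ioi (0:ℝ), |h₂ t| with hH₂
  have hH₁0 : 0 ≤ H₁ := setIntegral_nonneg measurableSet_Ioi fun t _ => abs_nonneg _
  have hH₂0 : 0 ≤ H₂ := setIntegral_nonneg measurableSet_Ioi fun t _ => abs_nonneg _
  have hH₂k : 1 + H₂ ≤ 1 / (1 - k) := by
    have := l1_selfbound g₂ h₂ k hg₂_int hg₂_neg hg₂_norm h₂_int h₂_eq
    rw [le_div_iff₀ h1k]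
    nlinarith
  -- the contraction step
  have step : ∀ C : ℝ, 0 ≤ C → (∀ᵐ t : ℝ, 0 ≤ t → |h₁ t - h₂ t| ≤ C) →
      ∀ᵐ t : ℝ, 0 ≤ t → |h₁ t - h₂ t| ≤ D * (1 + H₂) + k * C := by
    intro C hC0 hC
    have hbC : ∀ᵐ s : ℝ, |h₁ s - h₂ s| ≤ C := by
      filter_upwards [hC] with s hs
      rcases le_or_gt 0 s with h | h
      · exact hs h
      · simp [h₁_neg s h, h₂_neg s h, hC0]
    filter_upwards [h₁_eq, h₂_eq] with t e₁ e₂ ht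
    have i11 : IntervalIntegrable (fun τ => h₁ τ * g₁ (t - τ)) volume 0 t :=
      conv_intervalIntegrable h₁ g₁ t M₁ h₁_int hg₁_int.aestronglyMeasurable hM₁
    have i21 : IntervalIntegrable (fun τ => h₂ τ * g₁ (t - τ)) volume 0 t :=
      conv_intervalIntegrable h₂ g₁ t M₁ h₂_int hg₁_int.aestronglyMeasurable hM₁
    have i22 : IntervalIntegrable (fun τ => h₂ τ * g₂ (t - τ)) volume 0 t :=
      conv_intervalIntegrable h₂ g₂ t M₂ h₂_int hg₂_int.aestronglyMeasurable hM₂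
    have eA : (∫ τ in (0:ℝ)..t, (h₁ τ - h₂ τ) * g₁ (t - τ))
        = (∫ τ in (0:ℝ)..t, h₁ τ * g₁ (t - τ)) - ∫ τ in (0:ℝ)..t, h₂ τ * g₁ (t - τ) := by
      rw [← intervalIntegral.integral_sub i11 i21]
      exact intervalIntegral.integral_congr fun τ _ => (sub_mul _ _ _)
    have eB : (∫ τ in (0:ℝ)..t, h₂ τ * (g₁ (t - τ) - g₂ (t - τ)))
        = (∫ τ in (0:ℝ)..t, h₂ τ * g₁ (t - τ)) - ∫ τ in (0:ℝ)..t, h₂ τ * g₂ (t - τ) := by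
      rw [← intervalIntegral.integral_sub i21 i22]
      exact intervalIntegral.integral_congr fun τ _ => (mul_sub _ _ _)
    have split : h₁ t - h₂ t = (g₁ t - g₂ t)
        + (∫ τ in (0:ℝ)..t, (h₁ τ - h₂ τ) * g₁ (t - τ))
        + ∫ τ in (0:ℝ)..t, h₂ τ * (g₁ (t - τ) - g₂ (t - τ)) := by
      rw [e₁ ht, e₂ ht, eA, eB]; ring
    -- bound the middle term using reflection
    have refl : (∫ τ in (0:ℝ)..t, (h₁ τ - h₂ τ) * g₁ (t - τ))
        = ∫ τ in (0:ℝ)..t, g₁ τ * (h₁ (t - τ) - h₂ (t - τ)) := by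
      have := intervalIntegral.integral_comp_sub_left
        (fun τ => g₁ τ * (h₁ (t - τ) - h₂ (t - τ))) t (a := (0:ℝ)) (b := t)
      simp only [sub_self, sub_zero] at this
      rw [← this]
      refine intervalIntegral.integral_congr fun τ _ => ?_
      have hss : t - (t - τ) = τ := sub_sub_cancel t τ
      rw [hss]; ring
    have b2 : |∫ τ in (0:ℝ)..t, (h₁ τ - h₂ τ) * g₁ (t - τ)| ≤ C * k := by
      rw [refl]
      have := conv_abs_bound g₁ (fun s => h₁ s - h₂ s) t C ht hC0 hg₁_int hbC
      exact this.trans (mul_le_mul_of_nonneg_left hg₁_norm hC0)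
    have b3 : |∫ τ in (0:ℝ)..t, h₂ τ * (g₁ (t - τ) - g₂ (t - τ))| ≤ D * H₂ :=
      conv_abs_bound h₂ (fun s => g₁ s - g₂ s) t D ht hD0 h₂_int hDae
    calc |h₁ t - h₂ t| ≤ |g₁ t - g₂ t| + |∫ τ in (0:ℝ)..t, (h₁ τ - h₂ τ) * g₁ (t - τ)|
          + |∫ τ in (0:ℝ)..t, h₂ τ * (g₁ (t - τ) - g₂ (t - τ))| := by
          rw [split]; exact (abs_add_le _ _).trans (add_le_add_left (abs_add_le _ _) _)
      _ ≤ D + C * k + D * H₂ := add_le_add (add_le_add (hD_bd t ht) b2) b3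
      _ = D * (1 + H₂) + k * C := by ring
  -- base bound
  have base : ∀ᵐ t : ℝ, 0 ≤ t → |h₁ t - h₂ t| ≤ M₁ * (1 + H₁) + M₂ * (1 + H₂) := by
    filter_upwards [h₁_eq, h₂_eq] with t e₁ e₂ ht
    have b1 : |h₁ t| ≤ M₁ + M₁ * H₁ := by
      rw [e₁ ht]
      refine (abs_add_le _ _).trans (add_le_add (hM₁ t) ?_)
      exact conv_abs_bound h₁ g₁ t M₁ ht hM₁0 h₁_int (ae_of_all _ hM₁)
    have b2 : |h₂ t| ≤ M₂ + M₂ * H₂ := by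
      rw [e₂ ht]
      refine (abs_add_le _ _).trans (add_le_add (hM₂ t) ?_)
      exact conv_abs_bound h₂ g₂ t M₂ ht hM₂0 h₂_int (ae_of_all _ hM₂)
    calc |h₁ t - h₂ t| ≤ |h₁ t| + |h₂ t| := abs_sub _ _
      _ ≤ (M₁ + M₁ * H₁) + (M₂ + M₂ * H₂) := add_le_add b1 b2
      _ = M₁ * (1 + H₁) + M₂ * (1 + H₂) := by ring
  -- iterate
  set B : ℝ := D * (1 + H₂) with hB
  have hB0 : 0 ≤ B := mul_nonneg hD0 (by linarith)
  set C₀ : ℝ := M₁ * (1 + H₁) + M₂ * (1 + H₂) with hC₀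
  set L : ℝ := B / (1 - k) with hL
  have hL0 : 0 ≤ L := div_nonneg hB0 (le_of_lt h1k)
  set c : ℕ → ℝ := fun n => L + k ^ n * (C₀ - L) with hc
  have hc0 : c 0 = C₀ := by simp [hc]
  have hcs : ∀ n, c (n + 1) = B + k * c n := by
    intro n
    have : B = (1 - k) * L := by rw [hL]; field_simp
    simp only [hc, pow_succ]
    nlinarith [this]
  have hcn : ∀ n, 0 ≤ c n ∧ ∀ᵐ t : ℝ, 0 ≤ t → |h₁ t - h₂ t| ≤ c n := by
    intro n
    induction n with
    | zero =>
      refine ⟨?_, by rw [hc0]; exact base⟩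
      rw [hc0, hC₀]
      have : 0 ≤ M₁ * (1 + H₁) := mul_nonneg hM₁0 (by linarith)
      have : 0 ≤ M₂ * (1 + H₂) := mul_nonneg hM₂0 (by linarith)
      linarith
    | succ n ih =>
      obtain ⟨ih0, ihb⟩ := ih
      constructor
      · rw [hcs n]; positivity
      · rw [hcs n]
        simpa [hB] using step (c n) ih0 ihb
  have hall : ∀ᵐ t : ℝ, ∀ n : ℕ, 0 ≤ t → |h₁ t - h₂ t| ≤ c n :=
    (ae_all_iff).2 fun n => (hcn n).2
  have htend : Filter.Tendsto c Filter.atTop (nhds L) := by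
    have h1 : Filter.Tendsto (fun n : ℕ => k ^ n * (C₀ - L)) Filter.atTop (nhds 0) := by
      simpa using (tendsto_pow_atTop_nhds_zero_of_lt_one hk0 hk).mul_const (C₀ - L)
    simpa using (tendsto_const_nhds (x := L)).add h1
  filter_upwards [hall] with t hct ht
  have hle : |h₁ t - h₂ t| ≤ L := ge_of_tendsto htend
    (Filter.Eventually.of_forall fun n => hct n ht)
  refine hle.trans ?_
  calc L = D * (1 + H₂) / (1 - k) := by rw [hL, hB]
    _ ≤ D * (1 / (1 - k)) / (1 - k) := (div_le_div_iff_of_pos_right h1k).2 (mul_le_mul_of_nonneg_left hH₂k hD0)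
    _ = (1 / (1 - k) ^ 2) * D := by field_simp
end

section
/- Let (a_j)_{j≥0} be a summable sequence of nonnegative reals and let g : ℝ → ℝ be defined by g(t) = a_j for j ≤ t < j+1 (j = 0,1,2,…) and g(t) = 0 for t < 0. For n ≥ 1 define β^1_r = a_r and β^{n+1}_r = Σ_{l=0}^{r} a_l β^n_{r−l}, and let γₙ = rect^{⊗n} be the n-fold convolution of rect with itself. Then for every n ≥ 1 and every t ≥ 0, the n-fold convolution of g satisfies g^{⊗n}(t) = Σ_{r=0}^∞ β^n_r γₙ(t−r), the series converging since only finitely many terms are nonzero for each fixed t. -/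
open MeasureTheory

/-- The rectangular function: `1` on `[0,1)`, `0` otherwise. -/
noncomputable def rect : ℝ → ℝ := fun t => if 0 ≤ t ∧ t < 1 then 1 else 0

/-- `betaCoeff a n r = β^{n+1}_r`, defined by `β^1_r = a_r`,
`β^{n+1}_r = Σ_{l=0}^r a_l β^n_{r-l}`. -/
noncomputable def betaCoeff (a : ℕ → ℝ) : ℕ → ℕ → ℝ
  | 0, r => a r
  | n + 1, r => ∑ l ∈ Finset.range (r + 1), a l * betaCoeff a n (r - l)

namespace PKAux

open Set intervalIntegral
open scoped ENNReal

lemma rect_neg {t : ℝ} (h : t < 0) : rect t = 0 := by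
  unfold rect; rw [if_neg]; push_neg; intro h'; linarith

lemma rect_ge {t : ℝ} (h : 1 ≤ t) : rect t = 0 := by
  unfold rect; rw [if_neg]; push_neg; intro _; linarith

lemma rect_one {t : ℝ} (h0 : 0 ≤ t) (h1 : t < 1) : rect t = 1 := by
  unfold rect; rw [if_pos ⟨h0, h1⟩]

lemma rect_abs_le (t : ℝ) : |rect t| ≤ 1 := by
  unfold rect; split <;> simp

lemma rect_nonneg (t : ℝ) : 0 ≤ rect t := by
  unfold rect; split <;> norm_num

lemma rect_meas : Measurable rect := by
  unfold rect
  exact Measurable.ite (measurableSet_Ico (a := (0:ℝ)) (b := 1)) measurable_const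
    measurable_const

lemma rect_shift_eq_one {x : ℝ} (hx : 0 ≤ x) : rect (x - (⌊x⌋₊ : ℝ)) = 1 := by
  apply rect_one
  · have := Nat.floor_le hx; linarith
  · have := Nat.lt_floor_add_one x; linarith

lemma rect_shift_eq_zero {x : ℝ} (hx : 0 ≤ x) {r : ℕ} (hr : r ≠ ⌊x⌋₊) :
    rect (x - (r : ℝ)) = 0 := by
  rcases lt_or_ge (x - r) 0 with h | h
  · exact rect_neg h
  · rcases lt_or_ge (x - r) 1 with h1 | h1
    · exact absurd ((Nat.floor_eq_iff hx).2 ⟨by linarith, by linarith⟩).symm hr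
    · exact rect_ge h1

/-- bounded measurable functions are interval integrable -/
lemma II {f : ℝ → ℝ} (hm : Measurable f) {C : ℝ} (hC : ∀ x, |f x| ≤ C) (a b : ℝ) :
    IntervalIntegrable f volume a b := by
  rw [intervalIntegrable_iff]
  refine Integrable.mono' (g := fun _ => C)
    (integrableOn_const (ne_of_lt ?_)) hm.aestronglyMeasurable.restrict
    (Filter.Eventually.of_forall fun x => by simpa using hC x)
  rw [Set.uIoc]; exact measure_Ioc_lt_top

lemma integral_Ioc_zero_of_neg {f : ℝ → ℝ} (hf : ∀ x < 0, f x = 0) {a b : ℝ} (hb : b ≤ 0) :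
    ∫ x in Set.Ioc a b, f x = 0 := by
  have hae : ∀ᵐ x ∂(volume.restrict (Set.Ioc a b)), f x = 0 := by
    rw [ae_restrict_iff' measurableSet_Ioc, ae_iff]
    refine measure_mono_null (fun x hx => ?_) (measure_singleton (0 : ℝ))
    rw [Set.mem_setOf_eq, _root_.not_imp] at hx
    obtain ⟨⟨hax, hxb⟩, hfx⟩ := hx
    by_contra hne
    have hx0 : x < 0 := lt_of_le_of_ne (hxb.trans hb) (by simpa using hne)
    exact hfx (hf x hx0)
  exact integral_eq_zero_of_ae hae

lemma gamma_pack (n : ℕ) : Measurable (convIter rect n) ∧ (∀ t, |convIter rect n t| ≤ 1)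
    ∧ (∀ t < 0, convIter rect n t = 0) := by
  induction n with
  | zero => exact ⟨rect_meas, rect_abs_le, fun t ht => rect_neg ht⟩
  | succ n ih =>
    obtain ⟨hm, hb, h0⟩ := ih
    have hii : ∀ a b : ℝ, IntervalIntegrable (convIter rect n) volume a b :=
      fun a b => II hm hb a b
    have hsucc : ∀ t : ℝ, convIter rect (n+1) t
        = if t < 0 then 0 else ∫ τ in (0:ℝ)..t, convIter rect n τ * rect (t - τ) := by
      intro t; rfl
    -- the key formula as a primitive difference
    have hform : ∀ t : ℝ, convIter rect (n+1) t
        = ∫ x in (max (t-1) 0)..t, convIter rect n x := by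
      intro t
      rcases lt_or_ge t 0 with ht | ht
      · rw [hsucc, if_pos ht]
        have hle : max (t-1) 0 = 0 := by
          rw [max_eq_right]; linarith
        rw [hle]
        rw [integral_symm, integral_of_le (le_of_lt ht),
          integral_Ioc_zero_of_neg h0 le_rfl]
        simp
      · rw [hsucc, if_neg (not_lt.2 ht)]
        have hind : ∀ τ : ℝ, convIter rect n τ * rect (t - τ)
            = (Set.Ioc (t-1) t).indicator (convIter rect n) τ := by
          intro τ
          rcases Classical.em (τ ∈ Set.Ioc (t-1) t) with hmem | hmem
          · obtain ⟨hm1, hm2⟩ := hmem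
            rw [Set.indicator_of_mem (Set.mem_Ioc.2 ⟨hm1, hm2⟩),
              rect_one (by linarith) (by linarith), mul_one]
          · rw [Set.indicator_of_notMem hmem]
            rcases lt_or_ge (t - τ) 0 with h | h
            · rw [rect_neg h, mul_zero]
            · have h1 : 1 ≤ t - τ := by
                by_contra hc
                push_neg at hc
                exact hmem (Set.mem_Ioc.2 ⟨by linarith, by linarith⟩)
              rw [rect_ge h1, mul_zero]
        rw [intervalIntegral.integral_congr (fun τ _ => hind τ)]
        have hmx : max (t-1) 0 ≤ t := max_le (by linarith) ht
        rw [integral_of_le ht, integral_of_le hmx,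
          MeasureTheory.setIntegral_indicator measurableSet_Ioc]
        rw [Set.Ioc_inter_Ioc, min_self, sup_comm]
    constructor
    · have : convIter rect (n+1) = fun t =>
          (∫ x in (0:ℝ)..t, convIter rect n x) - ∫ x in (0:ℝ)..(max (t-1) 0), convIter rect n x := by
        funext t
        rw [hform t, ← intervalIntegral.integral_interval_sub_left (hii 0 t) (hii 0 _)]
      rw [this]
      have hc : Continuous fun b : ℝ => ∫ x in (0:ℝ)..b, convIter rect n x :=
        intervalIntegral.continuous_primitive (fun a b => hii a b) 0
      exact (hc.sub (hc.comp ((continuous_id.sub continuous_const).max continuous_const))).measurable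
    constructor
    · intro t
      rcases lt_or_ge t 0 with ht | ht
      · rw [hsucc, if_pos ht]; simp
      · rw [hsucc, if_neg (not_lt.2 ht)]
        have h1 : |∫ τ in (0:ℝ)..t, convIter rect n τ * rect (t - τ)|
            ≤ ∫ τ in (0:ℝ)..t, |convIter rect n τ * rect (t - τ)| :=
          intervalIntegral.abs_integral_le_integral_abs ht
        have hiprod : IntervalIntegrable (fun τ => |convIter rect n τ * rect (t - τ)|) volume 0 t := by
          refine II ((hm.mul (rect_meas.comp (measurable_const.sub measurable_id))).abs)
            (C := 1) (fun x => ?_) 0 t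
          show |(|convIter rect n x * rect (t - x)|)| ≤ 1
          rw [abs_abs, abs_mul]
          calc |convIter rect n x| * |rect (t - x)| ≤ 1 * 1 :=
                mul_le_mul (hb x) (rect_abs_le _) (abs_nonneg _) zero_le_one
            _ = 1 := by norm_num
        have hirect : IntervalIntegrable (fun τ => rect (t - τ)) volume 0 t :=
          II (rect_meas.comp (measurable_const.sub measurable_id)) (fun x => rect_abs_le _) 0 t
        have h2 : ∫ τ in (0:ℝ)..t, |convIter rect n τ * rect (t - τ)|
            ≤ ∫ τ in (0:ℝ)..t, rect (t - τ) := by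
          refine intervalIntegral.integral_mono_on ht hiprod hirect (fun x _ => ?_)
          rw [abs_mul, abs_of_nonneg (rect_nonneg _)]
          calc |convIter rect n x| * rect (t - x) ≤ 1 * rect (t - x) :=
                mul_le_mul_of_nonneg_right (hb x) (rect_nonneg _)
            _ = rect (t - x) := one_mul _
        have h3 : ∫ τ in (0:ℝ)..t, rect (t - τ) ≤ 1 := by
          rw [intervalIntegral.integral_comp_sub_left rect t]
          have hrect_ind : rect = (Set.Ico (0:ℝ) 1).indicator (fun _ => (1:ℝ)) := by
            funext x
            unfold rect
            rcases Classical.em (0 ≤ x ∧ x < 1) with h | h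
            · rw [if_pos h]
              exact (Set.indicator_of_mem (Set.mem_Ico.2 h) (fun _ => (1:ℝ))).symm
            · rw [if_neg h]
              exact (Set.indicator_of_notMem (fun hc => h (Set.mem_Ico.1 hc)) (fun _ => (1:ℝ))).symm
          have htt : t - t ≤ t - 0 := by linarith
          rw [integral_of_le htt, hrect_ind,
            MeasureTheory.setIntegral_indicator measurableSet_Ico,
            MeasureTheory.setIntegral_const, smul_eq_mul, mul_one]
          have hμ : volume (Set.Ioc (t-t) (t-0) ∩ Set.Ico (0:ℝ) 1) ≤ 1 := by
            refine le_trans (measure_mono Set.inter_subset_right) ?_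
            rw [Real.volume_Ico]; norm_num
          calc (volume (Set.Ioc (t-t) (t-0) ∩ Set.Ico (0:ℝ) 1)).toReal
              ≤ (1 : ENNReal).toReal := ENNReal.toReal_mono (by norm_num) hμ
            _ = 1 := by norm_num
        calc |∫ τ in (0:ℝ)..t, convIter rect n τ * rect (t - τ)| ≤ _ := h1
          _ ≤ _ := h2
          _ ≤ 1 := h3
    · intro t ht
      rw [hsucc, if_pos ht]

/-- The key shifted-convolution integral identity. -/
lemma key_integral {u : ℝ → ℝ} (hm : Measurable u) {C : ℝ} (hC : ∀ x, |u x| ≤ C)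
    (h0 : ∀ x < 0, u x = 0) (r l : ℕ) (t : ℝ) :
    ∫ τ in (0:ℝ)..t, u (τ - (r:ℝ)) * rect (t - τ - (l:ℝ)) = cconv u rect (t - r - l) := by
  have hrw : ∀ τ : ℝ, u (τ - (r:ℝ)) * rect (t - τ - (l:ℝ))
      = (fun σ => u σ * rect ((t - r - l) - σ)) (τ - (r:ℝ)) := by
    intro τ
    simp only
    congr 2
    ring
  rcases lt_or_ge (t - r - l) 0 with hs | hs
  · have hz : ∀ τ : ℝ, u (τ - (r:ℝ)) * rect (t - τ - (l:ℝ)) = 0 := by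
      intro τ
      rcases lt_or_ge (τ - (r:ℝ)) 0 with h | h
      · rw [h0 _ h, zero_mul]
      · rw [rect_neg (by linarith), mul_zero]
    rw [cconv, if_pos hs]
    simp only [hz, intervalIntegral.integral_zero]
  · set s := t - (r:ℝ) - (l:ℝ) with hsdef
    set h : ℝ → ℝ := fun σ => u σ * rect (s - σ) with hdef
    have hhm : Measurable h := hm.mul (rect_meas.comp (measurable_const.sub measurable_id))
    have hCnn : 0 ≤ C := le_trans (abs_nonneg _) (hC 0)
    have hhb : ∀ x, |h x| ≤ C := by
      intro x
      rw [hdef]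
      simp only [abs_mul]
      calc |u x| * |rect (s - x)| ≤ C * 1 :=
            mul_le_mul (hC x) (rect_abs_le _) (abs_nonneg _) hCnn
        _ = C := mul_one C
    have hhii : ∀ a b : ℝ, IntervalIntegrable h volume a b := fun a b => II hhm hhb a b
    have step1 : ∫ τ in (0:ℝ)..t, u (τ - (r:ℝ)) * rect (t - τ - (l:ℝ))
        = ∫ σ in (0 - (r:ℝ))..(t - (r:ℝ)), h σ := by
      rw [intervalIntegral.integral_congr (g := fun τ => h (τ - (r:ℝ)))
        (fun τ _ => hrw τ)]
      exact intervalIntegral.integral_comp_sub_right h (r:ℝ)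
    have hr0 : (0:ℝ) - (r:ℝ) ≤ 0 := by
      have : (0:ℝ) ≤ (r:ℝ) := Nat.cast_nonneg r
      linarith
    have hst : s ≤ t - (r:ℝ) := by
      have : (0:ℝ) ≤ (l:ℝ) := Nat.cast_nonneg l
      rw [hsdef]; linarith
    have split1 : ∫ σ in (0 - (r:ℝ))..(t - (r:ℝ)), h σ
        = (∫ σ in (0 - (r:ℝ))..(0:ℝ), h σ) + ∫ σ in (0:ℝ)..(t - (r:ℝ)), h σ :=
      (intervalIntegral.integral_add_adjacent_intervals (hhii _ _) (hhii _ _)).symm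
    have split2 : ∫ σ in (0:ℝ)..(t - (r:ℝ)), h σ
        = (∫ σ in (0:ℝ)..s, h σ) + ∫ σ in s..(t - (r:ℝ)), h σ :=
      (intervalIntegral.integral_add_adjacent_intervals (hhii _ _) (hhii _ _)).symm
    have hz1 : ∫ σ in (0 - (r:ℝ))..(0:ℝ), h σ = 0 := by
      rw [integral_of_le hr0]
      refine integral_Ioc_zero_of_neg (fun x hx => ?_) le_rfl
      rw [hdef]; simp only; rw [h0 x hx, zero_mul]
    have hz2 : ∫ σ in s..(t - (r:ℝ)), h σ = 0 := by
      rw [integral_of_le hst]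
      rw [MeasureTheory.setIntegral_congr_fun measurableSet_Ioc
        (g := fun _ => (0:ℝ)) (fun x hx => ?_)]
      · simp
      · rcases hx with ⟨hx1, _⟩
        rw [hdef]; simp only; rw [rect_neg (by linarith), mul_zero]
    have hcc : cconv u rect s = ∫ σ in (0:ℝ)..s, h σ := by
      rw [cconv, if_neg (not_lt.2 hs)]
    rw [step1, split1, split2, hz1, hz2, hcc]
    ring

/-- Triangle reindexing of double sums. -/
lemma tri (f : ℕ → ℕ → ℝ) (N : ℕ) :
    ∑ r ∈ Finset.range (N+1), ∑ l ∈ Finset.range (N+1-r), f r l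
      = ∑ s ∈ Finset.range (N+1), ∑ l ∈ Finset.range (s+1), f (s-l) l := by
  induction N with
  | zero => simp
  | succ N ih =>
    have step : ∀ r ∈ Finset.range (N+2), ∑ l ∈ Finset.range (N+2-r), f r l
        = (∑ l ∈ Finset.range (N+1-r), f r l) + f r (N+1-r) := by
      intro r hr
      rw [Finset.mem_range] at hr
      have he : N+2-r = (N+1-r)+1 := by omega
      rw [he, Finset.sum_range_succ]
    rw [Finset.sum_congr rfl step, Finset.sum_add_distrib]
    have e1 : ∑ r ∈ Finset.range (N+2), ∑ l ∈ Finset.range (N+1-r), f r l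
        = ∑ r ∈ Finset.range (N+1), ∑ l ∈ Finset.range (N+1-r), f r l := by
      rw [Finset.sum_range_succ]
      simp
    have e2 : ∑ r ∈ Finset.range (N+2), f r (N+1-r)
        = ∑ l ∈ Finset.range (N+2), f (N+1-l) l := by
      rw [← Finset.sum_range_reflect (fun r => f r (N+1-r)) (N+2)]
      refine Finset.sum_congr rfl (fun l hl => ?_)
      rw [Finset.mem_range] at hl
      congr 1 <;> omega
    rw [e1, e2, ih,
      Finset.sum_range_succ (fun s => ∑ l ∈ Finset.range (s+1), f (s-l) l) (N+1)]

lemma main (a : ℕ → ℝ) (g : ℝ → ℝ)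
    (hg : ∀ t : ℝ, g t = if t < 0 then 0 else a ⌊t⌋₊) :
    ∀ m : ℕ, ∀ t : ℝ, 0 ≤ t →
      convIter g m t = ∑' r : ℕ, betaCoeff a m r * convIter rect m (t - (r : ℝ)) := by
  intro m
  induction m with
  | zero =>
    intro t ht
    have hz : ∀ r : ℕ, r ≠ ⌊t⌋₊ → betaCoeff a 0 r * convIter rect 0 (t - (r:ℝ)) = 0 := by
      intro r hr
      show betaCoeff a 0 r * rect (t - (r:ℝ)) = 0
      rw [rect_shift_eq_zero ht hr, mul_zero]
    rw [tsum_eq_single ⌊t⌋₊ hz]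
    show g t = betaCoeff a 0 ⌊t⌋₊ * rect (t - (⌊t⌋₊:ℝ))
    rw [rect_shift_eq_one ht, mul_one, hg, if_neg (not_lt.2 ht)]
    rfl
  | succ m ih =>
    intro t ht
    set N := ⌊t⌋₊ with hN
    obtain ⟨hm, hb, h0⟩ := gamma_pack m
    obtain ⟨hm', hb', h0'⟩ := gamma_pack (m+1)
    have htN : t < (N:ℝ) + 1 := Nat.lt_floor_add_one t
    -- finite-sum representations on [0, t]
    have hfin : ∀ τ : ℝ, 0 ≤ τ → τ ≤ t → convIter g m τ
        = ∑ r ∈ Finset.range (N+1), betaCoeff a m r * convIter rect m (τ - (r:ℝ)) := by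
      intro τ h0τ hτt
      rw [ih τ h0τ]
      refine tsum_eq_sum (fun r hr => ?_)
      rw [Finset.mem_range, not_lt] at hr
      have : (N:ℝ) + 1 ≤ (r:ℝ) := by exact_mod_cast hr
      rw [h0 _ (by linarith), mul_zero]
    have hgfin : ∀ τ : ℝ, 0 ≤ τ → τ ≤ t → g (t - τ)
        = ∑ l ∈ Finset.range (N+1), a l * rect (t - τ - (l:ℝ)) := by
      intro τ h0τ hτt
      have h1 : 0 ≤ t - τ := by linarith
      have hKN : ⌊t - τ⌋₊ ≤ N := Nat.floor_le_floor (by linarith)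
      rw [hg, if_neg (not_lt.2 h1)]
      symm
      rw [Finset.sum_eq_single ⌊t - τ⌋₊ (fun l _ hl => by
          rw [rect_shift_eq_zero h1 hl, mul_zero])
        (fun hmem => absurd (Finset.mem_range.2 (by omega)) hmem)]
      rw [rect_shift_eq_one h1, mul_one]
    -- measurability / integrability of the pieces
    have hint : ∀ r l : ℕ, IntervalIntegrable
        (fun τ => convIter rect m (τ - (r:ℝ)) * rect (t - τ - (l:ℝ))) volume 0 t := by
      intro r l
      refine II ((hm.comp (measurable_id.sub measurable_const)).mul
        (rect_meas.comp ((measurable_const.sub measurable_id).sub measurable_const)))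
        (C := 1) (fun x => ?_) 0 t
      show |convIter rect m (x - (r:ℝ)) * rect (t - x - (l:ℝ))| ≤ 1
      rw [abs_mul]
      calc |convIter rect m (x - (r:ℝ))| * |rect (t - x - (l:ℝ))| ≤ 1 * 1 :=
            mul_le_mul (hb _) (rect_abs_le _) (abs_nonneg _) zero_le_one
        _ = 1 := by norm_num
    -- main computation
    have hstart : convIter g (m+1) t
        = ∫ τ in (0:ℝ)..t, convIter g m τ * g (t - τ) := by
      show cconv (convIter g m) g t = _
      rw [cconv, if_neg (not_lt.2 ht)]
    have hcongr : ∫ τ in (0:ℝ)..t, convIter g m τ * g (t - τ)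
        = ∫ τ in (0:ℝ)..t, ∑ r ∈ Finset.range (N+1), ∑ l ∈ Finset.range (N+1),
            (betaCoeff a m r * a l) * (convIter rect m (τ - (r:ℝ)) * rect (t - τ - (l:ℝ))) := by
      refine intervalIntegral.integral_congr (fun τ hτ => ?_)
      rw [Set.uIcc_of_le ht] at hτ
      obtain ⟨h0τ, hτt⟩ := hτ
      rw [hfin τ h0τ hτt, hgfin τ h0τ hτt, Finset.sum_mul_sum]
      exact Finset.sum_congr rfl fun r _ => Finset.sum_congr rfl fun l _ => by ring
    have hI2 : ∀ r l : ℕ, IntervalIntegrable (fun τ => betaCoeff a m r * a l *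
        (convIter rect m (τ - (r:ℝ)) * rect (t - τ - (l:ℝ)))) volume 0 t :=
      fun r l => (hint r l).const_mul _
    have hI1 : ∀ r ∈ Finset.range (N+1), IntervalIntegrable (fun τ => ∑ l ∈ Finset.range (N+1),
        betaCoeff a m r * a l * (convIter rect m (τ - (r:ℝ)) * rect (t - τ - (l:ℝ))))
        volume 0 t := by
      intro r _
      have h := IntervalIntegrable.sum (μ := volume) (a := 0) (b := t) (Finset.range (N+1))
        (f := fun l τ => betaCoeff a m r * a l *
          (convIter rect m (τ - (r:ℝ)) * rect (t - τ - (l:ℝ)))) (fun l _ => hI2 r l)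
      have he : (∑ l ∈ Finset.range (N+1), fun τ => betaCoeff a m r * a l *
          (convIter rect m (τ - (r:ℝ)) * rect (t - τ - (l:ℝ))))
          = fun τ => ∑ l ∈ Finset.range (N+1), betaCoeff a m r * a l *
          (convIter rect m (τ - (r:ℝ)) * rect (t - τ - (l:ℝ))) := by
        funext τ
        exact Finset.sum_apply τ _ _
      rwa [he] at h
    have hswap : ∫ τ in (0:ℝ)..t, ∑ r ∈ Finset.range (N+1), ∑ l ∈ Finset.range (N+1),
            (betaCoeff a m r * a l) * (convIter rect m (τ - (r:ℝ)) * rect (t - τ - (l:ℝ)))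
        = ∑ r ∈ Finset.range (N+1), ∑ l ∈ Finset.range (N+1),
            (betaCoeff a m r * a l) *
              ∫ τ in (0:ℝ)..t, convIter rect m (τ - (r:ℝ)) * rect (t - τ - (l:ℝ)) := by
      refine (intervalIntegral.integral_finset_sum hI1).trans ?_
      refine Finset.sum_congr rfl fun r _ => ?_
      refine (intervalIntegral.integral_finset_sum (fun l _ => hI2 r l)).trans ?_
      exact Finset.sum_congr rfl fun l _ => intervalIntegral.integral_const_mul _ _
    have hkey : ∀ r l : ℕ,
        (∫ τ in (0:ℝ)..t, convIter rect m (τ - (r:ℝ)) * rect (t - τ - (l:ℝ)))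
          = convIter rect (m+1) (t - (r:ℝ) - (l:ℝ)) :=
      fun r l => key_integral hm hb h0 r l t
    -- put it together and reindex
    rw [hstart, hcongr, hswap]
    simp only [hkey]
    -- shrink inner sums to triangles
    have hshrink : ∀ r ∈ Finset.range (N+1),
        ∑ l ∈ Finset.range (N+1),
          (betaCoeff a m r * a l) * convIter rect (m+1) (t - (r:ℝ) - (l:ℝ))
        = ∑ l ∈ Finset.range (N+1-r),
          (betaCoeff a m r * a l) * convIter rect (m+1) (t - (r:ℝ) - (l:ℝ)) := by
      intro r hr
      rw [Finset.mem_range] at hr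
      refine (Finset.sum_subset (Finset.range_subset_range.2 (by omega)) (fun l hl hl' => ?_)).symm
      rw [Finset.mem_range] at hl
      rw [Finset.mem_range, not_lt] at hl'
      have hsum : N + 1 ≤ r + l := by omega
      have : (N:ℝ) + 1 ≤ (r:ℝ) + (l:ℝ) := by exact_mod_cast hsum
      rw [h0' _ (by linarith), mul_zero]
    rw [Finset.sum_congr rfl hshrink,
      tri (fun r l => (betaCoeff a m r * a l) * convIter rect (m+1) (t - (r:ℝ) - (l:ℝ))) N]
    have hregroup : ∀ s ∈ Finset.range (N+1),
        ∑ l ∈ Finset.range (s+1),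
          (betaCoeff a m (s-l) * a l) * convIter rect (m+1) (t - ((s-l:ℕ):ℝ) - (l:ℝ))
        = betaCoeff a (m+1) s * convIter rect (m+1) (t - (s:ℝ)) := by
      intro s _
      have : ∀ l ∈ Finset.range (s+1),
          (betaCoeff a m (s-l) * a l) * convIter rect (m+1) (t - ((s-l:ℕ):ℝ) - (l:ℝ))
          = (a l * betaCoeff a m (s-l)) * convIter rect (m+1) (t - (s:ℝ)) := by
        intro l hl
        rw [Finset.mem_range] at hl
        have hls : l ≤ s := by omega
        have hcast : ((s-l:ℕ):ℝ) = (s:ℝ) - (l:ℝ) := by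
          push_cast [hls]; ring
        rw [hcast]
        ring_nf
      rw [Finset.sum_congr rfl this, ← Finset.sum_mul]
      rfl
    rw [Finset.sum_congr rfl hregroup]
    refine (tsum_eq_sum (fun s hs => ?_)).symm
    rw [Finset.mem_range, not_lt] at hs
    have : (N:ℝ) + 1 ≤ (s:ℝ) := by exact_mod_cast hs
    rw [h0' _ (by linarith), mul_zero]

end PKAux

/-- for the piecewise-constant kernel `g(t) = a_j` on `[j, j+1)`,
`g^{⊗n}(t) = Σ_{r=0}^∞ β^n_r γₙ(t - r)` for every `n ≥ 1` and `t ≥ 0`,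
where `γₙ = rect^{⊗n}`. -/
theorem piecewise_kernel_nfold_convolution (a : ℕ → ℝ)
    (ha_nonneg : ∀ j : ℕ, 0 ≤ a j) (ha_sum : Summable a)
    (g : ℝ → ℝ) (hg : ∀ t : ℝ, g t = if t < 0 then 0 else a ⌊t⌋₊) :
    ∀ n : ℕ, 1 ≤ n → ∀ t : ℝ, 0 ≤ t →
      convIter g (n - 1) t =
        ∑' r : ℕ, betaCoeff a (n - 1) r * convIter rect (n - 1) (t - (r : ℝ)) := by
  intro n _ t ht
  exact PKAux.main a g hg (n - 1) t ht
end

section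
/- Let (a_j)_{j≥0} be a summable sequence of nonnegative reals with Σ_j a_j = k where 0 < k < 1, and let g : ℝ → ℝ be defined by g(t) = a_j for j ≤ t < j+1 (j = 0,1,2,…) and g(t) = 0 for t < 0. Define β^1_r = a_r, β^{n+1}_r = Σ_{l=0}^{r} a_l β^n_{r−l}, and γₙ = rect^{⊗n}. Then the unique integrable solution h, vanishing on (−∞,0), of h(t) = g(t) + ∫₀ᵗ h(τ) g(t−τ) dτ is given for almost every t ≥ 0 by the convergent double series h(t) = Σ_{n=1}^∞ Σ_{r=0}^∞ β^n_r γₙ(t−r). -/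
open MeasureTheory
open scoped ENNReal

namespace Aux11

lemma rect_nonneg (t : ℝ) : 0 ≤ rect t := by unfold rect; split <;> norm_num

lemma rect_le_one (t : ℝ) : rect t ≤ 1 := by unfold rect; split <;> norm_num

lemma rect_neg {t : ℝ} (h : t < 0) : rect t = 0 := by
  unfold rect; rw [if_neg]; rintro ⟨h0, _⟩; linarith

lemma measurable_rect : Measurable rect := by
  have : rect = (Set.Ico (0:ℝ) 1).indicator (fun _ => (1:ℝ)) := by
    funext t
    simp only [Set.indicator, Set.mem_Ico, rect]
  rw [this]
  exact (measurable_const).indicator measurableSet_Ico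

lemma cconv_of_nonneg {u v : ℝ → ℝ} {t : ℝ} (ht : 0 ≤ t) :
    cconv u v t = ∫ τ in Set.Ioc (0:ℝ) t, u τ * v (t - τ) := by
  rw [cconv, if_neg (not_lt.2 ht), intervalIntegral.integral_of_le ht]

lemma cconv_neg {u v : ℝ → ℝ} {t : ℝ} (ht : t < 0) : cconv u v t = 0 := by
  rw [cconv, if_pos ht]

/-- key formula: convolution with rect is an integral over a moving window. -/
lemma cconv_rect_apply (u : ℝ → ℝ) {t : ℝ} (ht : 0 ≤ t) :
    cconv u rect t = ∫ τ in (max 0 (t-1))..t, u τ := by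
  rw [cconv_of_nonneg ht]
  have h1 : (fun τ => u τ * rect (t - τ)) = fun τ => (Set.Ioc (t-1) t).indicator u τ := by
    funext τ
    by_cases hτ : τ ∈ Set.Ioc (t-1) t
    · rw [Set.indicator_of_mem hτ]
      obtain ⟨h1, h2⟩ := hτ
      have : rect (t - τ) = 1 := by unfold rect; rw [if_pos ⟨by linarith, by linarith⟩]
      rw [this, mul_one]
    · rw [Set.indicator_of_notMem hτ]
      rw [Set.mem_Ioc, not_and_or] at hτ
      have : rect (t - τ) = 0 := by
        unfold rect; rw [if_neg]
        rintro ⟨ha, hb⟩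
        rcases hτ with h | h
        · push_neg at h; linarith
        · push_neg at h; linarith
      rw [this, mul_zero]
  rw [h1, setIntegral_indicator measurableSet_Ioc, Set.Ioc_inter_Ioc, min_self,
    intervalIntegral.integral_of_le (max_le ht (by linarith))]

/-- All basic properties of γ_{n+1} = convIter rect n, by induction. -/
lemma gammaProp (n : ℕ) :
    Measurable (convIter rect n) ∧ (∀ t, 0 ≤ convIter rect n t) ∧
    (∀ t, convIter rect n t ≤ 1) ∧ (∀ t, t < 0 → convIter rect n t = 0) ∧
    (∀ t, (n:ℝ)+1 < t → convIter rect n t = 0) ∧ Integrable (convIter rect n) := by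
  induction n with
  | zero =>
    refine ⟨measurable_rect, rect_nonneg, rect_le_one, fun t ht => rect_neg ht, ?_, ?_⟩
    · intro t ht
      show rect t = 0
      unfold rect; rw [if_neg]; rintro ⟨_, h2⟩; norm_num at ht; linarith
    · show Integrable rect volume
      have h : rect = (Set.Ico (0:ℝ) 1).indicator (fun _ => (1:ℝ)) := by
        funext t; simp only [Set.indicator, Set.mem_Ico, rect]
      rw [h, integrable_indicator_iff measurableSet_Ico]
      refine integrableOn_const (lt_top_iff_ne_top.1 ?_)
      rw [Real.volume_Ico]; exact ENNReal.ofReal_lt_top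
  | succ n ih =>
    obtain ⟨hm, h0, h1, hneg, hsupp, hint⟩ := ih
    set γ := convIter rect n with hγ
    have hii : ∀ a b : ℝ, IntervalIntegrable γ volume a b := fun a b => hint.intervalIntegrable
    have hF : Continuous fun b => ∫ x in (0:ℝ)..b, γ x :=
      intervalIntegral.continuous_primitive hii 0
    have happly : ∀ t : ℝ, 0 ≤ t → convIter rect (n+1) t =
        (∫ x in (0:ℝ)..t, γ x) - ∫ x in (0:ℝ)..(max 0 (t-1)), γ x := by
      intro t ht
      show cconv γ rect t = _
      rw [cconv_rect_apply γ ht,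
        ← intervalIntegral.integral_interval_sub_left (hii 0 t) (hii 0 (max 0 (t-1)))]
    have heq : convIter rect (n+1) = fun t => if t < 0 then 0 else
        (∫ x in (0:ℝ)..t, γ x) - ∫ x in (0:ℝ)..(max 0 (t-1)), γ x := by
      funext t
      by_cases ht : t < 0
      · rw [if_pos ht]; exact cconv_neg ht
      · rw [if_neg ht]; exact happly t (not_lt.1 ht)
    have hwindow : ∀ t : ℝ, 0 ≤ t → convIter rect (n+1) t = ∫ x in Set.Ioc (max 0 (t-1)) t, γ x := by
      intro t ht
      show cconv γ rect t = _
      rw [cconv_rect_apply γ ht, intervalIntegral.integral_of_le (max_le ht (by linarith))]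
    have hmeas : Measurable (convIter rect (n+1)) := by
      rw [heq]
      exact Measurable.ite measurableSet_Iio measurable_const
        ((hF.measurable).sub ((hF.comp (continuous_const.max (continuous_id.sub continuous_const))).measurable))
    have hnonneg : ∀ t, 0 ≤ convIter rect (n+1) t := by
      intro t
      by_cases ht : t < 0
      · show (0:ℝ) ≤ cconv γ rect t
        rw [cconv_neg ht]
      · rw [hwindow t (not_lt.1 ht)]
        exact setIntegral_nonneg measurableSet_Ioc (fun x _ => h0 x)
    have hle : ∀ t, convIter rect (n+1) t ≤ 1 := by
      intro t
      by_cases ht : t < 0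
      · show cconv γ rect t ≤ 1
        rw [cconv_neg ht]; norm_num
      · have ht' := not_lt.1 ht
        rw [hwindow t ht']
        calc ∫ x in Set.Ioc (max 0 (t-1)) t, γ x ≤ ∫ _x in Set.Ioc (max 0 (t-1)) t, (1:ℝ) := by
              apply setIntegral_mono_on hint.integrableOn (integrableOn_const (lt_top_iff_ne_top.1 ?_))
                measurableSet_Ioc (fun x _ => h1 x)
              rw [Real.volume_Ioc]; exact ENNReal.ofReal_lt_top
          _ = (t - max 0 (t-1)) := by
              rw [setIntegral_const, Real.volume_real_Ioc_of_le (max_le ht' (by linarith)), smul_eq_mul,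
                mul_one]
          _ ≤ 1 := by
              have := le_max_right 0 (t-1); linarith [le_max_right (0:ℝ) (t-1)]
    have hsupp' : ∀ t, ((n:ℝ)+1)+1 < t → convIter rect (n+1) t = 0 := by
      intro t ht
      have hn : (0:ℝ) ≤ (n:ℝ) := Nat.cast_nonneg n
      have ht0 : (0:ℝ) ≤ t := by linarith
      rw [hwindow t (by linarith)]
      apply setIntegral_eq_zero_of_forall_eq_zero
      intro x hx
      apply hsupp
      have : t - 1 ≤ x := le_trans (le_max_right 0 (t-1)) (le_of_lt hx.1)
      linarith
    have hIntble : Integrable (convIter rect (n+1)) := by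
      have hbd : Integrable ((Set.Icc (0:ℝ) ((n:ℝ)+1+1)).indicator (fun _ => (1:ℝ))) := by
        rw [integrable_indicator_iff measurableSet_Icc]
        refine integrableOn_const (lt_top_iff_ne_top.1 ?_)
        rw [Real.volume_Icc]; exact ENNReal.ofReal_lt_top
      apply Integrable.mono' hbd hmeas.aestronglyMeasurable
      apply Filter.Eventually.of_forall
      intro t
      rw [Real.norm_eq_abs, abs_of_nonneg (hnonneg t)]
      by_cases hmem : t ∈ Set.Icc (0:ℝ) ((n:ℝ)+1+1)
      · rw [Set.indicator_of_mem hmem]; exact hle t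
      · rw [Set.indicator_of_notMem hmem]
        rw [Set.mem_Icc, not_and_or] at hmem
        rcases hmem with h | h
        · push_neg at h
          have h0' : cconv γ rect t = 0 := cconv_neg h
          show cconv γ rect t ≤ 0
          rw [h0']
        · push_neg at h
          rw [hsupp' t h]
    refine ⟨hmeas, hnonneg, hle, fun t ht => cconv_neg ht, ?_, hIntble⟩
    intro t ht
    apply hsupp' t
    push_cast at ht
    linarith

lemma gamma_lintegral_le (n : ℕ) :
    (∫⁻ t, ENNReal.ofReal (convIter rect n t)) ≤ ENNReal.ofReal ((n:ℝ)+1) := by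
  obtain ⟨hm, h0, h1, hneg, hsupp, hint⟩ := gammaProp n
  have hpt : ∀ t, ENNReal.ofReal (convIter rect n t) ≤
      (Set.Icc (0:ℝ) ((n:ℝ)+1)).indicator (fun _ => (1:ℝ≥0∞)) t := by
    intro t
    by_cases hmem : t ∈ Set.Icc (0:ℝ) ((n:ℝ)+1)
    · rw [Set.indicator_of_mem hmem]
      exact ENNReal.ofReal_le_one.2 (h1 t)
    · rw [Set.indicator_of_notMem hmem]
      rw [Set.mem_Icc, not_and_or] at hmem
      rcases hmem with h | h
      · push_neg at h; rw [hneg t h]; simp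
      · push_neg at h; rw [hsupp t h]; simp
  calc (∫⁻ t, ENNReal.ofReal (convIter rect n t))
      ≤ ∫⁻ t, (Set.Icc (0:ℝ) ((n:ℝ)+1)).indicator (fun _ => (1:ℝ≥0∞)) t := lintegral_mono hpt
    _ = volume (Set.Icc (0:ℝ) ((n:ℝ)+1)) := lintegral_indicator_one measurableSet_Icc
    _ = ENNReal.ofReal ((n:ℝ)+1) := by rw [Real.volume_Icc]; norm_num

variable {a : ℕ → ℝ}

lemma beta_nonneg (ha0 : ∀ j, 0 ≤ a j) : ∀ n r, 0 ≤ betaCoeff a n r := by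
  intro n
  induction n with
  | zero => intro r; exact ha0 r
  | succ n ih =>
    intro r
    apply Finset.sum_nonneg
    intro l _
    exact mul_nonneg (ha0 l) (ih (r - l))

lemma beta_summable_tsum (ha0 : ∀ j, 0 ≤ a j) (haS : Summable a) : ∀ n : ℕ,
    Summable (betaCoeff a n) ∧ (∑' r, betaCoeff a n r) = (∑' j, a j)^(n+1) := by
  have hnorm : ∀ {f : ℕ → ℝ}, (∀ j, 0 ≤ f j) → Summable f → Summable (fun j => ‖f j‖) := by
    intro f hf hS
    have : (fun j => ‖f j‖) = f := by funext j; exact Real.norm_of_nonneg (hf j)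
    rw [this]; exact hS
  intro n
  induction n with
  | zero => exact ⟨haS, by rw [pow_one]; exact tsum_congr (fun r => rfl)⟩
  | succ n ih =>
    obtain ⟨ihS, ihT⟩ := ih
    have hfa := hnorm ha0 haS
    have hfb := hnorm (beta_nonneg ha0 n) ihS
    constructor
    · exact (summable_norm_sum_mul_range_of_summable_norm hfa hfb).of_norm
    · have := tsum_mul_tsum_eq_tsum_sum_range_of_summable_norm hfa hfb
      show (∑' r, ∑ l ∈ Finset.range (r + 1), a l * betaCoeff a n (r - l)) = _
      rw [← this, ihT, ← pow_succ']

lemma measurable_tsum' {f : ℕ → ℝ → ℝ} (hm : ∀ r, Measurable (f r))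
    (hs : ∀ t, Summable (fun r => f r t)) :
    Measurable fun t => ∑' r, f r t := by
  apply measurable_of_tendsto_metrizable' Filter.atTop
    (f := fun N => fun t => ∑ r ∈ Finset.range N, f r t)
  · intro N
    exact Finset.measurable_sum _ (fun r _ => hm r)
  · rw [tendsto_pi_nhds]
    intro t
    exact (hs t).hasSum.tendsto_sum_nat

noncomputable def auxH (a : ℕ → ℝ) (n : ℕ) : ℝ → ℝ :=
  fun t => ∑' r : ℕ, betaCoeff a n r * convIter rect n (t - (r:ℝ))

noncomputable def auxh (a : ℕ → ℝ) : ℝ → ℝ := fun t => ∑' n : ℕ, auxH a n t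

lemma H_term_summable (ha0 : ∀ j, 0 ≤ a j) (haS : Summable a) (n : ℕ) (t : ℝ) :
    Summable (fun r : ℕ => betaCoeff a n r * convIter rect n (t - (r:ℝ))) := by
  apply Summable.of_nonneg_of_le
    (fun r => mul_nonneg (beta_nonneg ha0 n r) ((gammaProp n).2.1 _))
    (fun r => ?_) (beta_summable_tsum ha0 haS n).1
  calc betaCoeff a n r * convIter rect n (t - (r:ℝ)) ≤ betaCoeff a n r * 1 :=
        mul_le_mul_of_nonneg_left ((gammaProp n).2.2.1 _) (beta_nonneg ha0 n r)
    _ = betaCoeff a n r := mul_one _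

lemma H_nonneg (ha0 : ∀ j, 0 ≤ a j) (n : ℕ) (t : ℝ) : 0 ≤ auxH a n t :=
  tsum_nonneg (fun r => mul_nonneg (beta_nonneg ha0 n r) ((gammaProp n).2.1 _))

lemma H_le (ha0 : ∀ j, 0 ≤ a j) (haS : Summable a) (n : ℕ) (t : ℝ) : auxH a n t ≤ (∑' j, a j)^(n+1) := by
  rw [← (beta_summable_tsum ha0 haS n).2]
  apply Summable.tsum_le_tsum _ (H_term_summable ha0 haS n t) (beta_summable_tsum ha0 haS n).1
  intro r
  calc betaCoeff a n r * convIter rect n (t - (r:ℝ)) ≤ betaCoeff a n r * 1 :=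
        mul_le_mul_of_nonneg_left ((gammaProp n).2.2.1 _) (beta_nonneg ha0 n r)
    _ = betaCoeff a n r := mul_one _

lemma H_neg (n : ℕ) (t : ℝ) (ht : t < 0) : auxH a n t = 0 := by
  unfold auxH
  have : ∀ r : ℕ, betaCoeff a n r * convIter rect n (t - (r:ℝ)) = 0 := by
    intro r
    rw [(gammaProp n).2.2.2.1 _ (by
      have : (0:ℝ) ≤ (r:ℝ) := Nat.cast_nonneg r
      linarith), mul_zero]
  simp only [this, tsum_zero]

lemma H_meas (ha0 : ∀ j, 0 ≤ a j) (haS : Summable a) (n : ℕ) : Measurable (auxH a n) := by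
  apply measurable_tsum' (fun r => ?_) (fun t => H_term_summable ha0 haS n t)
  exact (measurable_const.mul ((gammaProp n).1.comp (measurable_id.sub measurable_const)))

lemma H_ofReal (ha0 : ∀ j, 0 ≤ a j) (haS : Summable a) (n : ℕ) (t : ℝ) :
    ENNReal.ofReal (auxH a n t) =
      ∑' r : ℕ, ENNReal.ofReal (betaCoeff a n r) *
        ENNReal.ofReal (convIter rect n (t - (r:ℝ))) := by
  unfold auxH
  rw [ENNReal.ofReal_tsum_of_nonneg
    (fun r => mul_nonneg (beta_nonneg ha0 n r) ((gammaProp n).2.1 _))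
    (H_term_summable ha0 haS n t)]
  congr 1
  funext r
  exact ENNReal.ofReal_mul (beta_nonneg ha0 n r)

lemma H_lintegral (ha0 : ∀ j, 0 ≤ a j) (haS : Summable a) (n : ℕ) :
    (∫⁻ t, ENNReal.ofReal (auxH a n t)) ≤
      ENNReal.ofReal ((∑' j, a j)^(n+1)) * ENNReal.ofReal ((n:ℝ)+1) := by
  have hγm : Measurable fun t => ENNReal.ofReal (convIter rect n t) :=
    ENNReal.measurable_ofReal.comp (gammaProp n).1
  calc (∫⁻ t, ENNReal.ofReal (auxH a n t))
      = ∫⁻ t, ∑' r : ℕ, ENNReal.ofReal (betaCoeff a n r) *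
          ENNReal.ofReal (convIter rect n (t - (r:ℝ))) := by
        apply lintegral_congr; intro t; exact H_ofReal ha0 haS n t
    _ = ∑' r : ℕ, ∫⁻ t, ENNReal.ofReal (betaCoeff a n r) *
          ENNReal.ofReal (convIter rect n (t - (r:ℝ))) := by
        apply lintegral_tsum
        intro r
        exact (measurable_const.mul (hγm.comp (measurable_id.sub measurable_const))).aemeasurable
    _ = ∑' r : ℕ, ENNReal.ofReal (betaCoeff a n r) *
          ∫⁻ t, ENNReal.ofReal (convIter rect n (t - (r:ℝ))) := by
        congr 1; funext r
        exact lintegral_const_mul _ (hγm.comp (measurable_id.sub measurable_const))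
    _ = ∑' r : ℕ, ENNReal.ofReal (betaCoeff a n r) *
          ∫⁻ t, ENNReal.ofReal (convIter rect n t) := by
        congr 1; funext r
        rw [lintegral_sub_right_eq_self (fun t => ENNReal.ofReal (convIter rect n t)) (r:ℝ)]
    _ ≤ ∑' r : ℕ, ENNReal.ofReal (betaCoeff a n r) * ENNReal.ofReal ((n:ℝ)+1) := by
        apply ENNReal.tsum_le_tsum
        intro r
        exact mul_le_mul_right (gamma_lintegral_le n) _
    _ = (∑' r : ℕ, ENNReal.ofReal (betaCoeff a n r)) * ENNReal.ofReal ((n:ℝ)+1) :=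
        ENNReal.tsum_mul_right
    _ = ENNReal.ofReal ((∑' j, a j)^(n+1)) * ENNReal.ofReal ((n:ℝ)+1) := by
        rw [← ENNReal.ofReal_tsum_of_nonneg (beta_nonneg ha0 n) (beta_summable_tsum ha0 haS n).1,
          (beta_summable_tsum ha0 haS n).2]

lemma ae_ne_zero : ∀ᵐ σ : ℝ, σ ≠ (0:ℝ) := by
  rw [ae_iff]
  have : {σ : ℝ | ¬ σ ≠ 0} = {(0:ℝ)} := by ext σ; simp
  rw [this]
  exact Real.volume_singleton

/-- Shift lemma: convolving shifted causal functions. -/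
lemma shift_conv (u v : ℝ → ℝ) (hu : ∀ s, s < 0 → u s = 0) (hv : ∀ s, s < 0 → v s = 0)
    (r l : ℝ) (hr : 0 ≤ r) (hl : 0 ≤ l) {t : ℝ} (ht : 0 ≤ t) :
    (∫ τ in Set.Ioc (0:ℝ) t, u (τ - r) * v (t - τ - l)) = cconv u v (t - r - l) := by
  set s := t - r - l with hs_def
  by_cases hs : s < 0
  · rw [cconv_neg hs]
    apply setIntegral_eq_zero_of_forall_eq_zero
    intro τ _
    by_cases h1 : τ - r < 0
    · rw [hu _ h1, zero_mul]
    · push_neg at h1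
      rw [hv _ (by simp only [hs_def] at hs ⊢; linarith), mul_zero]
  · push_neg at hs
    rw [cconv_of_nonneg hs]
    rw [← MeasureTheory.integral_indicator measurableSet_Ioc]
    have hind : (fun τ => (Set.Ioc (0:ℝ) t).indicator (fun τ => u (τ - r) * v (t - τ - l)) τ)
        = fun τ => ((Set.Ioc (-r) (t - r)).indicator (fun σ => u σ * v (s - σ))) (τ - r) := by
      funext τ
      have hmem : τ ∈ Set.Ioc (0:ℝ) t ↔ τ - r ∈ Set.Ioc (-r) (t - r) := by
        simp only [Set.mem_Ioc]
        constructor <;> rintro ⟨h1, h2⟩ <;> constructor <;> linarith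
      by_cases hτ : τ ∈ Set.Ioc (0:ℝ) t
      · rw [Set.indicator_of_mem hτ, Set.indicator_of_mem (hmem.1 hτ)]
        congr 1
        congr 1
        simp only [hs_def]; ring
      · rw [Set.indicator_of_notMem hτ, Set.indicator_of_notMem (fun h => hτ (hmem.2 h))]
    rw [hind,
      integral_sub_right_eq_self (fun σ => ((Set.Ioc (-r) (t - r)).indicator
        (fun σ => u σ * v (s - σ))) σ) r,
      MeasureTheory.integral_indicator measurableSet_Ioc]
    have hae : (fun σ : ℝ => u σ * v (s - σ)) =ᵐ[volume]
        (Set.Ioc (0:ℝ) s).indicator (fun σ => u σ * v (s - σ)) := by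
      filter_upwards [ae_ne_zero] with σ hσ
      by_cases hm : σ ∈ Set.Ioc (0:ℝ) s
      · rw [Set.indicator_of_mem hm]
      · rw [Set.indicator_of_notMem hm]
        rw [Set.mem_Ioc, not_and_or] at hm
        rcases hm with h | h
        · push_neg at h
          rw [hu σ (lt_of_le_of_ne h hσ), zero_mul]
        · push_neg at h
          rw [hv _ (by linarith), mul_zero]
    calc (∫ σ in Set.Ioc (-r) (t - r), u σ * v (s - σ))
        = ∫ σ in Set.Ioc (-r) (t - r),
            (Set.Ioc (0:ℝ) s).indicator (fun σ => u σ * v (s - σ)) σ :=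
          integral_congr_ae (ae_restrict_of_ae hae)
      _ = ∫ σ in Set.Ioc (-r) (t - r) ∩ Set.Ioc (0:ℝ) s, u σ * v (s - σ) :=
          setIntegral_indicator measurableSet_Ioc
      _ = ∫ σ in Set.Ioc (0:ℝ) s, u σ * v (s - σ) := by
          rw [Set.inter_eq_self_of_subset_right
            (Set.Ioc_subset_Ioc (by linarith) (by simp only [hs_def]; linarith))]

section G
variable {a : ℕ → ℝ} {g : ℝ → ℝ}

lemma g_eq (ha0 : ∀ j, 0 ≤ a j) (hg : ∀ t : ℝ, g t = if t < 0 then 0 else a ⌊t⌋₊) (t : ℝ) :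
    g t = ∑' r : ℕ, a r * rect (t - (r:ℝ)) := by
  by_cases ht : t < 0
  · rw [hg t, if_pos ht]
    have : ∀ r : ℕ, a r * rect (t - (r:ℝ)) = 0 := by
      intro r
      rw [rect_neg (by have : (0:ℝ) ≤ (r:ℝ) := Nat.cast_nonneg r; linarith), mul_zero]
    simp only [this, tsum_zero]
  · push_neg at ht
    rw [hg t, if_neg (not_lt.2 ht)]
    rw [tsum_eq_single ⌊t⌋₊ ?_]
    · have h1 : (0:ℝ) ≤ t - (⌊t⌋₊:ℝ) := by
        have := Nat.floor_le ht; linarith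
      have h2 : t - (⌊t⌋₊:ℝ) < 1 := by
        have := Nat.lt_floor_add_one t; linarith
      have : rect (t - (⌊t⌋₊:ℝ)) = 1 := by unfold rect; rw [if_pos ⟨h1, h2⟩]
      rw [this, mul_one]
    · intro r hr
      have : rect (t - (r:ℝ)) = 0 := by
        unfold rect
        rw [if_neg]
        rintro ⟨hb1, hb2⟩
        exact hr (((Nat.floor_eq_iff ht).2 ⟨by linarith, by linarith⟩).symm)
      rw [this, mul_zero]

lemma g_term_summable (ha0 : ∀ j, 0 ≤ a j) (haS : Summable a) (t : ℝ) :
    Summable (fun r : ℕ => a r * rect (t - (r:ℝ))) := by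
  apply Summable.of_nonneg_of_le (fun r => mul_nonneg (ha0 r) (rect_nonneg _))
    (fun r => ?_) haS
  calc a r * rect (t - (r:ℝ)) ≤ a r * 1 :=
        mul_le_mul_of_nonneg_left (rect_le_one _) (ha0 r)
    _ = a r := mul_one _

lemma g_meas (ha0 : ∀ j, 0 ≤ a j) (haS : Summable a)
    (hg : ∀ t : ℝ, g t = if t < 0 then 0 else a ⌊t⌋₊) : Measurable g := by
  have : g = fun t => ∑' r : ℕ, a r * rect (t - (r:ℝ)) := funext (g_eq ha0 hg)
  rw [this]
  apply measurable_tsum' (fun r => ?_) (g_term_summable ha0 haS)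
  exact measurable_const.mul (measurable_rect.comp (measurable_id.sub measurable_const))

lemma g_nonneg (ha0 : ∀ j, 0 ≤ a j)
    (hg : ∀ t : ℝ, g t = if t < 0 then 0 else a ⌊t⌋₊) (t : ℝ) : 0 ≤ g t := by
  rw [hg t]; split
  · exact le_refl 0
  · exact ha0 _

lemma g_le (ha0 : ∀ j, 0 ≤ a j) (haS : Summable a)
    (hg : ∀ t : ℝ, g t = if t < 0 then 0 else a ⌊t⌋₊) (t : ℝ) : g t ≤ ∑' j, a j := by
  rw [hg t]; split
  · exact tsum_nonneg ha0
  · exact Summable.le_tsum haS _ (fun j _ => ha0 j)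

lemma g_neg (hg : ∀ t : ℝ, g t = if t < 0 then 0 else a ⌊t⌋₊) {t : ℝ} (ht : t < 0) :
    g t = 0 := by rw [hg t, if_pos ht]

end G

lemma summable_norm_of_nonneg {f : ℕ → ℝ} (h0 : ∀ j, 0 ≤ f j) (hS : Summable f) :
    Summable (fun j => ‖f j‖) := by
  have : (fun j => ‖f j‖) = f := by funext j; exact Real.norm_of_nonneg (h0 j)
  rw [this]; exact hS

set_option maxHeartbeats 1000000 in
lemma convIter_g_eq_H {a : ℕ → ℝ} {g : ℝ → ℝ} (ha0 : ∀ j, 0 ≤ a j) (haS : Summable a)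
    (hg : ∀ t : ℝ, g t = if t < 0 then 0 else a ⌊t⌋₊) :
    ∀ n : ℕ, ∀ t : ℝ, convIter g n t = auxH a n t := by
  intro n
  induction n with
  | zero => intro t; exact g_eq ha0 hg t
  | succ n ih =>
    intro t
    show cconv (convIter g n) g t = auxH a (n+1) t
    rw [funext ih]
    by_cases ht : t < 0
    · rw [cconv_neg ht, H_neg (n+1) t ht]
    · push_neg at ht
      obtain ⟨hγm, hγ0, hγ1, hγneg, hγsupp, hγint⟩ := gammaProp n
      have hβS := (beta_summable_tsum ha0 haS n).1
      have hβ0 := beta_nonneg ha0 n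
      rw [cconv_of_nonneg ht]
      have hintegrand : ∀ τ : ℝ, auxH a n τ * g (t - τ) =
          ∑' p : ℕ × ℕ, (betaCoeff a n p.1 * convIter rect n (τ - (p.1:ℝ))) *
            (a p.2 * rect (t - τ - (p.2:ℝ))) := by
        intro τ
        rw [g_eq ha0 hg (t - τ)]
        apply tsum_mul_tsum_of_summable_norm
        · apply summable_norm_of_nonneg (fun r => mul_nonneg (hβ0 r) (hγ0 _))
          exact H_term_summable ha0 haS n τ
        · apply summable_norm_of_nonneg (fun r => mul_nonneg (ha0 r) (rect_nonneg _))
          exact g_term_summable ha0 haS (t - τ)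
      simp only [hintegrand]
      have hpm : ∀ p : ℕ × ℕ, Measurable (fun τ : ℝ =>
          (betaCoeff a n p.1 * convIter rect n (τ - (p.1:ℝ))) *
            (a p.2 * rect (t - τ - (p.2:ℝ)))) := by
        intro p
        exact (measurable_const.mul (hγm.comp (measurable_id.sub measurable_const))).mul
          (measurable_const.mul (measurable_rect.comp
            ((measurable_const.sub measurable_id).sub measurable_const)))
      rw [MeasureTheory.integral_tsum (fun p => (hpm p).aestronglyMeasurable) ?hbd]
      case hbd =>
        have hπS : Summable (fun p : ℕ × ℕ => betaCoeff a n p.1 * a p.2) :=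
          hβS.mul_of_nonneg haS hβ0 ha0
        have hest : ∀ p : ℕ × ℕ, (∫⁻ τ in Set.Ioc (0:ℝ) t,
            ‖(betaCoeff a n p.1 * convIter rect n (τ - (p.1:ℝ))) *
              (a p.2 * rect (t - τ - (p.2:ℝ)))‖₊) ≤
            ENNReal.ofReal (betaCoeff a n p.1 * a p.2) * ENNReal.ofReal t := by
          intro p
          have hptw : ∀ τ : ℝ, (‖(betaCoeff a n p.1 * convIter rect n (τ - (p.1:ℝ))) *
              (a p.2 * rect (t - τ - (p.2:ℝ)))‖₊ : ℝ≥0∞) ≤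
              ENNReal.ofReal (betaCoeff a n p.1 * a p.2) := by
            intro τ
            have hv0 : 0 ≤ (betaCoeff a n p.1 * convIter rect n (τ - (p.1:ℝ))) *
                (a p.2 * rect (t - τ - (p.2:ℝ))) :=
              mul_nonneg (mul_nonneg (hβ0 _) (hγ0 _)) (mul_nonneg (ha0 _) (rect_nonneg _))
            rw [← enorm_eq_nnnorm, Real.enorm_eq_ofReal hv0]
            apply ENNReal.ofReal_le_ofReal
            calc (betaCoeff a n p.1 * convIter rect n (τ - (p.1:ℝ))) *
                (a p.2 * rect (t - τ - (p.2:ℝ)))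
                ≤ (betaCoeff a n p.1 * 1) * (a p.2 * 1) := by
                  apply mul_le_mul
                  · exact mul_le_mul_of_nonneg_left (hγ1 _) (hβ0 _)
                  · exact mul_le_mul_of_nonneg_left (rect_le_one _) (ha0 _)
                  · exact mul_nonneg (ha0 _) (rect_nonneg _)
                  · exact mul_nonneg (hβ0 _) zero_le_one
              _ = betaCoeff a n p.1 * a p.2 := by ring
          calc (∫⁻ τ in Set.Ioc (0:ℝ) t,
              ‖(betaCoeff a n p.1 * convIter rect n (τ - (p.1:ℝ))) *
                (a p.2 * rect (t - τ - (p.2:ℝ)))‖₊)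
              ≤ ∫⁻ _τ in Set.Ioc (0:ℝ) t, ENNReal.ofReal (betaCoeff a n p.1 * a p.2) :=
                lintegral_mono (fun τ => hptw τ)
            _ = ENNReal.ofReal (betaCoeff a n p.1 * a p.2) * volume (Set.Ioc (0:ℝ) t) :=
                setLIntegral_const _ _
            _ = ENNReal.ofReal (betaCoeff a n p.1 * a p.2) * ENNReal.ofReal t := by
                rw [Real.volume_Ioc, sub_zero]
        apply ne_top_of_le_ne_top ?_ (ENNReal.tsum_le_tsum hest)
        rw [ENNReal.tsum_mul_right,
          ← ENNReal.ofReal_tsum_of_nonneg (fun p => mul_nonneg (hβ0 _) (ha0 _)) hπS]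
        exact (ENNReal.mul_lt_top ENNReal.ofReal_lt_top ENNReal.ofReal_lt_top).ne
      have hterm : ∀ p : ℕ × ℕ, (∫ τ in Set.Ioc (0:ℝ) t,
          (betaCoeff a n p.1 * convIter rect n (τ - (p.1:ℝ))) *
            (a p.2 * rect (t - τ - (p.2:ℝ)))) =
          betaCoeff a n p.1 * a p.2 * convIter rect (n+1) (t - (p.1:ℝ) - (p.2:ℝ)) := by
        intro p
        have hring : ∀ τ : ℝ, (betaCoeff a n p.1 * convIter rect n (τ - (p.1:ℝ))) *
            (a p.2 * rect (t - τ - (p.2:ℝ))) =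
            (betaCoeff a n p.1 * a p.2) *
              (convIter rect n (τ - (p.1:ℝ)) * rect (t - τ - (p.2:ℝ))) := by
          intro τ; ring
        simp only [hring]
        rw [MeasureTheory.integral_const_mul]
        rw [shift_conv (convIter rect n) rect hγneg (fun s hs => rect_neg hs)
          (p.1:ℝ) (p.2:ℝ) (Nat.cast_nonneg _) (Nat.cast_nonneg _) ht]
        rfl
      rw [tsum_congr hterm]
      -- regroup the double sum
      set F : ℕ × ℕ → ℝ := fun p =>
        betaCoeff a n p.1 * a p.2 * convIter rect (n+1) (t - (p.1:ℝ) - (p.2:ℝ)) with hF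
      obtain ⟨hγ'm, hγ'0, hγ'1, hγ'neg, hγ'supp, hγ'int⟩ := gammaProp (n+1)
      have hFS : Summable F := by
        apply Summable.of_nonneg_of_le
          (fun p => mul_nonneg (mul_nonneg (hβ0 _) (ha0 _)) (hγ'0 _))
          (fun p => ?_) (hβS.mul_of_nonneg haS hβ0 ha0)
        calc F p ≤ betaCoeff a n p.1 * a p.2 * 1 :=
              mul_le_mul_of_nonneg_left (hγ'1 _) (mul_nonneg (hβ0 _) (ha0 _))
          _ = betaCoeff a n p.1 * a p.2 := mul_one _
      have e := Finset.HasAntidiagonal.sigmaAntidiagonalEquivProd (A := ℕ)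
      calc (∑' p : ℕ × ℕ, F p)
          = ∑' x : (Σ m : ℕ, {p : ℕ × ℕ // p ∈ Finset.HasAntidiagonal.antidiagonal m}),
              F (Finset.HasAntidiagonal.sigmaAntidiagonalEquivProd x) :=
            (Finset.HasAntidiagonal.sigmaAntidiagonalEquivProd.tsum_eq F).symm
        _ = ∑' (m : ℕ) (c : {p : ℕ × ℕ // p ∈ Finset.HasAntidiagonal.antidiagonal m}), F (c : ℕ × ℕ) := by
            apply Summable.tsum_sigma
            exact (Equiv.summable_iff _).2 hFS
        _ = ∑' m : ℕ, ∑ q ∈ Finset.HasAntidiagonal.antidiagonal m, F q := by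
            apply tsum_congr; intro m
            exact Finset.tsum_subtype (Finset.HasAntidiagonal.antidiagonal m) F
        _ = ∑' m : ℕ, betaCoeff a (n+1) m * convIter rect (n+1) (t - (m:ℝ)) := by
            apply tsum_congr; intro m
            have h1 : ∀ q ∈ Finset.HasAntidiagonal.antidiagonal m, F q =
                betaCoeff a n q.1 * a q.2 * convIter rect (n+1) (t - (m:ℝ)) := by
              intro q hq
              have hq' : q.1 + q.2 = m := Finset.HasAntidiagonal.mem_antidiagonal.1 hq
              have harg : t - (q.1:ℝ) - (q.2:ℝ) = t - (m:ℝ) := by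
                rw [← hq']; push_cast; ring
              rw [hF]; simp only []; rw [harg]
            rw [Finset.sum_congr rfl h1, ← Finset.sum_mul]
            congr 1
            rw [Finset.Nat.sum_antidiagonal_eq_sum_range_succ_mk]
            show _ = ∑ l ∈ Finset.range (m + 1), a l * betaCoeff a n (m - l)
            rw [← Finset.sum_range_reflect (fun l => a l * betaCoeff a n (m - l)) (m+1)]
            apply Finset.sum_congr rfl
            intro j hj
            have hj' : j ≤ m := Nat.lt_succ_iff.1 (Finset.mem_range.1 hj)
            have h2 : m + 1 - 1 - j = m - j := by omega
            have h3 : m - (m - j) = j := by omega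
            simp only [h2, h3, mul_comm]
        _ = auxH a (n+1) t := rfl

section hsec
variable {a : ℕ → ℝ} {g : ℝ → ℝ}

lemma k_nonneg (ha0 : ∀ j, 0 ≤ a j) : 0 ≤ ∑' j, a j := tsum_nonneg ha0

lemma geom_summable (ha0 : ∀ j, 0 ≤ a j) (hk1 : (∑' j, a j) < 1) :
    Summable (fun n : ℕ => (∑' j, a j)^(n+1)) := by
  have h := summable_geometric_of_lt_one (k_nonneg ha0) hk1
  have := h.mul_left (∑' j, a j)
  apply this.congr
  intro n
  rw [← pow_succ']

lemma h_term_summable (ha0 : ∀ j, 0 ≤ a j) (haS : Summable a) (hk1 : (∑' j, a j) < 1)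
    (t : ℝ) : Summable (fun n : ℕ => auxH a n t) := by
  apply Summable.of_nonneg_of_le (fun n => H_nonneg ha0 n t)
    (fun n => H_le ha0 haS n t) (geom_summable ha0 hk1)

lemma h_nonneg (ha0 : ∀ j, 0 ≤ a j) (t : ℝ) : 0 ≤ auxh a t :=
  tsum_nonneg (fun n => H_nonneg ha0 n t)

lemma h_neg {t : ℝ} (ht : t < 0) : auxh a t = 0 := by
  unfold auxh
  have : ∀ n : ℕ, auxH a n t = 0 := fun n => H_neg n t ht
  simp only [this, tsum_zero]

lemma h_meas (ha0 : ∀ j, 0 ≤ a j) (haS : Summable a) (hk1 : (∑' j, a j) < 1) :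
    Measurable (auxh a) :=
  measurable_tsum' (fun n => H_meas ha0 haS n) (fun t => h_term_summable ha0 haS hk1 t)

lemma h_ofReal (ha0 : ∀ j, 0 ≤ a j) (haS : Summable a) (hk1 : (∑' j, a j) < 1) (t : ℝ) :
    ENNReal.ofReal (auxh a t) = ∑' n : ℕ, ENNReal.ofReal (auxH a n t) := by
  unfold auxh
  exact ENNReal.ofReal_tsum_of_nonneg (fun n => H_nonneg ha0 n t)
    (h_term_summable ha0 haS hk1 t)

lemma hsum_fin_summable (ha0 : ∀ j, 0 ≤ a j) (hk1 : (∑' j, a j) < 1) :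
    Summable (fun n : ℕ => (∑' j, a j)^(n+1) * ((n:ℝ)+1)) := by
  set K := ∑' j, a j with hK
  have hK0 : 0 ≤ K := k_nonneg ha0
  have hKnorm : ‖K‖ < 1 := by rw [Real.norm_of_nonneg hK0]; exact hk1
  have h1 : Summable (fun n : ℕ => (n:ℝ)^1 * K^n) :=
    summable_pow_mul_geometric_of_norm_lt_one 1 hKnorm
  have h2 : Summable (fun n : ℕ => K^n) := summable_geometric_of_lt_one hK0 hk1
  have h3 := (h1.add h2).mul_left K
  apply h3.congr
  intro n
  rw [pow_one]; ring

lemma h_lintegral_lt_top (ha0 : ∀ j, 0 ≤ a j) (haS : Summable a) (hk1 : (∑' j, a j) < 1) :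
    (∫⁻ t, ENNReal.ofReal (auxh a t)) < ⊤ := by
  have heq : (∫⁻ t, ENNReal.ofReal (auxh a t)) = ∑' n : ℕ, ∫⁻ t, ENNReal.ofReal (auxH a n t) := by
    rw [← lintegral_tsum (f := fun (n : ℕ) (t : ℝ) => ENNReal.ofReal (auxH a n t))
      (fun n => ((H_meas ha0 haS n).ennreal_ofReal).aemeasurable)]
    apply lintegral_congr
    intro t
    exact h_ofReal ha0 haS hk1 t
  rw [heq]
  apply lt_of_le_of_lt (ENNReal.tsum_le_tsum (fun n => le_trans (H_lintegral ha0 haS n)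
    (le_of_eq (ENNReal.ofReal_mul (pow_nonneg (k_nonneg ha0) _)).symm)))
  rw [← ENNReal.ofReal_tsum_of_nonneg
    (fun n => mul_nonneg (pow_nonneg (k_nonneg ha0) _) (by positivity))
    (hsum_fin_summable ha0 hk1)]
  exact ENNReal.ofReal_lt_top

lemma h_integrable (ha0 : ∀ j, 0 ≤ a j) (haS : Summable a) (hk1 : (∑' j, a j) < 1) :
    Integrable (auxh a) := by
  refine ⟨(h_meas ha0 haS hk1).aestronglyMeasurable, ?_⟩
  have : ∀ t, (‖auxh a t‖₊ : ℝ≥0∞) = ENNReal.ofReal (auxh a t) := fun t =>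
    Real.enorm_eq_ofReal (h_nonneg ha0 t)
  show (∫⁻ t, (‖auxh a t‖₊ : ℝ≥0∞)) < ⊤
  simp only [this]
  exact h_lintegral_lt_top ha0 haS hk1

lemma solution_eq (ha0 : ∀ j, 0 ≤ a j) (haS : Summable a) (hk1 : (∑' j, a j) < 1)
    (hg : ∀ t : ℝ, g t = if t < 0 then 0 else a ⌊t⌋₊) (t : ℝ) (ht : 0 ≤ t) :
    auxh a t = g t + ∫ τ in (0:ℝ)..t, auxh a τ * g (t - τ) := by
  set K := ∑' j, a j with hK
  have hK0 : 0 ≤ K := k_nonneg ha0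
  rw [intervalIntegral.integral_of_le ht]
  have hint1 : ∀ τ : ℝ, auxh a τ * g (t - τ) = ∑' n : ℕ, auxH a n τ * g (t - τ) := by
    intro τ
    show (∑' n : ℕ, auxH a n τ) * g (t - τ) = _
    exact (tsum_mul_right).symm
  simp only [hint1]
  rw [MeasureTheory.integral_tsum ?hmeas ?hbd]
  case hmeas =>
    intro n
    exact ((H_meas ha0 haS n).mul ((g_meas ha0 haS hg).comp
      (measurable_const.sub measurable_id))).aestronglyMeasurable
  case hbd =>
    have hest : ∀ n : ℕ, (∫⁻ τ in Set.Ioc (0:ℝ) t, ‖auxH a n τ * g (t - τ)‖₊) ≤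
        ENNReal.ofReal (K^(n+1) * K) * ENNReal.ofReal t := by
      intro n
      have hptw : ∀ τ : ℝ, (‖auxH a n τ * g (t - τ)‖₊ : ℝ≥0∞) ≤
          ENNReal.ofReal (K^(n+1) * K) := by
        intro τ
        have h0' : 0 ≤ auxH a n τ * g (t - τ) :=
          mul_nonneg (H_nonneg ha0 n τ) (g_nonneg ha0 hg _)
        rw [← enorm_eq_nnnorm, Real.enorm_eq_ofReal h0']
        apply ENNReal.ofReal_le_ofReal
        exact mul_le_mul (H_le ha0 haS n τ) (g_le ha0 haS hg _) (g_nonneg ha0 hg _)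
          (by positivity)
      calc (∫⁻ τ in Set.Ioc (0:ℝ) t, ‖auxH a n τ * g (t - τ)‖₊)
          ≤ ∫⁻ _τ in Set.Ioc (0:ℝ) t, ENNReal.ofReal (K^(n+1) * K) := lintegral_mono hptw
        _ = ENNReal.ofReal (K^(n+1) * K) * volume (Set.Ioc (0:ℝ) t) := setLIntegral_const _ _
        _ = ENNReal.ofReal (K^(n+1) * K) * ENNReal.ofReal t := by
            rw [Real.volume_Ioc, sub_zero]
    apply ne_top_of_le_ne_top ?_ (ENNReal.tsum_le_tsum hest)
    rw [ENNReal.tsum_mul_right, ← ENNReal.ofReal_tsum_of_nonneg (fun n => by positivity)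
      ((geom_summable ha0 hk1).mul_right K)]
    exact (ENNReal.mul_lt_top ENNReal.ofReal_lt_top ENNReal.ofReal_lt_top).ne
  have hterm : ∀ n : ℕ, (∫ τ in Set.Ioc (0:ℝ) t, auxH a n τ * g (t - τ)) =
      auxH a (n+1) t := by
    intro n
    calc (∫ τ in Set.Ioc (0:ℝ) t, auxH a n τ * g (t - τ))
        = cconv (auxH a n) g t := (cconv_of_nonneg ht).symm
      _ = auxH a (n+1) t := by
          have hfe : convIter g n = auxH a n := funext (convIter_g_eq_H ha0 haS hg n)
          rw [← hfe]
          exact convIter_g_eq_H ha0 haS hg (n+1) t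
  rw [tsum_congr hterm]
  have := Summable.tsum_eq_zero_add (h_term_summable ha0 haS hk1 t)
  show (∑' n : ℕ, auxH a n t) = _
  rw [this]
  congr 1
  exact (g_eq ha0 hg t).symm

lemma g_lintegral (ha0 : ∀ j, 0 ≤ a j) (haS : Summable a)
    (hg : ∀ t : ℝ, g t = if t < 0 then 0 else a ⌊t⌋₊) :
    (∫⁻ t, ENNReal.ofReal (g t)) = ENNReal.ofReal (∑' j, a j) := by
  have hrect : (∫⁻ t : ℝ, ENNReal.ofReal (rect t)) = 1 := by
    have hre : (fun t : ℝ => ENNReal.ofReal (rect t)) =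
        (Set.Ico (0:ℝ) 1).indicator (fun _ => (1:ℝ≥0∞)) := by
      funext t
      by_cases hmem : t ∈ Set.Ico (0:ℝ) 1
      · rw [Set.indicator_of_mem hmem]
        have : rect t = 1 := by unfold rect; rw [if_pos]; exact ⟨hmem.1, hmem.2⟩
        rw [this, ENNReal.ofReal_one]
      · rw [Set.indicator_of_notMem hmem]
        have : rect t = 0 := by
          unfold rect; rw [if_neg]; intro hc; exact hmem ⟨hc.1, hc.2⟩
        rw [this, ENNReal.ofReal_zero]
    rw [hre]
    have h1 : (∫⁻ t, (Set.Ico (0:ℝ) 1).indicator (fun _ => (1:ℝ≥0∞)) t) =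
        volume (Set.Ico (0:ℝ) 1) := lintegral_indicator_one measurableSet_Ico
    rw [h1, Real.volume_Ico, sub_zero, ENNReal.ofReal_one]
  have hptw : ∀ t : ℝ, ENNReal.ofReal (g t) =
      ∑' r : ℕ, ENNReal.ofReal (a r) * ENNReal.ofReal (rect (t - (r:ℝ))) := by
    intro t
    rw [g_eq ha0 hg t, ENNReal.ofReal_tsum_of_nonneg
      (fun r => mul_nonneg (ha0 r) (rect_nonneg _)) (g_term_summable ha0 haS t)]
    congr 1
    funext r
    exact ENNReal.ofReal_mul (ha0 r)
  have hrm : Measurable fun t : ℝ => ENNReal.ofReal (rect t) :=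
    ENNReal.measurable_ofReal.comp measurable_rect
  calc (∫⁻ t, ENNReal.ofReal (g t))
      = ∫⁻ t, ∑' r : ℕ, ENNReal.ofReal (a r) * ENNReal.ofReal (rect (t - (r:ℝ))) :=
        lintegral_congr hptw
    _ = ∑' r : ℕ, ∫⁻ t, ENNReal.ofReal (a r) * ENNReal.ofReal (rect (t - (r:ℝ))) :=
        lintegral_tsum (fun r => (measurable_const.mul (hrm.comp
          (measurable_id.sub measurable_const))).aemeasurable)
    _ = ∑' r : ℕ, ENNReal.ofReal (a r) * ∫⁻ t, ENNReal.ofReal (rect (t - (r:ℝ))) := by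
        apply tsum_congr; intro r
        exact lintegral_const_mul _ (hrm.comp (measurable_id.sub measurable_const))
    _ = ∑' r : ℕ, ENNReal.ofReal (a r) := by
        apply tsum_congr; intro r
        rw [lintegral_sub_right_eq_self (fun t => ENNReal.ofReal (rect t)) (r:ℝ), hrect,
          mul_one]
    _ = ENNReal.ofReal (∑' j, a j) :=
        (ENNReal.ofReal_tsum_of_nonneg ha0 haS).symm

end hsec

end Aux11

open Aux11

/-- for the piecewise-constant kernel `g(t) = a_j` on `[j, j+1)` with
`Σ_j a_j = k ∈ (0,1)`, the Volterra equation `h = g + h * g` has an integrable solution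
vanishing on `(-∞,0)`, and every such solution is given a.e. on `[0,∞)` by the
double series `h(t) = Σ_{n=1}^∞ Σ_{r=0}^∞ β^n_r γₙ(t - r)`, where `γₙ = rect^{⊗n}`. -/
theorem piecewise_kernel_fundamental_solution (a : ℕ → ℝ) (k : ℝ)
    (ha_nonneg : ∀ j : ℕ, 0 ≤ a j) (ha_sum : Summable a)
    (hk : (∑' j : ℕ, a j) = k) (hk0 : 0 < k) (hk1 : k < 1)
    (g : ℝ → ℝ) (hg : ∀ t : ℝ, g t = if t < 0 then 0 else a ⌊t⌋₊) :
    (∃ h : ℝ → ℝ, Integrable h ∧ (∀ t < (0:ℝ), h t = 0) ∧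
      (∀ᵐ t : ℝ, 0 ≤ t → h t = g t + ∫ τ in (0:ℝ)..t, h τ * g (t - τ))) ∧
    (∀ h : ℝ → ℝ, Integrable h → (∀ t < (0:ℝ), h t = 0) →
      (∀ᵐ t : ℝ, 0 ≤ t → h t = g t + ∫ τ in (0:ℝ)..t, h τ * g (t - τ)) →
      ∀ᵐ t : ℝ, 0 ≤ t →
        h t = ∑' n : ℕ, ∑' r : ℕ, betaCoeff a n r * convIter rect n (t - (r : ℝ))) := by
  have hk1' : (∑' j : ℕ, a j) < 1 := by rw [hk]; exact hk1
  have hauxint : Integrable (auxh a) := h_integrable ha_nonneg ha_sum hk1'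
  constructor
  · exact ⟨auxh a, hauxint, fun t ht => h_neg ht,
      Filter.Eventually.of_forall (fun t ht => solution_eq ha_nonneg ha_sum hk1' hg t ht)⟩
  · intro h hInt hneg hae
    set d : ℝ → ℝ := fun t => h t - auxh a t with hd_def
    have hd : Integrable d := hInt.sub hauxint
    obtain ⟨D, hDsm, hDae⟩ := hd.aestronglyMeasurable
    have hDm : Measurable D := hDsm.measurable
    have hgm : Measurable g := g_meas ha_nonneg ha_sum hg
    set K := ∑' j : ℕ, a j with hK_def
    have hK0 : 0 ≤ K := k_nonneg ha_nonneg
    -- the inner integral with d replaced by D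
    have hinner : ∀ t : ℝ, (∫⁻ τ, (‖d τ‖₊ : ℝ≥0∞) * ‖g (t - τ)‖₊) =
        ∫⁻ τ, (‖D τ‖₊ : ℝ≥0∞) * ‖g (t - τ)‖₊ := by
      intro t
      apply lintegral_congr_ae
      filter_upwards [hDae] with τ hτ
      rw [hτ]
    -- a.e. pointwise bound
    have hkey : ∀ᵐ t : ℝ, (‖D t‖₊ : ℝ≥0∞) ≤ ∫⁻ τ, (‖D τ‖₊ : ℝ≥0∞) * ‖g (t - τ)‖₊ := by
      filter_upwards [hae, hDae] with t hsol hDt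
      rw [← hDt, ← hinner t]
      by_cases ht : t < 0
      · have hd0 : d t = 0 := by
          rw [hd_def]
          simp only []
          rw [hneg t ht, h_neg ht, sub_zero]
        rw [hd0]
        simp
      · push_neg at ht
        have h1 := hsol ht
        have h2 := solution_eq ha_nonneg ha_sum hk1' hg t ht
        have hboundg : ∃ C, ∀ x : ℝ, ‖g x‖ ≤ C := by
          refine ⟨K, fun x => ?_⟩
          rw [Real.norm_of_nonneg (g_nonneg ha_nonneg hg x)]
          exact g_le ha_nonneg ha_sum hg x
        have hfm : Measurable fun τ : ℝ => g (t - τ) :=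
          hgm.comp (measurable_const.sub measurable_id)
        have hboundg' : ∃ C, ∀ x : ℝ, ‖g (t - x)‖ ≤ C := by
          obtain ⟨C, hC⟩ := hboundg
          exact ⟨C, fun x => hC (t - x)⟩
        have hIh : IntegrableOn (fun τ => h τ * g (t - τ)) (Set.Ioc (0:ℝ) t) := by
          have := (hInt.integrableOn (s := Set.Ioc (0:ℝ) t)).bdd_mul
            hfm.aestronglyMeasurable (Filter.Eventually.of_forall hboundg'.choose_spec)
          exact this.congr (Filter.Eventually.of_forall (fun τ => mul_comm _ _))
        have hIa : IntegrableOn (fun τ => auxh a τ * g (t - τ)) (Set.Ioc (0:ℝ) t) := by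
          have := (hauxint.integrableOn (s := Set.Ioc (0:ℝ) t)).bdd_mul
            hfm.aestronglyMeasurable (Filter.Eventually.of_forall hboundg'.choose_spec)
          exact this.congr (Filter.Eventually.of_forall (fun τ => mul_comm _ _))
        have h3 : d t = ∫ τ in Set.Ioc (0:ℝ) t, d τ * g (t - τ) := by
          have e0 : d t = (∫ τ in Set.Ioc (0:ℝ) t, h τ * g (t - τ)) -
              ∫ τ in Set.Ioc (0:ℝ) t, auxh a τ * g (t - τ) := by
            rw [hd_def]
            simp only []
            rw [h1, h2, intervalIntegral.integral_of_le ht, intervalIntegral.integral_of_le ht]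
            ring
          rw [e0, ← integral_sub hIh hIa]
          apply integral_congr_ae
          apply Filter.Eventually.of_forall
          intro τ
          rw [hd_def]
          simp only []
          ring
        calc (‖d t‖₊ : ℝ≥0∞) = ‖∫ τ in Set.Ioc (0:ℝ) t, d τ * g (t - τ)‖₊ := by rw [h3]
          _ ≤ ∫⁻ τ in Set.Ioc (0:ℝ) t, ‖d τ * g (t - τ)‖₊ :=
              enorm_integral_le_lintegral_enorm _
          _ ≤ ∫⁻ τ, (‖d τ * g (t - τ)‖₊ : ℝ≥0∞) := setLIntegral_le_lintegral _ _
          _ = ∫⁻ τ, (‖d τ‖₊ : ℝ≥0∞) * ‖g (t - τ)‖₊ := by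
              apply lintegral_congr
              intro τ
              rw [nnnorm_mul, ENNReal.coe_mul]
    -- total mass
    set A := ∫⁻ t, (‖D t‖₊ : ℝ≥0∞) with hA_def
    have hAd : A = ∫⁻ t, (‖d t‖₊ : ℝ≥0∞) := by
      apply lintegral_congr_ae
      filter_upwards [hDae] with t ht
      rw [ht]
    have hAlt : A < ⊤ := by rw [hAd]; exact hd.2
    have hglint : ∀ τ : ℝ, (∫⁻ t, (‖g (t - τ)‖₊ : ℝ≥0∞)) = ENNReal.ofReal K := by
      intro τ
      have : ∀ x : ℝ, (‖g x‖₊ : ℝ≥0∞) = ENNReal.ofReal (g x) := fun x =>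
        Real.enorm_eq_ofReal (g_nonneg ha_nonneg hg x)
      simp only [this]
      rw [lintegral_sub_right_eq_self (fun t => ENNReal.ofReal (g t)) τ]
      exact g_lintegral ha_nonneg ha_sum hg
    have hAle : A ≤ A * ENNReal.ofReal K := by
      calc A ≤ ∫⁻ t, ∫⁻ τ, (‖D τ‖₊ : ℝ≥0∞) * ‖g (t - τ)‖₊ := lintegral_mono_ae hkey
        _ = ∫⁻ τ, ∫⁻ t, (‖D τ‖₊ : ℝ≥0∞) * ‖g (t - τ)‖₊ := by
            apply lintegral_lintegral_swap
            apply Measurable.aemeasurable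
            exact (hDm.comp measurable_snd).enorm.mul
              ((hgm.comp (measurable_fst.sub measurable_snd)).enorm)
        _ = ∫⁻ τ, (‖D τ‖₊ : ℝ≥0∞) * ENNReal.ofReal K := by
            apply lintegral_congr
            intro τ
            have hgm2 : Measurable fun x : ℝ => (‖g (x - τ)‖₊ : ℝ≥0∞) :=
              (hgm.comp (measurable_id.sub measurable_const)).enorm
            rw [lintegral_const_mul _ hgm2, hglint τ]
        _ = A * ENNReal.ofReal K := lintegral_mul_const _ hDm.enorm
    have hA0 : A = 0 := by
      by_contra hA0
      have hlt : A * ENNReal.ofReal K < A * 1 :=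
        by rw [mul_comm A, mul_comm A]; exact ENNReal.mul_lt_mul_left hA0 hAlt.ne (ENNReal.ofReal_lt_one.2 hk1')
      rw [mul_one] at hlt
      exact absurd (lt_of_le_of_lt hAle hlt) (lt_irrefl A)
    have hDzero : ∀ᵐ t : ℝ, D t = 0 := by
      have := (lintegral_eq_zero_iff hDm.enorm).1 hA0
      filter_upwards [this] with t ht
      simpa using ht
    filter_upwards [hDzero, hDae] with t ht hdt _
    have : d t = 0 := by rw [hdt, ht]
    have hht : h t = auxh a t := by
      rw [hd_def] at this
      simp only [] at this
      linarith
    rw [hht]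
    rfl
end

section
/- Let g : ℝ → ℝ be integrable, vanishing on (−∞,0), nonnegative on [0,∞), with ∫₀^∞ g(t) dt = k < 1, and let h be the integrable solution, vanishing on (−∞,0), of h(t) = g(t) + ∫₀ᵗ h(τ) g(t−τ) dτ. Let f : ℝ → ℝ be locally integrable with f(t) = 0 for t < 0. Then y := f + h * f is locally integrable, satisfies ∫₀^T |(h*f)(t)| dt ≤ ‖h‖₁ ∫₀^T |f(t)| dt for every T > 0, and solves the Volterra equation y(t) = f(t) + ∫₀ᵗ y(τ) g(t−τ) dτ for almost every t ≥ 0. -/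
open MeasureTheory
open Set ContinuousLinearMap
open scoped Convolution

lemma ae_ne_zero : ∀ᵐ t : ℝ, t ≠ (0:ℝ) := by
  have : ({(0:ℝ)} : Set ℝ)ᶜ ∈ ae (volume : Measure ℝ) :=
    compl_mem_ae_iff.mpr (measure_singleton 0)
  filter_upwards [this] with t ht using ht

lemma indicator_ae {u : ℝ → ℝ} (hu : ∀ t < (0:ℝ), u t = 0) :
    Set.indicator (Set.Ioi 0) u =ᵐ[volume] u := by
  filter_upwards [ae_ne_zero] with t ht
  rcases lt_or_gt_of_ne ht with h | h
  · rw [Set.indicator_of_notMem (by simpa using h.le), hu t h]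
  · rw [Set.indicator_of_mem (Set.mem_Ioi.mpr h)]

lemma cconv_eq_conv {u v : ℝ → ℝ} (hu : ∀ t < (0:ℝ), u t = 0) (hv : ∀ t < (0:ℝ), v t = 0) :
    cconv u v = u ⋆[ContinuousLinearMap.mul ℝ ℝ, volume] v := by
  have h1 : cconv u v = posConvolution u v (ContinuousLinearMap.mul ℝ ℝ) volume := by
    funext t
    simp only [cconv, posConvolution, Set.indicator_apply, Set.mem_Ioi,
      ContinuousLinearMap.mul_apply']
    rcases lt_trichotomy t 0 with h | h | h
    · rw [if_pos h, if_neg (not_lt.mpr h.le)]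
    · subst h
      rw [if_neg (lt_irrefl 0), if_neg (lt_irrefl 0), intervalIntegral.integral_same]
    · rw [if_neg (not_lt.mpr h.le), if_pos h]
  rw [h1, posConvolution_eq_convolution_indicator u v (ContinuousLinearMap.mul ℝ ℝ) volume]
  exact convolution_congr _ (indicator_ae hu) (indicator_ae hv)

lemma conv_causal {u v : ℝ → ℝ} (hu : ∀ t < (0:ℝ), u t = 0) (hv : ∀ t < (0:ℝ), v t = 0) :
    ∀ t < (0:ℝ), (u ⋆[ContinuousLinearMap.mul ℝ ℝ, volume] v) t = 0 := by
  intro t ht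
  rw [← cconv_eq_conv hu hv]
  simp [cconv, ht]

lemma conv_comm (u v : ℝ → ℝ) :
    u ⋆[ContinuousLinearMap.mul ℝ ℝ, volume] v = v ⋆[ContinuousLinearMap.mul ℝ ℝ, volume] u := by
  funext x
  rw [convolution_mul_swap]
  simp_rw [convolution_def, ContinuousLinearMap.mul_apply', mul_comm]

lemma cconv_trunc (h f : ℝ → ℝ) (n t : ℝ) (ht : t ≤ n) :
    cconv h f t = cconv h (Set.indicator (Set.Iic n) f) t := by
  unfold cconv
  split_ifs with h0
  · rfl
  · apply intervalIntegral.integral_congr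
    intro τ hτ
    rw [Set.uIcc_of_le (not_lt.mp h0)] at hτ
    have h1 : t - τ ≤ n := by linarith [hτ.1]
    show h τ * f (t - τ) = h τ * (Set.Iic n).indicator f (t - τ)
    rw [Set.indicator_of_mem (Set.mem_Iic.mpr h1)]

/-- if `h` solves `h = g + h * g` and `f` is locally integrable and causal,
then `y = f + h * f` is locally integrable, satisfies
`∫₀ᵀ |(h*f)(t)| dt ≤ ‖h‖₁ ∫₀ᵀ |f(t)| dt` for every `T > 0`, and solves the Volterra
equation `y = f + y * g` a.e. on `[0,∞)`. -/
theorem general_solution_of_volterra (g h f : ℝ → ℝ) (k : ℝ)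
    (hg_int : Integrable g)
    (hg_neg : ∀ t < (0:ℝ), g t = 0)
    (hg_nonneg : ∀ t ≥ (0:ℝ), 0 ≤ g t)
    (hk : (∫ t in Set.Ioi (0:ℝ), g t) = k) (hk1 : k < 1)
    (hh_int : Integrable h)
    (hh_neg : ∀ t < (0:ℝ), h t = 0)
    (hh_eq : ∀ᵐ t : ℝ, 0 ≤ t → h t = g t + ∫ τ in (0:ℝ)..t, h τ * g (t - τ))
    (hf_loc : LocallyIntegrable f)
    (hf_neg : ∀ t < (0:ℝ), f t = 0) :
    LocallyIntegrable (fun t => f t + cconv h f t) ∧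
    (∀ T : ℝ, 0 < T →
      (∫ t in Set.Ioc (0:ℝ) T, |cconv h f t|) ≤
        (∫ t in Set.Ioi (0:ℝ), |h t|) * ∫ t in Set.Ioc (0:ℝ) T, |f t|) ∧
    (∀ᵐ t : ℝ, 0 ≤ t →
      f t + cconv h f t =
        f t + ∫ τ in (0:ℝ)..t, (f τ + cconv h f τ) * g (t - τ)) := by
  set L := ContinuousLinearMap.mul ℝ ℝ with hL
  -- the truncations of f
  set fn : ℝ → ℝ → ℝ := fun n => Set.indicator (Set.Iic n) f with hfn
  have hfn_neg : ∀ n : ℝ, ∀ t < (0:ℝ), fn n t = 0 := by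
    intro n t ht
    by_cases h1 : t ≤ n <;> simp [hfn, Set.indicator_apply, h1, hf_neg t ht]
  have hfn_int : ∀ n : ℝ, Integrable (fn n) := by
    intro n
    have h1 : fn n = Set.indicator (Set.Icc 0 n) f := by
      funext t
      simp only [hfn, Set.indicator_apply, Set.mem_Iic, Set.mem_Icc]
      split_ifs with h1 h2 h3
      · rfl
      · push_neg at h2
        exact hf_neg t (by by_contra hc; push_neg at hc; exact absurd h1 (not_le.mpr (h2 hc)))
      · exact absurd h3.2 h1
      · rfl
    rw [h1, integrable_indicator_iff measurableSet_Icc]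
    exact hf_loc.integrableOn_isCompact isCompact_Icc
  have hconv : ∀ n : ℝ, cconv h (fn n) = h ⋆[L, volume] (fn n) := fun n =>
    cconv_eq_conv hh_neg (hfn_neg n)
  have hw_int : ∀ n : ℝ, Integrable (h ⋆[L, volume] fn n) := fun n =>
    hh_int.integrable_convolution L (hfn_int n)
  -- Part 1
  have part1 : LocallyIntegrable (fun t => f t + cconv h f t) := by
    have hc : LocallyIntegrable (cconv h f) := by
      rw [locallyIntegrable_iff]
      intro K hK
      obtain ⟨n, hn⟩ := hK.bddAbove
      refine ((hw_int n).integrableOn).congr_fun ?_ hK.measurableSet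
      intro x hx
      rw [← hconv n, ← cconv_trunc h f n x (hn hx)]
    exact hf_loc.add hc
  refine ⟨part1, ?_, ?_⟩
  · -- Part 2
    intro T hT
    have hfTi : Integrable (fn T) := hfn_int T
    have habs_int : Integrable ((fun t => |h t|) ⋆[L, volume] fun t => |fn T t|) :=
      hh_int.abs.integrable_convolution L hfTi.abs
    have h2 : ∀ t : ℝ, |(h ⋆[L, volume] fn T) t| ≤
        ((fun t => |h t|) ⋆[L, volume] fun t => |fn T t|) t := by
      intro t
      rw [convolution_def, convolution_def]
      simp only [hL, ContinuousLinearMap.mul_apply']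
      calc |∫ τ, h τ * fn T (t - τ)| ≤ ∫ τ, |h τ * fn T (t - τ)| := by
            simp only [← Real.norm_eq_abs]
            exact norm_integral_le_integral_norm _
        _ = ∫ τ, |h τ| * |fn T (t - τ)| := by simp_rw [abs_mul]
    have h1 : (∫ t in Set.Ioc (0:ℝ) T, |cconv h f t|) =
        ∫ t in Set.Ioc (0:ℝ) T, |(h ⋆[L, volume] fn T) t| := by
      apply setIntegral_congr_fun measurableSet_Ioc
      intro t ht
      dsimp only
      rw [cconv_trunc h f T t ht.2, hconv T]
    have hnn : ∀ t : ℝ, 0 ≤ ((fun t => |h t|) ⋆[L, volume] fun t => |fn T t|) t := by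
      intro t
      rw [convolution_def]
      exact integral_nonneg fun τ => by
        simp only [hL, ContinuousLinearMap.mul_apply']
        positivity
    have h4 : (∫ t in Set.Ioc (0:ℝ) T, |(h ⋆[L, volume] fn T) t|) ≤
        ∫ t in Set.Ioc (0:ℝ) T, ((fun t => |h t|) ⋆[L, volume] fun t => |fn T t|) t :=
      setIntegral_mono_on ((hw_int T).abs.integrableOn) habs_int.integrableOn
        measurableSet_Ioc (fun t _ => h2 t)
    have h5 : (∫ t in Set.Ioc (0:ℝ) T, ((fun t => |h t|) ⋆[L, volume] fun t => |fn T t|) t) ≤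
        ∫ t, ((fun t => |h t|) ⋆[L, volume] fun t => |fn T t|) t :=
      setIntegral_le_integral habs_int (Filter.Eventually.of_forall hnn)
    have h6 : (∫ t, ((fun t => |h t|) ⋆[L, volume] fun t => |fn T t|) t) =
        (∫ t, |h t|) * ∫ t, |fn T t| := by
      rw [integral_convolution L hh_int.abs hfTi.abs]
      simp [hL, ContinuousLinearMap.mul_apply']
    have h7 : (∫ t in Set.Ioi (0:ℝ), |h t|) = ∫ t, |h t| := by
      apply setIntegral_eq_integral_of_ae_compl_eq_zero
      filter_upwards [ae_ne_zero] with t ht h0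
      rw [Set.mem_Ioi, not_lt] at h0
      rw [hh_neg t (lt_of_le_of_ne h0 ht), abs_zero]
    have h8 : (∫ t, |fn T t|) = ∫ t in Set.Ioc (0:ℝ) T, |f t| := by
      rw [show (∫ t, |fn T t|) = ∫ t in Set.Ioc (0:ℝ) T, |fn T t| by
        refine (setIntegral_eq_integral_of_ae_compl_eq_zero ?_).symm
        filter_upwards [ae_ne_zero] with t ht h0
        simp only [Set.mem_Ioc, not_and_or, not_lt, not_le] at h0
        rcases h0 with h0 | h0
        · rw [show fn T t = 0 from hfn_neg T t (lt_of_le_of_ne h0 ht), abs_zero]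
        · rw [show fn T t = 0 from
            Set.indicator_of_notMem (by simp only [Set.mem_Iic, not_le]; linarith) f, abs_zero]]
      apply setIntegral_congr_fun measurableSet_Ioc
      intro t ht
      dsimp only
      rw [show fn T t = f t from Set.indicator_of_mem (Set.mem_Iic.mpr ht.2) f]
    rw [h1, h7, ← h8]
    calc _ ≤ _ := h4
      _ ≤ _ := h5
      _ = _ := h6
  · -- Part 3
    have hhg_int : Integrable (h ⋆[L, volume] g) := hh_int.integrable_convolution L hg_int
    have hcg : cconv h g = h ⋆[L, volume] g := cconv_eq_conv hh_neg hg_neg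
    have h_eq_ae : h =ᵐ[volume] (g + h ⋆[L, volume] g) := by
      filter_upwards [hh_eq] with t ht
      rcases lt_or_ge t 0 with h1 | h1
      · rw [hh_neg t h1, Pi.add_apply, hg_neg t h1, conv_causal hh_neg hg_neg t h1, add_zero]
      · rw [Pi.add_apply, ← hcg, show cconv h g t = ∫ τ in (0:ℝ)..t, h τ * g (t - τ) by
          simp [cconv, not_lt.mpr h1]]
        exact ht h1
    have key : ∀ n : ℝ, ∀ᵐ t : ℝ,
        (h ⋆[L, volume] fn n) t = ((fn n + h ⋆[L, volume] fn n) ⋆[L, volume] g) t := by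
      intro n
      have hfni := hfn_int n
      have hwi := hw_int n
      have hWg_int : Integrable ((fun x => ‖g x‖) ⋆[ContinuousLinearMap.mul ℝ ℝ, volume]
          fun x => ‖fn n x‖) := hg_int.norm.integrable_convolution _ hfni.norm
      have hWg_int2 : Integrable ((fun x => ‖fn n x‖) ⋆[ContinuousLinearMap.mul ℝ ℝ, volume]
          fun x => ‖g x‖) := hfni.norm.integrable_convolution _ hg_int.norm
      have hLmul : ∀ (x y z : ℝ), L (L x y) z = L x (L y z) := fun x y z => by
        simp [hL, ContinuousLinearMap.mul_apply', mul_assoc]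
      have assoc1 : ∀ᵐ t : ℝ, ((h ⋆[L, volume] g) ⋆[L, volume] fn n) t
          = (h ⋆[L, volume] (g ⋆[L, volume] fn n)) t := by
        filter_upwards [hh_int.norm.ae_convolution_exists (ContinuousLinearMap.mul ℝ ℝ) hWg_int]
          with t ht
        exact convolution_assoc L L L L hLmul hh_int.aestronglyMeasurable
          hg_int.aestronglyMeasurable hfni.aestronglyMeasurable
          (hh_int.ae_convolution_exists L hg_int)
          (hg_int.norm.ae_convolution_exists (ContinuousLinearMap.mul ℝ ℝ) hfni.norm) ht
      have assoc2 : ∀ᵐ t : ℝ, ((h ⋆[L, volume] fn n) ⋆[L, volume] g) t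
          = (h ⋆[L, volume] (fn n ⋆[L, volume] g)) t := by
        filter_upwards [hh_int.norm.ae_convolution_exists (ContinuousLinearMap.mul ℝ ℝ) hWg_int2]
          with t ht
        exact convolution_assoc L L L L hLmul hh_int.aestronglyMeasurable
          hfni.aestronglyMeasurable hg_int.aestronglyMeasurable
          (hh_int.ae_convolution_exists L hfni)
          (hfni.norm.ae_convolution_exists (ContinuousLinearMap.mul ℝ ℝ) hg_int.norm) ht
      have distrib1 : ∀ᵐ t : ℝ, ((g + h ⋆[L, volume] g) ⋆[L, volume] fn n) t
          = (g ⋆[L, volume] fn n) t + ((h ⋆[L, volume] g) ⋆[L, volume] fn n) t := by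
        filter_upwards [hg_int.ae_convolution_exists L hfni,
          hhg_int.ae_convolution_exists L hfni] with t h1 h2
        exact ConvolutionExistsAt.add_distrib h1 h2
      have distrib2 : ∀ᵐ t : ℝ, ((fn n + h ⋆[L, volume] fn n) ⋆[L, volume] g) t
          = (fn n ⋆[L, volume] g) t + ((h ⋆[L, volume] fn n) ⋆[L, volume] g) t := by
        filter_upwards [hfni.ae_convolution_exists L hg_int,
          hwi.ae_convolution_exists L hg_int] with t h1 h2
        exact ConvolutionExistsAt.add_distrib h1 h2
      have hcongr : h ⋆[L, volume] fn n = (g + h ⋆[L, volume] g) ⋆[L, volume] fn n :=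
        convolution_congr L h_eq_ae (Filter.EventuallyEq.refl _ _)
      filter_upwards [assoc1, assoc2, distrib1, distrib2] with t a1 a2 d1 d2
      rw [d2, a2, conv_comm (fn n) g, ← a1, hcongr, d1]
    have keyN : ∀ᵐ t : ℝ, ∀ m : ℕ, (h ⋆[L, volume] fn (m : ℝ)) t
        = ((fn (m : ℝ) + h ⋆[L, volume] fn (m : ℝ)) ⋆[L, volume] g) t :=
      ae_all_iff.mpr fun m => key (m : ℝ)
    filter_upwards [keyN] with t ht h0t
    have hm : t ≤ ((⌈t⌉₊ : ℕ) : ℝ) := Nat.le_ceil t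
    set m : ℝ := ((⌈t⌉₊ : ℕ) : ℝ) with hmdef
    have hY_neg : ∀ τ < (0:ℝ), (fn m + h ⋆[L, volume] fn m) τ = 0 := by
      intro τ hτ
      rw [Pi.add_apply, hfn_neg m τ hτ, conv_causal hh_neg (hfn_neg m) τ hτ, add_zero]
    congr 1
    have e1 : cconv h f t = (h ⋆[L, volume] fn m) t := by
      rw [cconv_trunc h f m t hm, hconv m]
    have e2 : (∫ τ in (0:ℝ)..t, (f τ + cconv h f τ) * g (t - τ))
        = ∫ τ in (0:ℝ)..t, (fn m + h ⋆[L, volume] fn m) τ * g (t - τ) := by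
      apply intervalIntegral.integral_congr
      intro τ hτ
      rw [Set.uIcc_of_le h0t] at hτ
      have hτm : τ ≤ m := le_trans hτ.2 hm
      dsimp only
      congr 1
      rw [Pi.add_apply]
      congr 1
      · exact (Set.indicator_of_mem (Set.mem_Iic.mpr hτm) f).symm
      · rw [cconv_trunc h f m τ hτm, hconv m]
    have e3 : (∫ τ in (0:ℝ)..t, (fn m + h ⋆[L, volume] fn m) τ * g (t - τ))
        = ((fn m + h ⋆[L, volume] fn m) ⋆[L, volume] g) t := by
      rw [← cconv_eq_conv hY_neg hg_neg]
      simp [cconv, not_lt.mpr h0t]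
    rw [e1, e2, e3]
    exact ht ⌈t⌉₊
end

section
/- Let g, g_a : ℝ → ℝ be integrable, vanishing on (−∞,0), with ‖g‖₁ ≤ k and ‖g_a‖₁ ≤ k for some k < 1, and let h, h_a be integrable functions vanishing on (−∞,0) satisfying h = g + h*g and h_a = g_a + h_a*g_a almost everywhere on [0,∞). Then for every integrable f : ℝ → ℝ vanishing on (−∞,0), ‖h*f − h_a*f‖₁ ≤ (‖f‖₁/(1−k)²) ‖g − g_a‖₁. -/
open MeasureTheory

open ContinuousLinearMap
open scoped Convolution

/-- Mathlib's convolution with multiplication as the bilinear map. -/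
noncomputable def mconv (u v : ℝ → ℝ) : ℝ → ℝ :=
  convolution u v (ContinuousLinearMap.mul ℝ ℝ) volume

lemma mconv_apply (u v : ℝ → ℝ) (t : ℝ) : mconv u v t = ∫ τ, u τ * v (t - τ) := rfl

/-- For causal functions, `cconv` coincides with mathlib's convolution. -/
lemma cconv_eq_mconv (u v : ℝ → ℝ) (hu : ∀ t < (0:ℝ), u t = 0)
    (hv : ∀ t < (0:ℝ), v t = 0) : cconv u v = mconv u v := by
  funext t
  rcases lt_or_ge t 0 with ht | ht
  · have hz : ∀ τ : ℝ, u τ * v (t - τ) = 0 := by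
      intro τ
      rcases lt_or_ge τ 0 with h | h
      · rw [hu τ h, zero_mul]
      · rw [hv (t - τ) (by linarith), mul_zero]
    simp [cconv, if_pos ht, mconv_apply, hz]
  · have hz : ∀ τ : ℝ, τ ∉ Set.Icc 0 t → u τ * v (t - τ) = 0 := by
      intro τ hτ
      by_cases h : τ < 0
      · rw [hu τ h, zero_mul]
      · have htτ : t < τ := by
          simp only [Set.mem_Icc, not_and, not_le] at hτ
          exact hτ (not_lt.mp h)
        rw [hv (t - τ) (by linarith), mul_zero]
    have : cconv u v t = ∫ τ in Set.Icc (0:ℝ) t, u τ * v (t - τ) := by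
      rw [cconv, if_neg (not_lt.mpr ht), intervalIntegral.integral_of_le ht,
        ← integral_Icc_eq_integral_Ioc]
    rw [this, setIntegral_eq_integral_of_forall_compl_eq_zero hz, mconv_apply]

/-- Pointwise: `|u ⋆ v| ≤ |u| ⋆ |v|`. -/
lemma abs_mconv_le (u v : ℝ → ℝ) (t : ℝ) :
    |mconv u v t| ≤ mconv (fun s => |u s|) (fun s => |v s|) t := by
  rw [mconv_apply, mconv_apply]
  simpa [Real.norm_eq_abs, abs_mul] using
    norm_integral_le_integral_norm (fun τ => u τ * v (t - τ))

lemma mconv_abs_nonneg (u v : ℝ → ℝ) (t : ℝ) :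
    0 ≤ mconv (fun s => |u s|) (fun s => |v s|) t := by
  rw [mconv_apply]
  exact integral_nonneg fun τ => mul_nonneg (abs_nonneg _) (abs_nonneg _)

lemma mconv_integrable {u v : ℝ → ℝ} (hu : Integrable u) (hv : Integrable v) :
    Integrable (mconv u v) :=
  hu.integrable_convolution (ContinuousLinearMap.mul ℝ ℝ) hv

/-- For a causal function, the L¹ norm over `ℝ` equals the L¹ norm over `(0,∞)`. -/
lemma integral_abs_causal (w : ℝ → ℝ) (hw : ∀ t < (0:ℝ), w t = 0) :
    ∫ t, |w t| = ∫ t in Set.Ioi (0:ℝ), |w t| := by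
  rw [← integral_Ici_eq_integral_Ioi,
    setIntegral_eq_integral_of_forall_compl_eq_zero (s := Set.Ici 0)]
  intro x hx
  rw [hw x (by simpa using hx), abs_zero]

/-- Young's inequality on `(0,∞)` for causal integrable functions. -/
lemma mconv_L1_bound {u v : ℝ → ℝ} (hu : Integrable u) (hv : Integrable v)
    (hu0 : ∀ t < (0:ℝ), u t = 0) (hv0 : ∀ t < (0:ℝ), v t = 0) :
    (∫ t in Set.Ioi (0:ℝ), |mconv u v t|) ≤
      (∫ t in Set.Ioi (0:ℝ), |u t|) * (∫ t in Set.Ioi (0:ℝ), |v t|) := by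
  have habs : Integrable (mconv (fun s => |u s|) (fun s => |v s|)) :=
    mconv_integrable hu.abs hv.abs
  have h1 : (∫ t in Set.Ioi (0:ℝ), |mconv u v t|) ≤
      ∫ t in Set.Ioi (0:ℝ), mconv (fun s => |u s|) (fun s => |v s|) t :=
    setIntegral_mono ((mconv_integrable hu hv).abs.integrableOn)
      habs.integrableOn (abs_mconv_le u v)
  have h2 : (∫ t in Set.Ioi (0:ℝ), mconv (fun s => |u s|) (fun s => |v s|) t) ≤
      ∫ t, mconv (fun s => |u s|) (fun s => |v s|) t :=
    setIntegral_le_integral habs (Filter.Eventually.of_forall (mconv_abs_nonneg u v))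
  have h3 : (∫ t, mconv (fun s => |u s|) (fun s => |v s|) t) =
      (∫ t, |u t|) * (∫ t, |v t|) := by
    simpa [mconv] using integral_convolution (ContinuousLinearMap.mul ℝ ℝ) hu.abs hv.abs
  rw [integral_abs_causal u hu0, integral_abs_causal v hv0] at h3
  linarith

lemma mconv_sub_left {u u' v : ℝ → ℝ} {t : ℝ}
    (h1 : ConvolutionExistsAt u v t (ContinuousLinearMap.mul ℝ ℝ) volume)
    (h2 : ConvolutionExistsAt u' v t (ContinuousLinearMap.mul ℝ ℝ) volume) :
    mconv (u - u') v t = mconv u v t - mconv u' v t := by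
  have h1' : Integrable (fun τ => u τ * v (t - τ)) := h1
  have h2' : Integrable (fun τ => u' τ * v (t - τ)) := h2
  have e : mconv (u - u') v t = ∫ τ, (u τ - u' τ) * v (t - τ) := rfl
  rw [e]
  simp_rw [sub_mul]
  rw [integral_sub h1' h2']
  rfl

lemma mconv_sub_right {u v v' : ℝ → ℝ} {t : ℝ}
    (h1 : ConvolutionExistsAt u v t (ContinuousLinearMap.mul ℝ ℝ) volume)
    (h2 : ConvolutionExistsAt u v' t (ContinuousLinearMap.mul ℝ ℝ) volume) :
    mconv u (v - v') t = mconv u v t - mconv u v' t := by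
  have h1' : Integrable (fun τ => u τ * v (t - τ)) := h1
  have h2' : Integrable (fun τ => u τ * v' (t - τ)) := h2
  have e : mconv u (v - v') t = ∫ τ, u τ * (v (t - τ) - v' (t - τ)) := rfl
  rw [e]
  simp_rw [mul_sub]
  rw [integral_sub h1' h2']
  rfl

set_option maxHeartbeats 1000000 in
/-- if `h = g + h*g` and `h_a = g_a + h_a*g_a` with `‖g‖₁, ‖g_a‖₁ ≤ k < 1`,
then for every integrable causal `f`,
`‖h*f - h_a*f‖₁ ≤ (‖f‖₁/(1-k)²) ‖g - g_a‖₁`. -/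
theorem convolved_solution_L1_stability (g ga h ha : ℝ → ℝ) (k : ℝ) (hk : k < 1)
    (hg_int : Integrable g) (hg_neg : ∀ t < (0:ℝ), g t = 0)
    (hg_norm : (∫ t in Set.Ioi (0:ℝ), |g t|) ≤ k)
    (hga_int : Integrable ga) (hga_neg : ∀ t < (0:ℝ), ga t = 0)
    (hga_norm : (∫ t in Set.Ioi (0:ℝ), |ga t|) ≤ k)
    (hh_int : Integrable h) (hh_neg : ∀ t < (0:ℝ), h t = 0)
    (hha_int : Integrable ha) (hha_neg : ∀ t < (0:ℝ), ha t = 0)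
    (hh_eq : ∀ᵐ t : ℝ, 0 ≤ t → h t = g t + cconv h g t)
    (hha_eq : ∀ᵐ t : ℝ, 0 ≤ t → ha t = ga t + cconv ha ga t) :
    ∀ f : ℝ → ℝ, Integrable f → (∀ t < (0:ℝ), f t = 0) →
      (∫ t in Set.Ioi (0:ℝ), |cconv h f t - cconv ha f t|) ≤
        ((∫ t in Set.Ioi (0:ℝ), |f t|) / (1 - k) ^ 2) *
          ∫ t in Set.Ioi (0:ℝ), |g t - ga t| := by
  intro f hf_int hf_neg
  set L := ContinuousLinearMap.mul ℝ ℝ with hL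
  have hk0 : 0 ≤ k :=
    le_trans (setIntegral_nonneg measurableSet_Ioi fun t _ => abs_nonneg _) hg_norm
  have h1k : 0 < 1 - k := by linarith
  -- basic objects
  set e : ℝ → ℝ := h - ha with he_def
  set d : ℝ → ℝ := g - ga with hd_def
  have he_int : Integrable e := hh_int.sub hha_int
  have hd_int : Integrable d := hg_int.sub hga_int
  have he_neg : ∀ t < (0:ℝ), e t = 0 := fun t ht => by
    simp [he_def, Pi.sub_apply, hh_neg t ht, hha_neg t ht]
  have hd_neg : ∀ t < (0:ℝ), d t = 0 := fun t ht => by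
    simp [hd_def, Pi.sub_apply, hg_neg t ht, hga_neg t ht]
  set A := ∫ t in Set.Ioi (0:ℝ), |e t| with hA
  set B := ∫ t in Set.Ioi (0:ℝ), |d t| with hB
  set Ha := ∫ t in Set.Ioi (0:ℝ), |ha t| with hHa
  set F := ∫ t in Set.Ioi (0:ℝ), |f t| with hF
  have hA0 : 0 ≤ A := setIntegral_nonneg measurableSet_Ioi fun t _ => abs_nonneg _
  have hB0 : 0 ≤ B := setIntegral_nonneg measurableSet_Ioi fun t _ => abs_nonneg _
  have hHa0 : 0 ≤ Ha := setIntegral_nonneg measurableSet_Ioi fun t _ => abs_nonneg _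
  have hF0 : 0 ≤ F := setIntegral_nonneg measurableSet_Ioi fun t _ => abs_nonneg _
  -- Step I : Ha*(1-k) ≤ k
  have step1 : Ha * (1 - k) ≤ k := by
    have hint : Integrable (fun t => |ga t| + |mconv ha ga t|) :=
      hga_int.abs.add (mconv_integrable hha_int hga_int).abs
    have hae : ∀ᵐ t ∂(volume.restrict (Set.Ioi (0:ℝ))),
        |ha t| ≤ |ga t| + |mconv ha ga t| := by
      filter_upwards [ae_restrict_of_ae hha_eq, ae_restrict_mem measurableSet_Ioi]
        with t h1 h2
      rw [h1 (le_of_lt h2), cconv_eq_mconv ha ga hha_neg hga_neg]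
      exact abs_add_le _ _
    have hmono : Ha ≤ ∫ t in Set.Ioi (0:ℝ), (|ga t| + |mconv ha ga t|) :=
      integral_mono_ae hha_int.abs.integrableOn hint.integrableOn hae
    have hsplit : (∫ t in Set.Ioi (0:ℝ), (|ga t| + |mconv ha ga t|)) =
        (∫ t in Set.Ioi (0:ℝ), |ga t|) + ∫ t in Set.Ioi (0:ℝ), |mconv ha ga t| :=
      integral_add hga_int.abs.integrableOn (mconv_integrable hha_int hga_int).abs.integrableOn
    have hconv : (∫ t in Set.Ioi (0:ℝ), |mconv ha ga t|) ≤ Ha * k := by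
      calc (∫ t in Set.Ioi (0:ℝ), |mconv ha ga t|) ≤
          Ha * ∫ t in Set.Ioi (0:ℝ), |ga t| :=
            mconv_L1_bound hha_int hga_int hha_neg hga_neg
        _ ≤ Ha * k := mul_le_mul_of_nonneg_left hga_norm hHa0
    nlinarith
  -- Step II : A*(1-k) ≤ B + Ha*B
  have step2 : A * (1 - k) ≤ B + Ha * B := by
    have hint : Integrable (fun t => |d t| + (|mconv e g t| + |mconv ha d t|)) :=
      hd_int.abs.add ((mconv_integrable he_int hg_int).abs.add
        (mconv_integrable hha_int hd_int).abs)
    have hae : ∀ᵐ t ∂(volume.restrict (Set.Ioi (0:ℝ))),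
        |e t| ≤ |d t| + (|mconv e g t| + |mconv ha d t|) := by
      filter_upwards [ae_restrict_of_ae hh_eq, ae_restrict_of_ae hha_eq,
        ae_restrict_of_ae (hh_int.ae_convolution_exists L hg_int),
        ae_restrict_of_ae (hha_int.ae_convolution_exists L hg_int),
        ae_restrict_of_ae (hha_int.ae_convolution_exists L hga_int),
        ae_restrict_mem measurableSet_Ioi]
        with t h1 h2 c1 c2 c3 ht
      have ht0 : (0:ℝ) ≤ t := le_of_lt ht
      have key : e t = d t + (mconv e g t + mconv ha d t) := by
        have e1 : mconv e g t = mconv h g t - mconv ha g t := mconv_sub_left c1 c2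
        have e2 : mconv ha d t = mconv ha g t - mconv ha ga t := mconv_sub_right c2 c3
        have := h1 ht0
        have := h2 ht0
        rw [cconv_eq_mconv h g hh_neg hg_neg] at h1
        rw [cconv_eq_mconv ha ga hha_neg hga_neg] at h2
        have hh' := h1 ht0
        have hha' := h2 ht0
        simp only [he_def, hd_def, Pi.sub_apply]
        rw [hh', hha', e1, e2]
        ring
      calc |e t| = |d t + (mconv e g t + mconv ha d t)| := by rw [key]
        _ ≤ |d t| + |mconv e g t + mconv ha d t| := abs_add_le _ _
        _ ≤ |d t| + (|mconv e g t| + |mconv ha d t|) := by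
            exact add_le_add le_rfl (abs_add_le _ _)
    have hmono : A ≤ ∫ t in Set.Ioi (0:ℝ), (|d t| + (|mconv e g t| + |mconv ha d t|)) :=
      integral_mono_ae he_int.abs.integrableOn hint.integrableOn hae
    have i2 : Integrable (fun t => |mconv e g t|) := (mconv_integrable he_int hg_int).abs
    have i3 : Integrable (fun t => |mconv ha d t|) := (mconv_integrable hha_int hd_int).abs
    have i23 : Integrable (fun t => |mconv e g t| + |mconv ha d t|) := i2.add i3
    have hsplit : (∫ t in Set.Ioi (0:ℝ), (|d t| + (|mconv e g t| + |mconv ha d t|))) =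
        B + ((∫ t in Set.Ioi (0:ℝ), |mconv e g t|) +
          ∫ t in Set.Ioi (0:ℝ), |mconv ha d t|) := by
      rw [integral_add hd_int.abs.integrableOn i23.integrableOn,
        integral_add i2.integrableOn i3.integrableOn]
    have hc1 : (∫ t in Set.Ioi (0:ℝ), |mconv e g t|) ≤ A * k :=
      le_trans (mconv_L1_bound he_int hg_int he_neg hg_neg)
        (mul_le_mul_of_nonneg_left hg_norm hA0)
    have hc2 : (∫ t in Set.Ioi (0:ℝ), |mconv ha d t|) ≤ Ha * B :=
      mconv_L1_bound hha_int hd_int hha_neg hd_neg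
    nlinarith
  -- combine: A*(1-k)^2 ≤ B
  have hAB : A * (1 - k) ^ 2 ≤ B := by nlinarith
  -- Step III : conclusion
  have hgoal_eq : (∫ t in Set.Ioi (0:ℝ), |cconv h f t - cconv ha f t|) =
      ∫ t in Set.Ioi (0:ℝ), |mconv e f t| := by
    apply integral_congr_ae
    filter_upwards [ae_restrict_of_ae (hh_int.ae_convolution_exists L hf_int),
      ae_restrict_of_ae (hha_int.ae_convolution_exists L hf_int)] with t c1 c2
    rw [cconv_eq_mconv h f hh_neg hf_neg, cconv_eq_mconv ha f hha_neg hf_neg,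
      ← mconv_sub_left c1 c2]
  have hfin : (∫ t in Set.Ioi (0:ℝ), |mconv e f t|) ≤ A * F :=
    mconv_L1_bound he_int hf_int he_neg hf_neg
  rw [hgoal_eq]
  have : A * F ≤ (F / (1 - k) ^ 2) * B := by
    rw [div_mul_eq_mul_div, le_div_iff₀ (by positivity)]
    calc A * F * (1 - k) ^ 2 = (A * (1 - k) ^ 2) * F := by ring
      _ ≤ B * F := mul_le_mul_of_nonneg_right hAB hF0
      _ = F * B := mul_comm _ _
  have hBeq : (∫ t in Set.Ioi (0:ℝ), |g t - ga t|) = B := rfl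
  rw [hBeq]
  linarith
end
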